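/- arXiv:2506.07601 — 12 statements merged into one kernel-verified Lean document; each statement's English description precedes it below -/
import Mathlib

section
/- Let M be a mean and let Q_M be its characteristic function. Then for every x > 0: (i) ∂M/∂x (x,x) = 1/2; (ii) ∂²M/∂y² (x,x) = Q_M(x); and (iii) ∂²M/∂x∂y (x,x) = −Q_M(x). -/
open Real Set MeasureTheory

/-- A (bivariate) mean: a C^infty function on (0,∞)² with values in (0,∞),
internal (between min and max) and symmetric. -/
def IsMean (M : ℝ → ℝ → ℝ) : Prop :=
  ContDiffOn ℝ (⊤ : ℕ∞) (fun p : ℝ × ℝ => M p.1 p.2) {p : ℝ × ℝ | 0 < p.1 ∧ 0 < p.2} ∧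
  (∀ x y : ℝ, 0 < x → 0 < y → 0 < M x y) ∧
  (∀ x y : ℝ, 0 < x → 0 < y → min x y ≤ M x y ∧ M x y ≤ max x y) ∧
  (∀ x y : ℝ, 0 < x → 0 < y → M x y = M y x)

/-- The characteristic function of a mean: `Q_M(x) = ∂²M/∂x² (x,x)`. -/
noncomputable def charFun (M : ℝ → ℝ → ℝ) (x : ℝ) : ℝ :=
  iteratedDeriv 2 (fun s => M s x) x
/-- For a mean M with characteristic function Q_M and x > 0:
(i) ∂M/∂x (x,x) = 1/2, (ii) ∂²M/∂y² (x,x) = Q_M(x), (iii) ∂²M/∂x∂y (x,x) = -Q_M(x). -/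
theorem stmt0 (M : ℝ → ℝ → ℝ) (hM : IsMean M) (x : ℝ) (hx : 0 < x) :
    deriv (fun s => M s x) x = 1 / 2 ∧
    iteratedDeriv 2 (fun t => M x t) x = charFun M x ∧
    deriv (fun s => deriv (fun t => M s t) x) x = - charFun M x := by
  obtain ⟨hsmooth, hpos, hint, hsym⟩ := hM
  set F : ℝ × ℝ → ℝ := fun p => M p.1 p.2 with hFdef
  have hU : IsOpen {p : ℝ × ℝ | 0 < p.1 ∧ 0 < p.2} :=
    (isOpen_lt continuous_const continuous_fst).inter
      (isOpen_lt continuous_const continuous_snd)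
  have hFat : ∀ p : ℝ × ℝ, 0 < p.1 → 0 < p.2 → ContDiffAt ℝ (⊤ : ℕ∞) F p := fun p h1 h2 =>
    hsmooth.contDiffAt (hU.mem_nhds ⟨h1, h2⟩)
  -- diagonal identity
  have hdiag : ∀ s : ℝ, 0 < s → M s s = s := by
    intro s hs
    have h := hint s s hs hs
    simp only [min_self, max_self] at h
    linarith [h.1, h.2]
  -- first-order chain rules
  have hD1 : ∀ s t : ℝ, 0 < s → 0 < t →
      HasDerivAt (fun u => M u t) (fderiv ℝ F (s, t) (1, 0)) s := by
    intro s t hs ht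
    have hdF : HasFDerivAt F (fderiv ℝ F (s, t)) (s, t) :=
      ((hFat (s, t) hs ht).differentiableAt (by simp)).hasFDerivAt
    have hγ : HasDerivAt (fun u : ℝ => ((u, t) : ℝ × ℝ)) ((1 : ℝ), (0 : ℝ)) s :=
      HasDerivAt.prodMk (hasDerivAt_id s) (hasDerivAt_const s t)
    exact hdF.comp_hasDerivAt s hγ
  have hD2 : ∀ s t : ℝ, 0 < s → 0 < t →
      HasDerivAt (fun u => M s u) (fderiv ℝ F (s, t) (0, 1)) t := by
    intro s t hs ht
    have hdF : HasFDerivAt F (fderiv ℝ F (s, t)) (s, t) :=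
      ((hFat (s, t) hs ht).differentiableAt (by simp)).hasFDerivAt
    have hγ : HasDerivAt (fun u : ℝ => ((s, u) : ℝ × ℝ)) ((0 : ℝ), (1 : ℝ)) t :=
      HasDerivAt.prodMk (hasDerivAt_const t s) (hasDerivAt_id t)
    exact hdF.comp_hasDerivAt t hγ
  have hDd : ∀ s : ℝ, 0 < s →
      HasDerivAt (fun u => M u u) (fderiv ℝ F (s, s) (1, 1)) s := by
    intro s hs
    have hdF : HasFDerivAt F (fderiv ℝ F (s, s)) (s, s) :=
      ((hFat (s, s) hs hs).differentiableAt (by simp)).hasFDerivAt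
    have hγ : HasDerivAt (fun u : ℝ => ((u, u) : ℝ × ℝ)) ((1 : ℝ), (1 : ℝ)) s :=
      HasDerivAt.prodMk (hasDerivAt_id s) (hasDerivAt_id s)
    exact HasFDerivAt.comp_hasDerivAt (l := F) (f := fun u : ℝ => ((u, u) : ℝ × ℝ)) s hdF hγ
  -- the second derivative
  set B : ℝ × ℝ →L[ℝ] ℝ × ℝ →L[ℝ] ℝ := fderiv ℝ (fderiv ℝ F) (x, x) with hBdef
  have hfd : ContDiffAt ℝ (⊤ : ℕ∞) (fderiv ℝ F) (x, x) :=
    (hFat (x, x) hx hx).fderiv_right (by simp)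
  have hB : HasFDerivAt (fderiv ℝ F) B (x, x) :=
    (hfd.differentiableAt (by simp)).hasFDerivAt
  -- second-order chain rules: derivative of s ↦ fderiv F (γ s) v
  have hK : ∀ (γ : ℝ → ℝ × ℝ) (w : ℝ × ℝ), γ x = (x, x) → HasDerivAt γ w x →
      ∀ v : ℝ × ℝ, HasDerivAt (fun s => fderiv ℝ F (γ s) v) (B w v) x := by
    intro γ w hγx hγ v
    have hB' : HasFDerivAt (fderiv ℝ F) B (γ x) := by rw [hγx]; exact hB
    have h1 : HasDerivAt (fun s => fderiv ℝ F (γ s)) (B w) x :=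
      HasFDerivAt.comp_hasDerivAt (f := γ) x hB' hγ
    have h2 := h1.clm_apply (hasDerivAt_const x v)
    simpa using h2
  have hγ1 : HasDerivAt (fun s : ℝ => ((s, x) : ℝ × ℝ)) ((1 : ℝ), (0 : ℝ)) x :=
    HasDerivAt.prodMk (hasDerivAt_id x) (hasDerivAt_const x x)
  have hγ2 : HasDerivAt (fun s : ℝ => ((x, s) : ℝ × ℝ)) ((0 : ℝ), (1 : ℝ)) x :=
    HasDerivAt.prodMk (hasDerivAt_const x x) (hasDerivAt_id x)
  have hγd : HasDerivAt (fun s : ℝ => ((s, s) : ℝ × ℝ)) ((1 : ℝ), (1 : ℝ)) x :=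
    HasDerivAt.prodMk (hasDerivAt_id x) (hasDerivAt_id x)
  have hmem : Ioi (0 : ℝ) ∈ nhds x := Ioi_mem_nhds hx
  -- Q = B (1,0) (1,0)
  have e1 : deriv (fun s => M s x) =ᶠ[nhds x] fun s => fderiv ℝ F (s, x) (1, 0) := by
    filter_upwards [hmem] with s hs
    exact (hD1 s x hs hx).deriv
  have hQ1 : charFun M x = B (1, 0) (1, 0) := by
    rw [_root_.charFun, iteratedDeriv_succ, iteratedDeriv_one]
    rw [e1.deriv_eq]
    exact (hK (fun s => (s, x)) (1, 0) rfl hγ1 (1, 0)).deriv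
  -- second derivative along second variable = B (0,1) (0,1)
  have e2 : deriv (fun t => M x t) =ᶠ[nhds x] fun t => fderiv ℝ F (x, t) (0, 1) := by
    filter_upwards [hmem] with t ht
    exact (hD2 x t hx ht).deriv
  have hQ2 : iteratedDeriv 2 (fun t => M x t) x = B (0, 1) (0, 1) := by
    rw [iteratedDeriv_succ, iteratedDeriv_one]
    rw [e2.deriv_eq]
    exact (hK (fun s => (x, s)) (0, 1) rfl hγ2 (0, 1)).deriv
  -- symmetry: the two single-variable slices agree near x
  have hslice : (fun t => M x t) =ᶠ[nhds x] fun t => M t x := by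
    filter_upwards [hmem] with t ht
    exact hsym x t hx ht
  have hii : iteratedDeriv 2 (fun t => M x t) x = charFun M x := by
    rw [_root_.charFun, iteratedDeriv_succ, iteratedDeriv_one, iteratedDeriv_succ,
      iteratedDeriv_one]
    exact hslice.deriv.deriv_eq
  -- the diagonal function is eventually the identity
  have hdiageq : (fun s => M s s) =ᶠ[nhds x] fun s => s := by
    filter_upwards [hmem] with s hs
    exact hdiag s hs
  -- (i): first derivative is 1/2
  have hsum1 : fderiv ℝ F (x, x) (1, 1) = 1 := by
    have h1 : deriv (fun s => M s s) x = fderiv ℝ F (x, x) (1, 1) := (hDd x hx).deriv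
    have h2 : deriv (fun s => M s s) x = 1 := by
      rw [hdiageq.deriv_eq, deriv_id'']
    rw [← h1, h2]
  have heq12 : fderiv ℝ F (x, x) (1, 0) = fderiv ℝ F (x, x) (0, 1) := by
    have ha : deriv (fun s => M s x) x = fderiv ℝ F (x, x) (1, 0) := (hD1 x x hx hx).deriv
    have hb : deriv (fun t => M x t) x = fderiv ℝ F (x, x) (0, 1) := (hD2 x x hx hx).deriv
    rw [← ha, ← hb]
    exact (hslice.deriv_eq).symm
  have hsplit : fderiv ℝ F (x, x) (1, 1) =
      fderiv ℝ F (x, x) (1, 0) + fderiv ℝ F (x, x) (0, 1) := by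
    rw [← ContinuousLinearMap.map_add]
    norm_num
  have hi : deriv (fun s => M s x) x = 1 / 2 := by
    have ha := (hD1 x x hx hx).deriv
    rw [ha]
    have h := hsum1
    rw [hsplit, ← heq12] at h
    linarith
  -- B (1,1) (1,1) = 0 : second derivative of the diagonal
  have ed : deriv (fun s => M s s) =ᶠ[nhds x] fun s => fderiv ℝ F (s, s) (1, 1) := by
    filter_upwards [hmem] with s hs
    exact (hDd s hs).deriv
  have hzero : B (1, 1) (1, 1) = 0 := by
    have h1 : deriv (deriv (fun s => M s s)) x = B (1, 1) (1, 1) := by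
      rw [ed.deriv_eq]
      exact (hK (fun s => (s, s)) (1, 1) rfl hγd (1, 1)).deriv
    have h2 : deriv (deriv (fun s => M s s)) x = 0 := by
      rw [hdiageq.deriv.deriv_eq]
      have : deriv (fun s : ℝ => s) = fun _ : ℝ => (1 : ℝ) := by
        funext s; exact deriv_id s
      rw [this, deriv_const]
    rw [← h1, h2]
  -- symmetry of the second derivative
  have hBsymm : B (1, 0) (0, 1) = B (0, 1) (1, 0) :=
    ((hFat (x, x) hx hx).isSymmSndFDerivAt (by rw [minSmoothness_of_isRCLikeNormedField]; exact WithTop.coe_le_coe.mpr le_top)).eq (1, 0) (0, 1)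
  -- bilinear expansion of B (1,1) (1,1)
  have hexpand : B (1, 1) (1, 1) =
      B (1, 0) (1, 0) + B (1, 0) (0, 1) + B (0, 1) (1, 0) + B (0, 1) (0, 1) := by
    have h11 : ((1 : ℝ), (1 : ℝ)) = ((1 : ℝ), (0 : ℝ)) + ((0 : ℝ), (1 : ℝ)) := by
      simp [Prod.ext_iff]
    calc B (1, 1) (1, 1)
        = B (((1 : ℝ), (0 : ℝ)) + ((0 : ℝ), (1 : ℝ)))
            (((1 : ℝ), (0 : ℝ)) + ((0 : ℝ), (1 : ℝ))) := by rw [← h11]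
      _ = _ := by
          rw [map_add]
          simp only [ContinuousLinearMap.add_apply, map_add]
          ring
  -- (iii)
  have hiii : deriv (fun s => deriv (fun t => M s t) x) x = - charFun M x := by
    have e3 : (fun s => deriv (fun t => M s t) x) =ᶠ[nhds x]
        fun s => fderiv ℝ F (s, x) (0, 1) := by
      filter_upwards [hmem] with s hs
      exact (hD2 s x hs hx).deriv
    rw [e3.deriv_eq, (hK (fun s => (s, x)) (1, 0) rfl hγ1 (0, 1)).deriv]
    have hQ2' : B (0, 1) (0, 1) = charFun M x := by rw [← hQ2, hii]
    have := hzero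
    rw [hexpand] at this
    rw [hBsymm] at this ⊢
    linarith [hQ1, hQ2']
  exact ⟨hi, hii, hiii⟩
end

section
/- Let f be a real-valued function on (0,∞)² satisfying: (i) f(1,1) = 1; (ii) f admits partial derivatives at the point (1,1); (iii) f(x,y) = f(y,x) for all x,y > 0; (iv) f(λx, λy) = λ f(x,y) for all λ,x,y > 0; (v) f(x+λ, y+λ) = f(x,y) + λ for all λ,x,y > 0. Then f(x,y) = (x+y)/2 for all x,y > 0. -/
open Real Set

theorem stmt1 (f : ℝ → ℝ → ℝ)
    (h1 : f 1 1 = 1)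
    (h2x : DifferentiableAt ℝ (fun x => f x 1) 1)
    (h2y : DifferentiableAt ℝ (fun y => f 1 y) 1)
    (h3 : ∀ x y : ℝ, 0 < x → 0 < y → f x y = f y x)
    (h4 : ∀ l x y : ℝ, 0 < l → 0 < x → 0 < y → f (l * x) (l * y) = l * f x y)
    (h5 : ∀ l x y : ℝ, 0 < l → 0 < x → 0 < y → f (x + l) (y + l) = f x y + l) :
    ∀ x y : ℝ, 0 < x → 0 < y → f x y = (x + y) / 2 := by
  set g : ℝ → ℝ := fun x => f x 1 with hgdef
  have hg1 : g 1 = 1 := h1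
  set a : ℝ := deriv g 1 with ha
  have hd : HasDerivAt g a 1 := h2x.hasDerivAt
  -- key functional equation for g
  have hfe : ∀ t l : ℝ, 0 < t → 0 < l →
      g (1 + (t - 1) / (1 + l)) = (g t + l) / (1 + l) := by
    intro t l ht hl
    have h1l : (0:ℝ) < 1 + l := by linarith
    have harg : 0 < (t + l) / (1 + l) := div_pos (by linarith) h1l
    have e1 : f (t + l) (1 + l) = f t 1 + l := h5 l t 1 hl ht one_pos
    have e2 := h4 (1 + l) ((t + l) / (1 + l)) 1 h1l harg one_pos
    have e3 : (1 + l) * ((t + l) / (1 + l)) = t + l := by field_simp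
    rw [e3, mul_one] at e2
    have e4 : 1 + (t - 1) / (1 + l) = (t + l) / (1 + l) := by field_simp; ring
    rw [e4]
    have : (1 + l) * f ((t + l) / (1 + l)) 1 = g t + l := by
      rw [← e2, e1]
    field_simp [hgdef] at this ⊢
    linarith
  -- g is affine: g t = 1 + a*(t-1)
  have key : ∀ t : ℝ, 0 < t → g t = 1 + a * (t - 1) := by
    intro t ht
    rcases eq_or_ne t 1 with rfl | htne
    · simp [hg1]
    have htend : Filter.Tendsto (fun l : ℝ => 1 + (t - 1) / (1 + l))
        Filter.atTop (nhds 1) := by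
      have h0 : Filter.Tendsto (fun l : ℝ => (t - 1) / (1 + l)) Filter.atTop (nhds 0) := by
        apply Filter.Tendsto.div_atTop tendsto_const_nhds
        exact Filter.tendsto_atTop_add_const_left _ 1 Filter.tendsto_id
      simpa using tendsto_const_nhds.add h0
    have hiff := hasDerivAt_iff_tendsto.mp hd
    have hcomp := hiff.comp htend
    have heq : ∀ᶠ l : ℝ in Filter.atTop,
        (fun x' => ‖x' - 1‖⁻¹ * ‖g x' - g 1 - (x' - 1) • a‖)
          ((fun l : ℝ => 1 + (t - 1) / (1 + l)) l)
          = |g t - 1 - a * (t - 1)| / |t - 1| := by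
      filter_upwards [Filter.eventually_gt_atTop 0] with l hl
      have h1l : (0:ℝ) < 1 + l := by linarith
      have hg' := hfe t l ht hl
      show ‖(1 + (t-1)/(1+l)) - 1‖⁻¹ * ‖g (1 + (t-1)/(1+l)) - g 1 - ((1 + (t-1)/(1+l)) - 1) • a‖ = _
      rw [hg', hg1]
      have hsub : 1 + (t - 1) / (1 + l) - 1 = (t - 1) / (1 + l) := by ring
      rw [hsub]
      have hinner : (g t + l) / (1 + l) - 1 - ((t - 1) / (1 + l)) • a
          = (g t - 1 - a * (t - 1)) / (1 + l) := by
        rw [smul_eq_mul]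
        field_simp
        ring
      rw [hinner]
      rw [Real.norm_eq_abs, Real.norm_eq_abs, abs_div, abs_div]
      have h1labs : |1 + l| = 1 + l := abs_of_pos h1l
      rw [h1labs]
      have htabs : |t - 1| ≠ 0 := by
        simp [sub_eq_zero, htne]
      field_simp
    have hconst : Filter.Tendsto (fun _ : ℝ => |g t - 1 - a * (t - 1)| / |t - 1|)
        Filter.atTop (nhds 0) := Filter.Tendsto.congr' heq hcomp
    have hzero : |g t - 1 - a * (t - 1)| / |t - 1| = 0 :=
      tendsto_nhds_unique tendsto_const_nhds hconst
    have htabs : |t - 1| ≠ 0 := by simp [sub_eq_zero, htne]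
    have : |g t - 1 - a * (t - 1)| = 0 := by
      rcases div_eq_zero_iff.mp hzero with h | h
      · exact h
      · exact absurd h htabs
    have := abs_eq_zero.mp this
    linarith
  -- form of f
  have hform : ∀ x y : ℝ, 0 < x → 0 < y → f x y = y + a * (x - y) := by
    intro x y hx hy
    have hxy : 0 < x / y := div_pos hx hy
    have e := h4 y (x / y) 1 hy hxy one_pos
    have e2 : y * (x / y) = x := by field_simp
    rw [e2, mul_one] at e
    have := key (x / y) hxy
    rw [e, show f (x/y) 1 = g (x/y) from rfl, this]
    field_simp
  -- a = 1/2
  have ha2 : a = 1 / 2 := by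
    have e1 := hform 2 1 (by norm_num) one_pos
    have e2 := hform 1 2 one_pos (by norm_num)
    have e3 := h3 2 1 (by norm_num) one_pos
    rw [e1, e2] at e3
    linarith
  intro x y hx hy
  rw [hform x y hx hy, ha2]
  ring
end

section
/- For all natural numbers n and k with k ≤ n, there exist rational numbers c_0, c_1, …, c_⌊n/2⌋ (independent of the mean) such that for every mean M and every x > 0: ∂ⁿM/(∂x^k ∂y^{n−k}) (x,x) = Σ_{0 ≤ i ≤ n/2} c_i · (d/dx)^{n−2i} Q_M^{[i]} (x), where Q_M^{[i]}(x) := ∂^{2i}M/∂x^{2i} (x,x). -/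
open Real Set MeasureTheory

namespace Stmt3Aux
open Polynomial


/-- The open first quadrant. -/
def U2 : Set (ℝ × ℝ) := {p : ℝ × ℝ | 0 < p.1 ∧ 0 < p.2}

lemma isOpen_U2 : IsOpen U2 :=
  (isOpen_lt continuous_const continuous_fst).inter (isOpen_lt continuous_const continuous_snd)

/-- Directional partial derivative. -/
noncomputable def pd (v : ℝ × ℝ) (F : ℝ × ℝ → ℝ) : ℝ × ℝ → ℝ :=
  fun p => fderiv ℝ F p v

/-- Iterated directional partial derivative. -/
noncomputable def pdI (v : ℝ × ℝ) : ℕ → (ℝ × ℝ → ℝ) → (ℝ × ℝ → ℝ)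
  | 0, F => F
  | (m+1), F => pd v (pdI v m F)

/-- Smooth on the open quadrant. -/
def Sm (F : ℝ × ℝ → ℝ) : Prop := ContDiffOn ℝ (⊤ : ℕ∞) F U2

lemma Sm.diffAt {F : ℝ × ℝ → ℝ} (hF : Sm F) {p : ℝ × ℝ} (hp : p ∈ U2) :
    DifferentiableAt ℝ F p :=
  (hF.contDiffAt (isOpen_U2.mem_nhds hp)).differentiableAt (by simp)

lemma Sm.pd {F : ℝ × ℝ → ℝ} (hF : Sm F) (v : ℝ × ℝ) : Sm (pd v F) := by
  have h := hF.fderiv_of_isOpen (m := (⊤ : ℕ∞)) isOpen_U2 (by simp)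
  exact h.clm_apply contDiffOn_const

lemma Sm.pdI {F : ℝ × ℝ → ℝ} (hF : Sm F) (v : ℝ × ℝ) (m : ℕ) : Sm (pdI v m F) := by
  induction m with
  | zero => exact hF
  | succ m ih => exact ih.pd v

lemma pd_congr {F G : ℝ × ℝ → ℝ} (h : EqOn F G U2) (v : ℝ × ℝ) :
    EqOn (pd v F) (pd v G) U2 := by
  intro p hp
  have : F =ᶠ[nhds p] G := Filter.eventuallyEq_of_mem (isOpen_U2.mem_nhds hp) h
  simp only [pd, this.fderiv_eq]

lemma pdI_congr {F G : ℝ × ℝ → ℝ} (h : EqOn F G U2) (v : ℝ × ℝ) (m : ℕ) :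
    EqOn (pdI v m F) (pdI v m G) U2 := by
  induction m with
  | zero => exact h
  | succ m ih => exact pd_congr ih v

lemma pd_comm {F : ℝ × ℝ → ℝ} (hF : Sm F) (v w : ℝ × ℝ) {p : ℝ × ℝ} (hp : p ∈ U2) :
    pd v (pd w F) p = pd w (pd v F) p := by
  have hsym : IsSymmSndFDerivAt ℝ F p :=
    (hF.contDiffAt (isOpen_U2.mem_nhds hp)).isSymmSndFDerivAt (by rw [minSmoothness_of_isRCLikeNormedField]; exact WithTop.coe_le_coe.2 le_top)
  have hd2 : DifferentiableAt ℝ (fderiv ℝ F) p :=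
    ((hF.contDiffAt (isOpen_U2.mem_nhds hp)).fderiv_right (m := (⊤ : ℕ∞)) (by exact_mod_cast le_top)).differentiableAt (by simp)
  have key : ∀ u : ℝ × ℝ, ∀ q ∈ U2, _root_.fderiv ℝ (fun r => _root_.fderiv ℝ F r u) q
      = ((_root_.fderiv ℝ (_root_.fderiv ℝ F) q).flip u) := by
    intro u q hq
    have hdq : DifferentiableAt ℝ (fderiv ℝ F) q :=
      ((hF.contDiffAt (isOpen_U2.mem_nhds hq)).fderiv_right (m := (⊤ : ℕ∞)) (by exact_mod_cast le_top)).differentiableAt (by simp)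
    have : HasFDerivAt (fun r => _root_.fderiv ℝ F r u)
        (((ContinuousLinearMap.apply ℝ ℝ u).comp (_root_.fderiv ℝ (_root_.fderiv ℝ F) q))) q :=
      (ContinuousLinearMap.apply ℝ ℝ u).hasFDerivAt.comp q hdq.hasFDerivAt
    rw [this.fderiv]; apply ContinuousLinearMap.ext; intro z; rfl
  have h1 : pd v (pd w F) p = _root_.fderiv ℝ (_root_.fderiv ℝ F) p v w := by
    show _root_.fderiv ℝ (fun r => _root_.fderiv ℝ F r w) p v = _
    rw [key w p hp]; rfl
  have h2 : pd w (pd v F) p = _root_.fderiv ℝ (_root_.fderiv ℝ F) p w v := by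
    show _root_.fderiv ℝ (fun r => _root_.fderiv ℝ F r v) p w = _
    rw [key v p hp]; rfl
  rw [h1, h2, hsym v w]


lemma iteratedDeriv_congrOn {O : Set ℝ} (hO : IsOpen O) {f g : ℝ → ℝ}
    (h : EqOn f g O) (m : ℕ) : EqOn (iteratedDeriv m f) (iteratedDeriv m g) O := by
  induction m with
  | zero => simpa [iteratedDeriv_zero] using h
  | succ m ih =>
    intro z hz
    rw [iteratedDeriv_succ, iteratedDeriv_succ]
    exact Filter.EventuallyEq.deriv_eq
      (Filter.eventuallyEq_of_mem (hO.mem_nhds hz) ih)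

lemma pdI_succ' (v : ℝ × ℝ) (m : ℕ) (F : ℝ × ℝ → ℝ) :
    pdI v (m+1) F = pdI v m (pd v F) := by
  induction m with
  | zero => rfl
  | succ m ih => show pd v (pdI v (m+1) F) = _; rw [ih]; rfl

lemma pdI_add (v : ℝ × ℝ) (a b : ℕ) (F : ℝ × ℝ → ℝ) :
    pdI v (a + b) F = pdI v a (pdI v b F) := by
  induction a with
  | zero => rw [Nat.zero_add]; rfl
  | succ a ih =>
    have : a + 1 + b = (a + b) + 1 := by omega
    rw [this]
    show pd v (pdI v (a + b) F) = _
    rw [ih]; rfl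

/-- Iterated derivative along a line. -/
lemma iter_line (v p0 : ℝ × ℝ) (m : ℕ) :
    ∀ F : ℝ × ℝ → ℝ, Sm F → ∀ z : ℝ, p0 + z • v ∈ U2 →
      iteratedDeriv m (fun s => F (p0 + s • v)) z = pdI v m F (p0 + z • v) := by
  induction m with
  | zero => intro F hF z hz; simp [pdI]
  | succ m ih =>
    intro F hF z hz
    have hO : IsOpen {s : ℝ | p0 + s • v ∈ U2} :=
      isOpen_U2.preimage (by continuity)
    have hderiv : EqOn (deriv (fun s => F (p0 + s • v)))
        (fun s => pd v F (p0 + s • v)) {s : ℝ | p0 + s • v ∈ U2} := by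
      intro s hs
      have hc : HasDerivAt (fun s : ℝ => p0 + s • v) v s := by
        simpa using ((hasDerivAt_id s).smul_const v).const_add p0
      have := (hF.diffAt hs).hasFDerivAt.comp_hasDerivAt s hc
      exact this.deriv
    rw [iteratedDeriv_succ']
    calc iteratedDeriv m (deriv fun s => F (p0 + s • v)) z
        = iteratedDeriv m (fun s => pd v F (p0 + s • v)) z :=
          iteratedDeriv_congrOn hO hderiv m hz
      _ = pdI v m (pd v F) (p0 + z • v) := ih (pd v F) (hF.pd v) z hz
      _ = pdI v (m+1) F (p0 + z • v) := by rw [pdI_succ']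

lemma pd_pdI_comm {F : ℝ × ℝ → ℝ} (hF : Sm F) (v w : ℝ × ℝ) (m : ℕ) :
    ∀ p ∈ U2, pd w (pdI v m F) p = pdI v m (pd w F) p := by
  induction m with
  | zero => intro p hp; rfl
  | succ m ih =>
    intro p hp
    have h1 : pd w (pd v (pdI v m F)) p = pd v (pd w (pdI v m F)) p :=
      (pd_comm (hF.pdI v m) v w hp).symm
    have h2 : EqOn (pd w (pdI v m F)) (pdI v m (pd w F)) U2 := fun q hq => ih q hq
    calc pd w (pdI v (m+1) F) p = pd v (pd w (pdI v m F)) p := h1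
      _ = pd v (pdI v m (pd w F)) p := pd_congr h2 v hp
      _ = pdI v (m+1) (pd w F) p := rfl

lemma pdI_pdI_comm {F : ℝ × ℝ → ℝ} (hF : Sm F) (v w : ℝ × ℝ) (a b : ℕ) :
    ∀ p ∈ U2, pdI w b (pdI v a F) p = pdI v a (pdI w b F) p := by
  induction b with
  | zero => intro p hp; rfl
  | succ b ih =>
    intro p hp
    have h2 : EqOn (pdI w b (pdI v a F)) (pdI v a (pdI w b F)) U2 := fun q hq => ih q hq
    calc pd w (pdI w b (pdI v a F)) p
        = pd w (pdI v a (pdI w b F)) p := pd_congr h2 w hp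
      _ = pdI v a (pd w (pdI w b F)) p := pd_pdI_comm (hF.pdI w b) v w a p hp

/-- The swap map as a continuous linear map. -/
noncomputable def σL : ℝ × ℝ →L[ℝ] ℝ × ℝ :=
  (ContinuousLinearMap.snd ℝ ℝ ℝ).prod (ContinuousLinearMap.fst ℝ ℝ ℝ)

lemma σL_apply (p : ℝ × ℝ) : σL p = (p.2, p.1) := rfl

lemma σL_mem {p : ℝ × ℝ} (hp : p ∈ U2) : σL p ∈ U2 := ⟨hp.2, hp.1⟩

lemma pd_swap {G : ℝ × ℝ → ℝ} (hG : Sm G) (v : ℝ × ℝ) {p : ℝ × ℝ} (hp : p ∈ U2) :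
    pd v (fun q => G (σL q)) p = pd (σL v) G (σL p) := by
  have h : HasFDerivAt (fun q => G (σL q)) ((_root_.fderiv ℝ G (σL p)).comp σL) p :=
    ((hG.diffAt (σL_mem hp)).hasFDerivAt.comp p σL.hasFDerivAt : _)
  show _root_.fderiv ℝ (fun q => G (σL q)) p v = _
  rw [h.fderiv]; rfl

lemma pdI_swap {G : ℝ × ℝ → ℝ} (hG : Sm G) (v : ℝ × ℝ) (m : ℕ) :
    ∀ p ∈ U2, pdI v m (fun q => G (σL q)) p = pdI (σL v) m G (σL p) := by
  induction m with
  | zero => intro p hp; rfl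
  | succ m ih =>
    intro p hp
    have h2 : EqOn (pdI v m (fun q => G (σL q))) (fun q => pdI (σL v) m G (σL q)) U2 :=
      fun q hq => ih q hq
    calc pd v (pdI v m (fun q => G (σL q))) p
        = pd v (fun q => pdI (σL v) m G (σL q)) p := pd_congr h2 v hp
      _ = pd (σL v) (pdI (σL v) m G) (σL p) := pd_swap (hG.pdI (σL v) m) v hp


def e1 : ℝ × ℝ := (1, 0)
def e2 : ℝ × ℝ := (0, 1)

lemma pd_add_dir (F : ℝ × ℝ → ℝ) (v w : ℝ × ℝ) (p : ℝ × ℝ) :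
    pd (v + w) F p = pd v F p + pd w F p :=
  (_root_.fderiv ℝ F p).map_add v w

lemma pd_finsum {s : Finset ℕ} {f : ℕ → ℝ × ℝ → ℝ} (hf : ∀ j ∈ s, Sm (f j))
    (c : ℕ → ℝ) (v : ℝ × ℝ) {p : ℝ × ℝ} (hp : p ∈ U2) :
    pd v (fun q => ∑ j ∈ s, c j * f j q) p = ∑ j ∈ s, c j * pd v (f j) p := by
  have H : HasFDerivAt (fun q => ∑ j ∈ s, c j * f j q)
      (∑ j ∈ s, c j • _root_.fderiv ℝ (f j) p) p := by
    apply HasFDerivAt.fun_sum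
    intro j hj
    exact (((hf j hj).diffAt hp).hasFDerivAt).const_mul (c j)
  show _root_.fderiv ℝ (fun q => ∑ j ∈ s, c j * f j q) p v = _
  rw [H.fderiv]
  simp [ContinuousLinearMap.sum_apply, pd]

lemma pascal_sum (A : ℕ → ℕ → ℝ) (m : ℕ) :
    ∑ j ∈ Finset.range (m+1), (m.choose j : ℝ) * (A (j+1) (m-j) + A j (m-j+1))
    = ∑ j ∈ Finset.range (m+2), ((m+1).choose j : ℝ) * A j (m+1-j) := by
  have key : ∀ j, ((m+1).choose j : ℝ) * A j (m+1-j)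
      = (if j = 0 then (0:ℝ) else (m.choose (j-1) : ℝ)) * A j (m+1-j)
        + (m.choose j : ℝ) * A j (m+1-j) := by
    intro j
    cases j with
    | zero => simp
    | succ j' =>
      simp only [if_neg (Nat.succ_ne_zero j'), Nat.succ_sub_one]
      rw [Nat.choose_succ_succ (m) (j')]
      push_cast
      ring
  simp only [mul_add, Finset.sum_add_distrib, key]
  congr 1
  · -- S1 : shift
    rw [Finset.sum_range_succ' (fun j => (if j = 0 then (0:ℝ) else (m.choose (j-1) : ℝ)) * A j (m+1-j)) (m+1)]
    norm_num
    apply Finset.sum_congr rfl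
    intro j hj
    have h : m + 1 - (j + 1) = m - j := by omega
    rw [h]
  · -- S2
    rw [Finset.sum_range_succ (fun j => (m.choose j : ℝ) * A j (m+1-j)) (m+1),
      Nat.choose_succ_self, Nat.cast_zero, zero_mul, add_zero]
    apply Finset.sum_congr rfl
    intro j hj
    have hj' : j ≤ m := by simpa [Nat.lt_succ_iff] using hj
    have : m - j + 1 = m + 1 - j := by omega
    rw [this]

lemma pdI_diag {G : ℝ × ℝ → ℝ} (hG : Sm G) (m : ℕ) :
    ∀ p ∈ U2, pdI (e1 + e2) m G p
      = ∑ j ∈ Finset.range (m+1), (m.choose j : ℝ) * pdI e1 j (pdI e2 (m-j) G) p := by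
  induction m with
  | zero => intro p hp; simp [pdI]
  | succ m ih =>
    intro p hp
    have hsm : ∀ j ∈ Finset.range (m+1), Sm (fun q => pdI e1 j (pdI e2 (m-j) G) q) :=
      fun j _ => (hG.pdI e2 (m-j)).pdI e1 j
    have hEq : EqOn (pdI (e1 + e2) m G)
        (fun q => ∑ j ∈ Finset.range (m+1),
          (m.choose j : ℝ) * pdI e1 j (pdI e2 (m-j) G) q) U2 := fun q hq => ih q hq
    calc pdI (e1 + e2) (m+1) G p
        = pd (e1 + e2) (fun q => ∑ j ∈ Finset.range (m+1),
            (m.choose j : ℝ) * pdI e1 j (pdI e2 (m-j) G) q) p := pd_congr hEq _ hp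
      _ = pd e1 (fun q => ∑ j ∈ Finset.range (m+1),
            (m.choose j : ℝ) * pdI e1 j (pdI e2 (m-j) G) q) p
          + pd e2 (fun q => ∑ j ∈ Finset.range (m+1),
            (m.choose j : ℝ) * pdI e1 j (pdI e2 (m-j) G) q) p := pd_add_dir _ e1 e2 p
      _ = ∑ j ∈ Finset.range (m+1), (m.choose j : ℝ)
              * pd e1 (pdI e1 j (pdI e2 (m-j) G)) p
          + ∑ j ∈ Finset.range (m+1), (m.choose j : ℝ)
              * pd e2 (pdI e1 j (pdI e2 (m-j) G)) p := by
            rw [pd_finsum hsm _ e1 hp, pd_finsum hsm _ e2 hp]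
      _ = ∑ j ∈ Finset.range (m+1), (m.choose j : ℝ)
            * (pdI e1 (j+1) (pdI e2 (m-j) G) p + pdI e1 j (pdI e2 (m-j+1) G) p) := by
            rw [← Finset.sum_add_distrib]
            apply Finset.sum_congr rfl
            intro j hj
            rw [← mul_add]
            congr 1
            have h2 : pd e2 (pdI e1 j (pdI e2 (m-j) G)) p
                = pdI e1 j (pd e2 (pdI e2 (m-j) G)) p :=
              pd_pdI_comm (hG.pdI e2 (m-j)) e1 e2 j p hp
            rw [h2]
            rfl
      _ = ∑ j ∈ Finset.range (m+2), ((m+1).choose j : ℝ)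
            * pdI e1 j (pdI e2 (m+1-j) G) p :=
          pascal_sum (fun a b => pdI e1 a (pdI e2 b G) p) m


lemma mem_U2 {x y : ℝ} (hx : 0 < x) (hy : 0 < y) : ((x,y) : ℝ × ℝ) ∈ U2 := ⟨hx, hy⟩

lemma keyInnerY {F : ℝ × ℝ → ℝ} (hF : Sm F) (b : ℕ) {s x : ℝ} (hs : 0 < s) (hx : 0 < x) :
    iteratedDeriv b (fun t => F (s, t)) x = pdI e2 b F (s, x) := by
  have hfun : (fun t => F (s, t)) = fun t => F ((s,0) + t • e2) := by
    funext t; simp [e2, Prod.ext_iff]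
  have hpt : ((s,0) : ℝ × ℝ) + x • e2 = (s, x) := by simp [e2, Prod.ext_iff]
  rw [hfun]
  rw [iter_line e2 (s,0) b F hF x (by rw [hpt]; exact mem_U2 hs hx), hpt]

lemma keyInnerX {F : ℝ × ℝ → ℝ} (hF : Sm F) (a : ℕ) {z x : ℝ} (hz : 0 < z) (hx : 0 < x) :
    iteratedDeriv a (fun s => F (s, z)) x = pdI e1 a F (x, z) := by
  have hfun : (fun s => F (s, z)) = fun s => F ((0,z) + s • e1) := by
    funext t; simp [e1, Prod.ext_iff]
  have hpt : ((0,z) : ℝ × ℝ) + x • e1 = (x, z) := by simp [e1, Prod.ext_iff]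
  rw [hfun]
  rw [iter_line e1 (0,z) a F hF x (by rw [hpt]; exact mem_U2 hx hz), hpt]

lemma keyLHS {F : ℝ × ℝ → ℝ} (hF : Sm F) (a b : ℕ) {x : ℝ} (hx : 0 < x) :
    iteratedDeriv a (fun s => iteratedDeriv b (fun t => F (s, t)) x) x
      = pdI e1 a (pdI e2 b F) (x, x) := by
  have hEq : EqOn (fun s => iteratedDeriv b (fun t => F (s, t)) x)
      (fun s => pdI e2 b F ((0,x) + s • e1)) (Ioi 0) := by
    intro s hs
    have hpt : ((0,x) : ℝ × ℝ) + s • e1 = (s, x) := by simp [e1, Prod.ext_iff]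
    simp only [hpt]
    exact keyInnerY hF b hs hx
  have h1 := iteratedDeriv_congrOn isOpen_Ioi hEq a hx
  rw [h1]
  have hpt : ((0,x) : ℝ × ℝ) + x • e1 = (x, x) := by simp [e1, Prod.ext_iff]
  rw [iter_line e1 (0,x) a (pdI e2 b F) (hF.pdI e2 b) x (by rw [hpt]; exact mem_U2 hx hx), hpt]

lemma keyDiag {F : ℝ × ℝ → ℝ} (hF : Sm F) (c m : ℕ) {x : ℝ} (hx : 0 < x) :
    iteratedDeriv m (fun z => iteratedDeriv c (fun s => F (s, z)) z) x
      = ∑ j ∈ Finset.range (m+1),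
          (m.choose j : ℝ) * pdI e1 (c + j) (pdI e2 (m - j) F) (x, x) := by
  set G := pdI e1 c F with hG
  have hGsm : Sm G := hF.pdI e1 c
  have hEq : EqOn (fun z => iteratedDeriv c (fun s => F (s, z)) z)
      (fun z => G ((0,0) + z • (e1 + e2))) (Ioi 0) := by
    intro z hz
    have hpt : ((0,0) : ℝ × ℝ) + z • (e1 + e2) = (z, z) := by simp [e1, e2, Prod.ext_iff]
    simp only [hpt]
    exact keyInnerX hF c hz hz
  have h1 := iteratedDeriv_congrOn isOpen_Ioi hEq m hx
  rw [h1]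
  have hpt : ((0,0) : ℝ × ℝ) + x • (e1 + e2) = (x, x) := by simp [e1, e2, Prod.ext_iff]
  rw [iter_line (e1 + e2) (0,0) m G hGsm x (by rw [hpt]; exact mem_U2 hx hx), hpt]
  rw [pdI_diag hGsm m (x,x) (mem_U2 hx hx)]
  apply Finset.sum_congr rfl
  intro j hj
  congr 1
  have hcomm : EqOn (pdI e2 (m-j) (pdI e1 c F)) (pdI e1 c (pdI e2 (m-j) F)) U2 :=
    fun q hq => pdI_pdI_comm hF e1 e2 c (m-j) q hq
  calc pdI e1 j (pdI e2 (m-j) G) (x,x)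
      = pdI e1 j (pdI e1 c (pdI e2 (m-j) F)) (x,x) :=
        pdI_congr hcomm e1 j (mem_U2 hx hx)
    _ = pdI e1 (j + c) (pdI e2 (m-j) F) (x,x) := by rw [pdI_add]
    _ = pdI e1 (c + j) (pdI e2 (m-j) F) (x,x) := by rw [Nat.add_comm]

lemma keySym {F : ℝ × ℝ → ℝ} (hF : Sm F)
    (hs : EqOn F (fun q => F (σL q)) U2) (a b : ℕ) {x : ℝ} (hx : 0 < x) :
    pdI e1 a (pdI e2 b F) (x, x) = pdI e1 b (pdI e2 a F) (x, x) := by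
  have hxx : ((x,x) : ℝ × ℝ) ∈ U2 := mem_U2 hx hx
  have step1 : EqOn (pdI e2 b F) (fun q => pdI e1 b F (σL q)) U2 := by
    intro q hq
    have h1 : pdI e2 b F q = pdI e2 b (fun r => F (σL r)) q := pdI_congr hs e2 b hq
    have h2 : pdI e2 b (fun r => F (σL r)) q = pdI (σL e2) b F (σL q) :=
      pdI_swap hF e2 b q hq
    rw [h1, h2]; rfl
  calc pdI e1 a (pdI e2 b F) (x,x)
      = pdI e1 a (fun q => pdI e1 b F (σL q)) (x,x) := pdI_congr step1 e1 a hxx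
    _ = pdI (σL e1) a (pdI e1 b F) (σL (x,x)) := pdI_swap (hF.pdI e1 b) e1 a (x,x) hxx
    _ = pdI e2 a (pdI e1 b F) (x,x) := rfl
    _ = pdI e1 b (pdI e2 a F) (x,x) := pdI_pdI_comm hF e1 e2 b a (x,x) hxx




noncomputable def gen (n i : ℕ) : ℚ[X] := (1 + X)^(n - 2*i) * (1 + X^(2*i))
noncomputable def σp (n j : ℕ) : ℚ[X] := (1 - X)^(2*j) * (1 + X)^(n - 2*j)
noncomputable def βp (n s : ℕ) : ℚ[X] := X^s * (1 + X)^(n - 2*s)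

noncomputable def SpanGen (n : ℕ) : Submodule ℚ ℚ[X] :=
  Submodule.span ℚ (Set.range (fun i : Fin (n/2 + 1) => gen n i))

lemma gen_mem {n i : ℕ} (hi : i ≤ n/2) : gen n i ∈ SpanGen n :=
  Submodule.subset_span ⟨⟨i, by omega⟩, rfl⟩

lemma sum_even_of_odd_zero {A : Type*} [AddCommMonoid A] (g : ℕ → A) (i : ℕ)
    (h : ∀ r, Odd r → g r = 0) :
    ∑ r ∈ Finset.range (2*i+1), g r = ∑ j ∈ Finset.range (i+1), g (2*j) := by
  induction i with
  | zero => simp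
  | succ i ih =>
    have h1 : 2*(i+1)+1 = (2*i+1) + 1 + 1 := by ring
    rw [h1, Finset.sum_range_succ, Finset.sum_range_succ, ih,
      Finset.sum_range_succ (fun j => g (2*j)) (i+1)]
    have h2 : g (2*i+1) = 0 := h _ ⟨i, by ring⟩
    have h3 : 2*(i+1) = 2*i+1+1 := by ring
    rw [h2, h3, add_zero]

lemma idA {n i : ℕ} (hi : 2*i ≤ n) :
    ((2:ℚ)^(2*i)) • gen n i
      = ∑ j ∈ Finset.range (i+1), ((2:ℚ) * ((2*i).choose (2*j) : ℚ)) • σp n j := by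
  have key : ((1:ℚ[X]) - X + (1 + X))^(2*i) + ((1:ℚ[X]) + X - (1 - X))^(2*i)
      = ∑ r ∈ Finset.range (2*i+1),
          ((1 + (-1:ℚ[X])^r) * ((1-X)^r * (1+X)^(2*i - r) * ((2*i).choose r : ℚ[X]))) := by
    have e1 : ((1:ℚ[X]) - X + (1 + X))^(2*i)
        = ∑ r ∈ Finset.range (2*i+1), (1-X)^r * (1+X)^(2*i-r) * ((2*i).choose r : ℚ[X]) :=
      add_pow _ _ _
    have e2 : ((1:ℚ[X]) + X - (1 - X))^(2*i)
        = ∑ r ∈ Finset.range (2*i+1),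
            (-(1-X))^r * (1+X)^(2*i-r) * ((2*i).choose r : ℚ[X]) := by
      rw [show (1:ℚ[X]) + X - (1 - X) = -(1-X) + (1+X) by ring]
      exact add_pow _ _ _
    rw [e1, e2, ← Finset.sum_add_distrib]
    apply Finset.sum_congr rfl
    intro r _
    rw [neg_pow]
    ring
  have even_step : ∑ r ∈ Finset.range (2*i+1),
        ((1 + (-1:ℚ[X])^r) * ((1-X)^r * (1+X)^(2*i - r) * ((2*i).choose r : ℚ[X])))
      = ∑ j ∈ Finset.range (i+1),
          ((1 + (-1:ℚ[X])^(2*j)) * ((1-X)^(2*j) * (1+X)^(2*i - 2*j) * ((2*i).choose (2*j) : ℚ[X]))) := by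
    apply sum_even_of_odd_zero
    intro r hr
    rw [hr.neg_one_pow]
    ring
  have lhs_eq : ((1:ℚ[X]) - X + (1 + X))^(2*i) + ((1:ℚ[X]) + X - (1 - X))^(2*i)
      = (2:ℚ[X])^(2*i) * (1 + X^(2*i)) := by
    rw [show (1:ℚ[X]) - X + (1 + X) = 2 by ring, show (1:ℚ[X]) + X - (1 - X) = 2*X by ring]
    rw [mul_pow]
    ring
  have main : (2:ℚ[X])^(2*i) * (1 + X^(2*i)) * (1+X)^(n - 2*i)
      = ∑ j ∈ Finset.range (i+1),
          (2 * ((2*i).choose (2*j) : ℚ[X])) * ((1-X)^(2*j) * (1+X)^(n - 2*j)) := by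
    rw [← lhs_eq, key, even_step, Finset.sum_mul]
    apply Finset.sum_congr rfl
    intro j hj
    have hj' : j ≤ i := by simpa [Nat.lt_succ_iff] using hj
    have hpow : (1+X:ℚ[X])^(2*i - 2*j) * (1+X)^(n - 2*i) = (1+X)^(n - 2*j) := by
      rw [← pow_add]
      congr 1
      omega
    have hneg : (1 + (-1:ℚ[X])^(2*j)) = 2 := by
      rw [show (2:ℕ)*j = 2*j from rfl, pow_mul, neg_one_sq, one_pow]
      ring
    calc (1 + (-1:ℚ[X])^(2*j)) * ((1-X)^(2*j) * (1+X)^(2*i - 2*j) * ((2*i).choose (2*j) : ℚ[X]))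
          * (1+X)^(n-2*i)
        = (1 + (-1:ℚ[X])^(2*j)) * ((2*i).choose (2*j) : ℚ[X])
            * ((1-X)^(2*j) * ((1+X)^(2*i-2*j) * (1+X)^(n-2*i))) := by ring
      _ = 2 * ((2*i).choose (2*j) : ℚ[X]) * ((1-X)^(2*j) * (1+X)^(n - 2*j)) := by
          rw [hneg, hpow]
  -- convert to smul form
  have cast1 : ((2:ℚ)^(2*i)) • gen n i = (2:ℚ[X])^(2*i) * (1 + X^(2*i)) * (1+X)^(n - 2*i) := by
    rw [Polynomial.smul_eq_C_mul, gen]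
    simp only [map_pow, map_ofNat]
    ring
  rw [cast1, main]
  apply Finset.sum_congr rfl
  intro j _
  rw [Polynomial.smul_eq_C_mul, σp]
  simp only [map_mul, map_ofNat, map_natCast]


lemma σp_mem {n : ℕ} : ∀ i, i ≤ n/2 → σp n i ∈ SpanGen n := by
  intro i
  induction i using Nat.strong_induction_on with
  | _ i ih =>
    intro hi
    have h2i : 2*i ≤ n := by omega
    have hA := idA (n := n) h2i
    rw [Finset.sum_range_succ] at hA
    have hcs : ((2*i).choose (2*i)) = 1 := Nat.choose_self _
    rw [hcs] at hA
    have h2 : ((2:ℚ)) • σp n i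
        = ((2:ℚ)^(2*i)) • gen n i - ∑ j ∈ Finset.range i,
            ((2:ℚ) * ((2*i).choose (2*j) : ℚ)) • σp n j := by
      rw [hA]; simp only [Nat.cast_one, mul_one]; abel
    have hmem : ((2:ℚ)) • σp n i ∈ SpanGen n := by
      rw [h2]
      apply sub_mem
      · exact Submodule.smul_mem _ _ (gen_mem hi)
      · apply Submodule.sum_mem
        intro j hj
        have hj' : j < i := Finset.mem_range.1 hj
        exact Submodule.smul_mem _ _ (ih j hj' (by omega))
    have : σp n i = ((2:ℚ))⁻¹ • (((2:ℚ)) • σp n i) := by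
      rw [smul_smul]; norm_num
    rw [this]
    exact Submodule.smul_mem _ _ hmem

lemma idB {n j : ℕ} (hj : 2*j ≤ n) :
    σp n j = ∑ s ∈ Finset.range (j+1),
      (((j.choose s : ℚ)) * (-4)^s) • βp n s := by
  have hbase : ((1:ℚ[X]) - X)^(2*j) = (-(4*X) + (1+X)^2)^j := by
    rw [pow_mul]
    congr 1
    ring
  have hexp : (-(4*X) + ((1:ℚ[X])+X)^2)^j
      = ∑ s ∈ Finset.range (j+1), (-(4*X))^s * (((1:ℚ[X])+X)^2)^(j-s) * (j.choose s : ℚ[X]) :=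
    add_pow _ _ _
  rw [σp, hbase, hexp, Finset.sum_mul]
  apply Finset.sum_congr rfl
  intro s hs
  have hs' : s ≤ j := by simpa [Nat.lt_succ_iff] using hs
  have hpow : (((1:ℚ[X])+X)^2)^(j-s) * (1+X)^(n-2*j) = (1+X)^(n-2*s) := by
    rw [← pow_mul, ← pow_add]
    congr 1
    omega
  have hneg : (-(4*X) : ℚ[X])^s = (-4:ℚ[X])^s * X^s := by
    rw [← mul_pow]
    congr 1
    ring
  rw [Polynomial.smul_eq_C_mul, βp]
  simp only [map_mul, map_pow, map_natCast, map_neg, map_ofNat]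
  calc (-(4*X))^s * (((1:ℚ[X])+X)^2)^(j-s) * (j.choose s : ℚ[X]) * (1+X)^(n-2*j)
      = (-(4*X))^s * (j.choose s : ℚ[X]) * ((((1:ℚ[X])+X)^2)^(j-s) * (1+X)^(n-2*j)) := by ring
    _ = (-4:ℚ[X])^s * X^s * (j.choose s : ℚ[X]) * (1+X)^(n-2*s) := by rw [hneg, hpow]
    _ = (j.choose s : ℚ[X]) * (-4:ℚ[X])^s * (X^s * (1+X)^(n-2*s)) := by ring

lemma βp_mem {n : ℕ} : ∀ s, s ≤ n/2 → βp n s ∈ SpanGen n := by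
  intro s
  induction s using Nat.strong_induction_on with
  | _ s ih =>
    intro hs
    have h2s : 2*s ≤ n := by omega
    have hB := idB (n := n) h2s
    rw [Finset.sum_range_succ, Nat.choose_self] at hB
    have hcoef : ((1:ℚ)) * (-4:ℚ)^s ≠ 0 := by
      rw [one_mul]
      exact pow_ne_zero _ (by norm_num)
    have h2 : (((1:ℚ)) * (-4:ℚ)^s) • βp n s
        = σp n s - ∑ t ∈ Finset.range s, (((s.choose t : ℚ)) * (-4)^t) • βp n t := by
      rw [hB]; simp only [Nat.cast_one]; abel
    have hmem : (((1:ℚ)) * (-4:ℚ)^s) • βp n s ∈ SpanGen n := by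
      rw [h2]
      apply sub_mem (σp_mem s hs)
      apply Submodule.sum_mem
      intro t ht
      have htt := Finset.mem_range.1 ht
      exact Submodule.smul_mem _ _ (ih t htt (by omega))
    have : βp n s = (((1:ℚ)) * (-4:ℚ)^s)⁻¹ • ((((1:ℚ)) * (-4:ℚ)^s) • βp n s) := by
      rw [smul_smul, inv_mul_cancel₀ hcoef, one_smul]
    rw [this]
    exact Submodule.smul_mem _ _ hmem

lemma idC {n t : ℕ} (ht : 2*t ≤ n) :
    (2:ℚ) • βp n t = ∑ r ∈ Finset.range (n - 2*t + 1),
      ((n - 2*t).choose r : ℚ) • ((X:ℚ[X])^(t+r) + X^(n-(t+r))) := by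
  set N := n - 2*t with hN
  have hbeta : βp n t = ∑ r ∈ Finset.range (N+1), (N.choose r : ℚ[X]) * X^(t+r) := by
    rw [βp, show ((1:ℚ[X]) + X) = X + 1 by ring, add_pow]
    rw [Finset.mul_sum]
    apply Finset.sum_congr rfl
    intro r _
    rw [one_pow, pow_add]
    ring
  have hrefl : ∑ r ∈ Finset.range (N+1), (N.choose r : ℚ[X]) * X^(t+r)
      = ∑ r ∈ Finset.range (N+1), (N.choose r : ℚ[X]) * X^(n-(t+r)) := by
    rw [← Finset.sum_range_reflect (fun r => (N.choose r : ℚ[X]) * X^(n-(t+r))) (N+1)]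
    apply Finset.sum_congr rfl
    intro r hr
    have hr' : r ≤ N := by
      have := Finset.mem_range.1 hr; omega
    have e1 : N + 1 - 1 - r = N - r := by omega
    have e2 : N.choose (N - r) = N.choose r := Nat.choose_symm hr'
    have e3 : n - (t + (N - r)) = t + r := by omega
    rw [e1, e2, e3]
  calc (2:ℚ) • βp n t = βp n t + βp n t := two_smul ℚ (βp n t)
    _ = (∑ r ∈ Finset.range (N+1), (N.choose r : ℚ[X]) * X^(t+r))
        + ∑ r ∈ Finset.range (N+1), (N.choose r : ℚ[X]) * X^(n-(t+r)) := by
        rw [hbeta]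
        exact congrArg (HAdd.hAdd _) hrefl
    _ = ∑ r ∈ Finset.range (N+1), (N.choose r : ℚ) • ((X:ℚ[X])^(t+r) + X^(n-(t+r))) := by
        rw [← Finset.sum_add_distrib]
        apply Finset.sum_congr rfl
        intro r _
        rw [Polynomial.smul_eq_C_mul, map_natCast, mul_add]


lemma sympow_swap {n u : ℕ} (hu : u ≤ n) :
    (X:ℚ[X])^u + X^(n-u) = X^(min u (n-u)) + X^(n - min u (n-u)) := by
  rcases le_total u (n-u) with h | h
  · rw [min_eq_left h]
  · rw [min_eq_right h]
    have h2 : n - (n - u) = u := by omega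
    rw [h2, add_comm]

lemma sympow_core {n t : ℕ} (ht : 2*t ≤ n)
    (hmid : ∀ u, t < u → u ≤ n/2 → (X:ℚ[X])^u + X^(n-u) ∈ SpanGen n) :
    (X:ℚ[X])^t + X^(n-t) ∈ SpanGen n := by
  have hC := idC (n := n) (t := t) ht
  set N := n - 2*t with hN
  rcases Nat.eq_zero_or_pos N with h0 | hpos
  · rw [h0] at hC
    norm_num [Finset.sum_range_one] at hC
    rw [← hC]
    exact Submodule.smul_mem _ _ (βp_mem t (by omega))
  · obtain ⟨M, hM⟩ : ∃ M, N = M + 1 := ⟨N - 1, by omega⟩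
    rw [hM, Finset.sum_range_succ, Finset.sum_range_succ'] at hC
    simp only [Nat.choose_zero_right, Nat.choose_self, Nat.cast_one, one_smul, add_zero] at hC
    have eA : t + (M + 1) = n - t := by omega
    have eB : n - (t + (M + 1)) = t := by omega
    rw [eB, eA] at hC
    have hgoal : (2:ℚ) • ((X:ℚ[X])^t + X^(n-t))
        = (2:ℚ) • βp n t - ∑ r ∈ Finset.range M,
            ((M+1).choose (r+1) : ℚ) • ((X:ℚ[X])^(t+(r+1)) + X^(n-(t+(r+1)))) := by
      rw [hC, two_smul]
      abel
    have hmem : (2:ℚ) • ((X:ℚ[X])^t + X^(n-t)) ∈ SpanGen n := by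
      rw [hgoal]
      apply sub_mem (Submodule.smul_mem _ _ (βp_mem t (by omega)))
      apply Submodule.sum_mem
      intro r hr
      have hrM := Finset.mem_range.1 hr
      apply Submodule.smul_mem
      have hu : t + (r+1) ≤ n := by omega
      rw [sympow_swap hu]
      apply hmid
      · omega
      · omega
    have h5 : ((X:ℚ[X])^t + X^(n-t)) = (2:ℚ)⁻¹ • ((2:ℚ) • ((X:ℚ[X])^t + X^(n-t))) := by
      rw [smul_smul]; norm_num
    rw [h5]
    exact Submodule.smul_mem _ _ hmem

lemma sympow_mem {n : ℕ} : ∀ d t, t ≤ n/2 → n/2 - t ≤ d → (X:ℚ[X])^t + X^(n-t) ∈ SpanGen n := by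
  intro d
  induction d with
  | zero =>
    intro t ht hd
    apply sympow_core (by omega)
    intro u hu hun
    exact absurd hun (by omega)
  | succ d ih =>
    intro t ht hd
    apply sympow_core (by omega)
    intro u hu hun
    exact ih u hun (by omega)

lemma polyCore {n k : ℕ} (hk : k ≤ n) : (X:ℚ[X])^k + X^(n-k) ∈ SpanGen n := by
  rw [sympow_swap hk]
  exact sympow_mem (n/2) _ (by omega) (by omega)


open Polynomial in
lemma polyCore' {n k : ℕ} (hk : k ≤ n) :
    ∃ c : ℕ → ℚ, (X:ℚ[X])^k + X^(n-k)
      = ∑ i ∈ Finset.range (n/2+1), c i • gen n i := by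
  have h := polyCore hk
  rw [SpanGen, Submodule.mem_span_range_iff_exists_fun] at h
  obtain ⟨c, hc⟩ := h
  refine ⟨fun i => if h : i < n/2+1 then c ⟨i, h⟩ else 0, ?_⟩
  rw [← hc, Finset.sum_range]
  apply Finset.sum_congr rfl
  intro i _
  have hlt : (↑i : ℕ) < n/2+1 := i.isLt
  simp [hlt]


end Stmt3Aux

open Polynomial in
/-- Every diagonal partial derivative of a mean is a fixed rational linear combination
(independent of the mean) of derivatives of its characteristic functions of various orders. -/
theorem stmt3 (n k : ℕ) (hkn : k ≤ n) :
    ∃ c : ℕ → ℚ, ∀ M : ℝ → ℝ → ℝ, IsMean M → ∀ x : ℝ, 0 < x →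
      iteratedDeriv k (fun s => iteratedDeriv (n - k) (fun t => M s t) x) x =
      ∑ i ∈ Finset.range (n / 2 + 1),
        (c i : ℝ) *
          iteratedDeriv (n - 2 * i)
            (fun z => iteratedDeriv (2 * i) (fun s => M s z) z) x := by
  classical
  obtain ⟨c, hc⟩ := Stmt3Aux.polyCore' hkn
  refine ⟨c, ?_⟩
  intro M hM x hx
  have hF : Stmt3Aux.Sm (fun p : ℝ × ℝ => M p.1 p.2) := hM.1.of_le (by simp)
  set F : ℝ × ℝ → ℝ := fun p : ℝ × ℝ => M p.1 p.2 with hFdef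
  have hsymF : Set.EqOn F (fun q => F (Stmt3Aux.σL q)) Stmt3Aux.U2 :=
    fun q hq => hM.2.2.2 q.1 q.2 hq.1 hq.2
  set pf : ℕ → ℝ := fun a => Stmt3Aux.pdI Stmt3Aux.e1 a
    (Stmt3Aux.pdI Stmt3Aux.e2 (n-a) F) (x,x) with hpf
  have hL : iteratedDeriv k (fun s => iteratedDeriv (n - k) (fun t => M s t) x) x = pf k :=
    Stmt3Aux.keyLHS hF k (n-k) hx
  have hR : ∀ i, 2*i ≤ n →
      iteratedDeriv (n - 2*i) (fun z => iteratedDeriv (2*i) (fun s => M s z) z) x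
        = ∑ j ∈ Finset.range (n - 2*i + 1), ((n - 2*i).choose j : ℝ) * pf (2*i+j) := by
    intro i hi
    have h := Stmt3Aux.keyDiag hF (2*i) (n - 2*i) (x := x) hx
    refine h.trans ?_
    apply Finset.sum_congr rfl
    intro j hj
    have hjj := Finset.mem_range.1 hj
    have e : n - 2*i - j = n - (2*i + j) := Nat.sub_sub n (2*i) j
    show ((n - 2*i).choose j : ℝ) * Stmt3Aux.pdI Stmt3Aux.e1 (2*i+j)
        (Stmt3Aux.pdI Stmt3Aux.e2 (n - 2*i - j) F) (x,x)
      = ((n - 2*i).choose j : ℝ) * Stmt3Aux.pdI Stmt3Aux.e1 (2*i+j)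
        (Stmt3Aux.pdI Stmt3Aux.e2 (n - (2*i + j)) F) (x,x)
    rw [e]
  have hsym : ∀ a, a ≤ n → pf (n - a) = pf a := by
    intro a ha
    have h1 : n - (n - a) = a := by omega
    show Stmt3Aux.pdI Stmt3Aux.e1 (n-a) (Stmt3Aux.pdI Stmt3Aux.e2 (n-(n-a)) F) (x,x) = _
    rw [h1]
    exact Stmt3Aux.keySym hF hsymF (n-a) a hx
  set Lp : ℚ[X] → ℝ := fun ψ => ∑ a ∈ Finset.range (n+1), (ψ.coeff a : ℝ) * pf a with hLp
  have Lp_add : ∀ p q : ℚ[X], Lp (p + q) = Lp p + Lp q := by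
    intro p q
    simp only [hLp, Polynomial.coeff_add, Rat.cast_add, add_mul, Finset.sum_add_distrib]
  have Lp_smul : ∀ (q : ℚ) (p : ℚ[X]), Lp (q • p) = (q : ℝ) * Lp p := by
    intro q p
    simp only [hLp, Polynomial.coeff_smul, smul_eq_mul, Rat.cast_mul, Finset.mul_sum, mul_assoc]
  have Lp_sum : ∀ (s : Finset ℕ) (g : ℕ → ℚ[X]), Lp (∑ i ∈ s, g i) = ∑ i ∈ s, Lp (g i) := by
    intro s g
    induction s using Finset.cons_induction_on with
    | empty => simp [hLp]
    | cons _ _ hnotmem ih =>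
      rw [Finset.sum_cons, Finset.sum_cons, Lp_add, ih]
  have Lp_Xpow : ∀ u, u ≤ n → Lp ((X:ℚ[X])^u) = pf u := by
    intro u hu
    show (∑ a ∈ Finset.range (n+1), (((X:ℚ[X])^u).coeff a : ℝ) * pf a) = pf u
    rw [Finset.sum_eq_single u]
    · simp [Polynomial.coeff_X_pow]
    · intro b _ hbne
      simp [Polynomial.coeff_X_pow, hbne]
    · intro hnotin
      exact absurd (Finset.mem_range.2 (by omega)) hnotin
  have Lp_gen : ∀ i, 2*i ≤ n → Lp (Stmt3Aux.gen n i)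
      = 2 * ∑ j ∈ Finset.range (n - 2*i + 1), ((n - 2*i).choose j : ℝ) * pf (2*i+j) := by
    intro i hi
    have hsplit : Stmt3Aux.gen n i = (1+X)^(n-2*i) + (1+X)^(n-2*i) * X^(2*i) := by
      rw [Stmt3Aux.gen]; ring
    rw [hsplit, Lp_add]
    have parta : Lp ((1+X:ℚ[X])^(n-2*i))
        = ∑ j ∈ Finset.range (n - 2*i + 1), ((n - 2*i).choose j : ℝ) * pf (2*i+j) := by
      show (∑ a ∈ Finset.range (n+1), ((((1+X:ℚ[X])^(n-2*i)).coeff a : ℝ)) * pf a) = _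
      have hco : ∀ a, (((1+X:ℚ[X])^(n-2*i)).coeff a) = ((n-2*i).choose a : ℚ) := by
        intro a
        rw [Polynomial.coeff_one_add_X_pow]
      have step1 : (∑ a ∈ Finset.range (n+1), ((((1+X:ℚ[X])^(n-2*i)).coeff a : ℝ)) * pf a)
          = ∑ a ∈ Finset.range (n-2*i+1), (((n-2*i).choose a : ℝ)) * pf a := by
        rw [← Finset.sum_subset (Finset.range_subset_range.2 (by omega : n-2*i+1 ≤ n+1))]
        · apply Finset.sum_congr rfl
          intro a _
          rw [hco]
          norm_cast
        · intro a ha hnot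
          have h1 : n - 2*i < a := by
            have h2 := Finset.mem_range.1 ha
            have h3 : ¬ a < n - 2*i + 1 := fun hlt => hnot (Finset.mem_range.2 hlt)
            omega
          rw [hco, Nat.choose_eq_zero_of_lt h1]
          simp
      rw [step1]
      rw [← Finset.sum_range_reflect
        (fun j => (((n-2*i).choose j : ℝ)) * pf (2*i+j)) (n-2*i+1)]
      apply Finset.sum_congr rfl
      intro j hj
      have hj' : j ≤ n - 2*i := by
        have := Finset.mem_range.1 hj; omega
      have e1 : n - 2*i + 1 - 1 - j = n - 2*i - j := by omega
      rw [e1]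
      have e2 : (n-2*i).choose (n - 2*i - j) = (n-2*i).choose j := Nat.choose_symm hj'
      have e3 : 2*i + (n - 2*i - j) = n - j := by omega
      rw [e2, e3]
      congr 1
      exact (hsym j (by omega)).symm
    have partb : Lp ((1+X:ℚ[X])^(n-2*i) * X^(2*i))
        = ∑ j ∈ Finset.range (n - 2*i + 1), ((n - 2*i).choose j : ℝ) * pf (2*i+j) := by
      show (∑ a ∈ Finset.range (n+1),
          ((((1+X:ℚ[X])^(n-2*i) * X^(2*i)).coeff a : ℝ)) * pf a) = _
      have hco : ∀ a, (((1+X:ℚ[X])^(n-2*i) * X^(2*i)).coeff a)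
          = if 2*i ≤ a then (((n-2*i).choose (a - 2*i) : ℚ)) else 0 := by
        intro a
        rw [Polynomial.coeff_mul_X_pow']
        split_ifs with h
        · rw [Polynomial.coeff_one_add_X_pow]
        · rfl
      have step1 : (∑ a ∈ Finset.range (n+1),
            ((((1+X:ℚ[X])^(n-2*i) * X^(2*i)).coeff a : ℝ)) * pf a)
          = ∑ a ∈ Finset.Ico (2*i) (n+1), (((n-2*i).choose (a - 2*i) : ℝ)) * pf a := by
        rw [Finset.range_eq_Ico,
          ← Finset.sum_Ico_consecutive _ (Nat.zero_le (2*i)) (by omega : 2*i ≤ n+1)]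
        have hzero : ∑ a ∈ Finset.Ico 0 (2*i),
            ((((1+X:ℚ[X])^(n-2*i) * X^(2*i)).coeff a : ℝ)) * pf a = 0 := by
          apply Finset.sum_eq_zero
          intro a ha
          have ha' : a < 2*i := (Finset.mem_Ico.1 ha).2
          rw [hco, if_neg (by omega)]
          simp
        rw [hzero, zero_add]
        apply Finset.sum_congr rfl
        intro a ha
        have ha' : 2*i ≤ a := (Finset.mem_Ico.1 ha).1
        rw [hco, if_pos ha']
        norm_cast
      rw [step1, Finset.sum_Ico_eq_sum_range]
      have hlen : n + 1 - 2*i = n - 2*i + 1 := by omega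
      rw [hlen]
      apply Finset.sum_congr rfl
      intro j _
      have e1 : 2*i + j - 2*i = j := by omega
      rw [e1]
    rw [parta, partb]
    ring
  -- apply Lp to the polynomial identity
  have happ := congrArg Lp hc
  rw [Lp_add, Lp_sum, Lp_Xpow k hkn, Lp_Xpow (n-k) (by omega)] at happ
  have hnk : pf (n - k) = pf k := hsym k hkn
  rw [hnk] at happ
  have happ2 : (2:ℝ) * pf k = ∑ i ∈ Finset.range (n/2+1),
      (c i : ℝ) * (2 * ∑ j ∈ Finset.range (n - 2*i + 1),
        ((n - 2*i).choose j : ℝ) * pf (2*i+j)) := by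
    rw [two_mul, happ]
    apply Finset.sum_congr rfl
    intro i hi
    have hi' : 2*i ≤ n := by
      have := Finset.mem_range.1 hi; omega
    rw [Lp_smul, Lp_gen i hi']
  rw [hL]
  have hfinal : ∀ i ∈ Finset.range (n/2+1),
      (c i : ℝ) * iteratedDeriv (n - 2*i)
          (fun z => iteratedDeriv (2*i) (fun s => M s z) z) x
        = (c i : ℝ) * ∑ j ∈ Finset.range (n - 2*i + 1),
            ((n - 2*i).choose j : ℝ) * pf (2*i+j) := by
    intro i hi
    have hi' : 2*i ≤ n := by
      have := Finset.mem_range.1 hi; omega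
    rw [hR i hi']
  rw [Finset.sum_congr rfl hfinal]
  have h2 : (2:ℝ) ≠ 0 := two_ne_zero
  apply mul_left_cancel₀ h2
  rw [happ2, Finset.mul_sum]
  apply Finset.sum_congr rfl
  intro i _
  ring
end

section
/- For all real numbers x, y > 0 with 0 < |x − y| < 2π, the exponential mean satisfies log((e^x − e^y)/(x − y)) = (x+y)/2 + Σ_{n=1}^∞ (B_{2n} / ((2n)·(2n)!)) · (x − y)^{2n}, where the series on the right-hand side converges. -/
open Real Filter Topology


-- Euler product for sinh
lemma euler_sinh (t : ℝ) (ht : t ≠ 0) :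
    Tendsto (fun n : ℕ => ∏ j ∈ Finset.range n, (1 + t ^ 2 / ((j : ℝ) + 1) ^ 2 / π ^ 2))
      atTop (𝓝 (Real.sinh t / t)) := by
  have h := Complex.tendsto_euler_sin_prod (Complex.I * t / π)
  have hπ : (π : ℂ) ≠ 0 := by exact_mod_cast Real.pi_ne_zero
  have h1 : (π : ℂ) * (Complex.I * t / π) = t * Complex.I := by field_simp
  rw [h1, Complex.sin_mul_I] at h
  have h2 : ∀ n : ℕ, ∏ j ∈ Finset.range n, ((1 : ℂ) - (Complex.I * t / π) ^ 2 / ((j : ℂ) + 1) ^ 2)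
      = (((∏ j ∈ Finset.range n, (1 + t ^ 2 / ((j : ℝ) + 1) ^ 2 / π ^ 2)) : ℝ) : ℂ) := by
    intro n
    rw [Complex.ofReal_prod]
    refine Finset.prod_congr rfl fun j _ => ?_
    have hj : ((j : ℂ) + 1) ≠ 0 := by
      have : (0:ℝ) < (j:ℝ) + 1 := by positivity
      exact_mod_cast this.ne'
    push_cast
    field_simp
    ring_nf
    rw [Complex.I_sq]
    ring
  simp_rw [h2] at h
  -- now reduce to real
  have ht' : (t : ℂ) * Complex.I ≠ 0 := by
    simp [Complex.I_ne_zero, ht]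
  have h3 := h.div_const ((t : ℂ) * Complex.I)
  have heq : ∀ z : ℂ, (t:ℂ) * Complex.I * z / ((t:ℂ) * Complex.I) = z := by
    intro z; rw [mul_comm, mul_div_assoc, div_self ht', mul_one]
  simp_rw [heq] at h3
  have h4 : Complex.sinh t * Complex.I / (t * Complex.I) = ((Real.sinh t / t : ℝ) : ℂ) := by
    push_cast
    rw [mul_div_mul_right _ _ Complex.I_ne_zero]
  rw [h4] at h3
  exact Filter.tendsto_ofReal_iff.mp h3

lemma sinh_div_self_pos {t : ℝ} (ht : t ≠ 0) : 0 < Real.sinh t / t := by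
  rcases ht.lt_or_gt with h | h
  · have : Real.sinh t < 0 := by rwa [Real.sinh_neg_iff]
    exact div_pos_of_neg_of_neg this h
  · exact div_pos (by rwa [Real.sinh_pos_iff]) h

lemma log_sinh_hasSum (t : ℝ) (ht : t ≠ 0) :
    HasSum (fun n : ℕ => Real.log (1 + t ^ 2 / ((n : ℝ) + 1) ^ 2 / π ^ 2))
      (Real.log (Real.sinh t / t)) := by
  have hpos := sinh_div_self_pos ht
  have hterm : ∀ n : ℕ, (0:ℝ) < 1 + t ^ 2 / ((n : ℝ) + 1) ^ 2 / π ^ 2 := by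
    intro n; positivity
  have hsummable : Summable (fun n : ℕ => Real.log (1 + t ^ 2 / ((n : ℝ) + 1) ^ 2 / π ^ 2)) := by
    refine Summable.of_nonneg_of_le (fun n => Real.log_nonneg (by nlinarith [sq_nonneg t, sq_nonneg ((n:ℝ)+1), sq_nonneg π, pow_pos (by positivity : (0:ℝ) < (n:ℝ)+1) 2, pow_pos Real.pi_pos 2, div_nonneg (div_nonneg (sq_nonneg t) (sq_nonneg ((n:ℝ)+1))) (sq_nonneg π)])) (fun n => ?_)
      (Summable.mul_left (t ^ 2 / π ^ 2) ((summable_nat_add_iff 1).2 (Real.summable_one_div_nat_pow.2 one_lt_two)))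
    have := Real.log_le_sub_one_of_pos (hterm n)
    calc Real.log (1 + t ^ 2 / ((n : ℝ) + 1) ^ 2 / π ^ 2) ≤ t ^ 2 / ((n : ℝ) + 1) ^ 2 / π ^ 2 := by linarith
    _ = t ^ 2 / π ^ 2 * (1 / ((n:ℝ)+1) ^ 2) := by ring
    _ = t ^ 2 / π ^ 2 * (1 / ((n + 1 : ℕ):ℝ) ^ 2) := by push_cast; ring
  have h1 := hsummable.hasSum
  have h2 := h1.tendsto_sum_nat
  have h3 : ∀ n : ℕ, ∑ j ∈ Finset.range n, Real.log (1 + t ^ 2 / ((j : ℝ) + 1) ^ 2 / π ^ 2)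
      = Real.log (∏ j ∈ Finset.range n, (1 + t ^ 2 / ((j : ℝ) + 1) ^ 2 / π ^ 2)) := by
    intro n
    rw [Real.log_prod (fun j _ => (hterm j).ne')]
  rw [funext h3] at h2
  have h4 : Tendsto (fun n : ℕ => Real.log (∏ j ∈ Finset.range n, (1 + t ^ 2 / ((j : ℝ) + 1) ^ 2 / π ^ 2)))
      atTop (𝓝 (Real.log (Real.sinh t / t))) :=
    ((Real.continuousAt_log hpos.ne').tendsto).comp (euler_sinh t ht)
  rwa [tendsto_nhds_unique h2 h4] at h1

lemma bernoulli_log_sinh (t : ℝ) (ht0 : t ≠ 0) (hlt : |t| < π) :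
    HasSum (fun k : ℕ =>
        ((bernoulli (2 * (k + 1)) : ℚ) : ℝ) /
            ((2 * (k + 1) : ℝ) * ((2 * (k + 1)).factorial : ℝ)) * (2 * t) ^ (2 * (k + 1)))
      (Real.log (Real.sinh t / t)) := by
  set u : ℕ → ℝ := fun n => t ^ 2 / ((n : ℝ) + 1) ^ 2 / π ^ 2 with hu
  set c : ℝ := t ^ 2 / π ^ 2 with hc
  have hπ := Real.pi_pos
  have hc0 : 0 < c := by positivity
  have hc1 : c < 1 := by
    rw [hc, div_lt_one (by positivity)]
    nlinarith [sq_abs t, abs_nonneg t, hlt, hπ]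
  have hun : ∀ n : ℕ, u n = c * (1 / ((n : ℝ) + 1) ^ 2) := by
    intro n; rw [hu, hc]; ring
  have hu0 : ∀ n, 0 ≤ u n := by intro n; rw [hu]; positivity
  have huc : ∀ n, u n ≤ c := by
    intro n
    rw [hun n]
    have h1 : 1 / ((n : ℝ) + 1) ^ 2 ≤ 1 := by
      rw [div_le_one (by positivity)]
      nlinarith [Nat.cast_nonneg (α := ℝ) n]
    exact mul_le_of_le_one_right hc0.le h1
  have hu1 : ∀ n, u n < 1 := fun n => lt_of_le_of_lt (huc n) hc1
  set g : ℕ × ℕ → ℝ := fun p => -((-(u p.2)) ^ (p.1 + 1) / ((p.1 : ℝ) + 1)) with hg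
  have husum : Summable u := by
    have h1 : Summable (fun n : ℕ => c * (1 / (((n + 1) : ℕ) : ℝ) ^ 2)) :=
      ((summable_nat_add_iff 1).2 (Real.summable_one_div_nat_pow.2 one_lt_two)).mul_left c
    refine h1.congr fun n => ?_
    rw [hun n]; push_cast; ring
  -- summability of g
  have hgsum : Summable g := by
    apply Summable.of_norm
    have hbound : Summable (fun p : ℕ × ℕ => c ^ p.1 * u p.2) :=
      Summable.mul_of_nonneg (summable_geometric_of_lt_one hc0.le hc1) husum
        (fun k => by positivity) hu0
    refine Summable.of_nonneg_of_le (fun p => norm_nonneg _) (fun p => ?_) hbound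
    rw [hg]
    simp only [norm_neg, norm_div, norm_pow, Real.norm_eq_abs, abs_neg,
      abs_of_nonneg (hu0 p.2)]
    have h1 : |((p.1 : ℝ) + 1)| = (p.1 : ℝ) + 1 := abs_of_pos (by positivity)
    rw [h1]
    calc u p.2 ^ (p.1 + 1) / ((p.1 : ℝ) + 1) ≤ u p.2 ^ (p.1 + 1) :=
          div_le_self (by positivity) (by exact_mod_cast Nat.succ_le_succ (Nat.zero_le p.1))
    _ = u p.2 ^ p.1 * u p.2 := pow_succ _ _
    _ ≤ c ^ p.1 * u p.2 :=
          mul_le_mul_of_nonneg_right (pow_le_pow_left₀ (hu0 _) (huc _) _) (hu0 _)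
  -- row sums (fixed n, sum over k): log (1 + u n)
  have hrow : ∀ n : ℕ, HasSum (fun k => g (k, n)) (Real.log (1 + u n)) := by
    intro n
    have habs : |(-(u n))| < 1 := by rw [abs_neg, abs_of_nonneg (hu0 n)]; exact hu1 n
    have := (hasSum_pow_div_log_of_abs_lt_one habs).neg
    simpa [hg, sub_neg_eq_add] using this
  -- column sums (fixed k, sum over n): Bernoulli term
  have hcol : ∀ k : ℕ, HasSum (fun n => g (k, n))
      (((bernoulli (2 * (k + 1)) : ℚ) : ℝ) /
        ((2 * (k + 1) : ℝ) * ((2 * (k + 1)).factorial : ℝ)) * (2 * t) ^ (2 * (k + 1))) := by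
    intro k
    have hz := hasSum_zeta_nat (k := k + 1) (Nat.succ_ne_zero k)
    set Z : ℝ := (-1 : ℝ) ^ (k + 1 + 1) * (2 : ℝ) ^ (2 * (k + 1) - 1) * π ^ (2 * (k + 1)) *
        ((bernoulli (2 * (k + 1)) : ℚ) : ℝ) / (2 * (k + 1)).factorial with hZ
    have hz' : HasSum (fun n : ℕ => 1 / ((n : ℝ) + 1) ^ (2 * (k + 1))) Z := by
      have h0 : (fun n : ℕ => 1 / ((n : ℝ) + 1) ^ (2 * (k + 1)))
          = fun n : ℕ => 1 / (((n + 1 : ℕ) : ℝ)) ^ (2 * (k + 1)) := by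
        funext n; push_cast; ring
      rw [h0]
      refine (hasSum_nat_add_iff (f := fun n : ℕ => 1 / (n : ℝ) ^ (2 * (k + 1))) (g := Z) 1).2 ?_
      simpa using hz
    set C : ℝ := (-1 : ℝ) ^ k * c ^ (k + 1) / ((k : ℝ) + 1) with hC
    have h2 := hz'.mul_left C
    have hfun : (fun n : ℕ => C * (1 / ((n : ℝ) + 1) ^ (2 * (k + 1)))) = fun n => g (k, n) := by
      funext n
      simp only [hg, hC, hun n]
      rw [pow_mul]
      generalize ((n : ℝ) + 1) ^ 2 = X
      rw [neg_pow (c * (1 / X)) (k + 1), pow_succ (-1 : ℝ) k]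
      ring
    rw [hfun] at h2
    convert h2 using 1
    · rfl
    -- algebra: bernoulli term = C * Z
    have h2k : 2 * (k + 1) - 1 = 2 * k + 1 := by omega
    have hfac : ((2 * (k + 1)).factorial : ℝ) ≠ 0 := by positivity
    have hk1 : ((k : ℝ) + 1) ≠ 0 := by positivity
    have hneg : (-1 : ℝ) ^ k * (-1 : ℝ) ^ (k + 1 + 1) = 1 := by
      rw [← pow_add]
      exact Even.neg_one_pow ⟨k + 1, by ring⟩
    have ht2 : c ^ (k + 1) * π ^ (2 * (k + 1)) = t ^ (2 * (k + 1)) := by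
      rw [hc, div_pow, ← pow_mul, ← pow_mul, div_mul_cancel₀, mul_comm 2 (k+1)]
      positivity
    have h2t : (2 * t) ^ (2 * (k + 1)) = 2 ^ (2 * (k + 1)) * t ^ (2 * (k + 1)) := mul_pow _ _ _
    have h2pow : (2 : ℝ) ^ (2 * (k + 1)) = 2 * 2 ^ (2 * k + 1) := by
      rw [show 2 * (k + 1) = (2 * k + 1) + 1 by omega, pow_succ]; ring
    have key : C * Z
        = (c ^ (k + 1) * π ^ (2 * (k + 1))) * ((-1 : ℝ) ^ k * (-1 : ℝ) ^ (k + 1 + 1)) *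
          (2 : ℝ) ^ (2 * k + 1) * ((bernoulli (2 * (k + 1)) : ℚ) : ℝ) /
          ((k : ℝ) + 1) / ((2 * (k + 1)).factorial : ℝ) := by
      rw [hC, hZ, h2k]; ring
    rw [key, ht2, hneg, h2t, h2pow, div_div]
    have hfacpos : (0:ℝ) < ((2 * (k + 1)).factorial : ℝ) := by positivity
    have hkpos : (0:ℝ) < (k : ℝ) + 1 := by positivity
    rw [div_mul_eq_mul_div, div_eq_div_iff (by positivity) (by positivity)]
    ring
  -- assemble
  have hT := hgsum.hasSum
  have hA := hT.prod_fiberwise hcol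
  have hswap : HasSum (g ∘ (Equiv.prodComm ℕ ℕ)) (∑' p, g p) :=
    ((Equiv.prodComm ℕ ℕ).hasSum_iff).2 hT
  have hB := hswap.prod_fiberwise (fun n => by simpa using hrow n)
  have hls := log_sinh_hasSum t ht0
  have hval : (∑' p, g p) = Real.log (Real.sinh t / t) := by
    refine hB.unique ?_
    simpa [hu] using hls
  rwa [hval] at hA

/-- Expansion of the exponential mean near the first bisector, in terms of
Bernoulli numbers. -/
theorem stmt4 (x y : ℝ) (hx : 0 < x) (hy : 0 < y)
    (hne : 0 < |x - y|) (hlt : |x - y| < 2 * Real.pi) :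
    HasSum (fun n : ℕ =>
        ((bernoulli (2 * (n + 1)) : ℚ) : ℝ) /
            ((2 * (n + 1) : ℝ) * ((2 * (n + 1)).factorial : ℝ)) *
          (x - y) ^ (2 * (n + 1)))
      (Real.log ((Real.exp x - Real.exp y) / (x - y)) - (x + y) / 2) := by
  set t : ℝ := (x - y) / 2 with hT
  have ht0 : t ≠ 0 := by
    rw [hT]
    intro h
    rw [div_eq_zero_iff] at h
    rcases h with h | h
    · rw [h] at hne; simp at hne
    · norm_num at h
  have hltt : |t| < π := by
    rw [hT, abs_div]
    rw [abs_of_pos (by norm_num : (0:ℝ) < 2)] 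
    linarith [hlt]
  have h2t : 2 * t = x - y := by rw [hT]; ring
  have hlog : Real.log ((Real.exp x - Real.exp y) / (x - y)) - (x + y) / 2
      = Real.log (Real.sinh t / t) := by
    have hexp : (Real.exp x - Real.exp y) / (x - y)
        = Real.exp ((x + y) / 2) * (Real.sinh t / t) := by
      have e1 : Real.exp x = Real.exp ((x + y) / 2) * Real.exp t := by
        rw [← Real.exp_add]; congr 1; rw [hT]; ring
      have e2 : Real.exp y = Real.exp ((x + y) / 2) * Real.exp (-t) := by
        rw [← Real.exp_add]; congr 1; rw [hT]; ring
      rw [Real.sinh_eq, e1, e2, ← h2t]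
      field_simp
    rw [hexp, Real.log_mul (Real.exp_ne_zero _) (sinh_div_self_pos ht0).ne',
      Real.log_exp]
    ring
  rw [hlog, ← h2t]
  exact bernoulli_log_sinh t ht0 hltt
end

section
/- Let M be a mean with characteristic function Q_M. (1) If M is homogeneous, i.e. M(λx, λy) = λ M(x,y) for all λ,x,y > 0, then there exists a constant c ∈ ℝ such that Q_M(x) = c/x for all x > 0. (2) If M is additively homogeneous, i.e. M(x+λ, y+λ) = M(x,y) + λ for all λ,x,y > 0, then Q_M is constant on (0,∞). -/
open Real Set MeasureTheory

private lemma it2 (f : ℝ → ℝ) : iteratedDeriv 2 f = deriv (deriv f) := by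
  rw [show (2:ℕ) = 1+1 from rfl, iteratedDeriv_succ, iteratedDeriv_one]

private lemma it2_add_const (f : ℝ → ℝ) (c : ℝ) (x : ℝ) :
    iteratedDeriv 2 (fun t => f t + c) x = iteratedDeriv 2 f x := by
  rw [it2, it2, deriv_add_const']

/-- (1) A homogeneous mean has characteristic function of the form c/x.
(2) An additively homogeneous mean has constant characteristic function. -/
theorem stmt5 (M : ℝ → ℝ → ℝ) (hM : IsMean M) :
    ((∀ l x y : ℝ, 0 < l → 0 < x → 0 < y → M (l * x) (l * y) = l * M x y) →
      ∃ c : ℝ, ∀ x : ℝ, 0 < x → charFun M x = c / x) ∧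
    ((∀ l x y : ℝ, 0 < l → 0 < x → 0 < y → M (x + l) (y + l) = M x y + l) →
      ∃ c : ℝ, ∀ x : ℝ, 0 < x → charFun M x = c) := by
  constructor
  · intro hHom
    -- g is the slice at y = 1
    set g : ℝ → ℝ := fun s => M s 1 with hgdef
    have hg : ContDiffOn ℝ (⊤ : ℕ∞) g (Ioi 0) := by
      have h1 : ContDiff ℝ (⊤ : ℕ∞) (fun s : ℝ => (s, (1:ℝ))) := contDiff_id.prodMk contDiff_const
      exact hM.1.comp h1.contDiffOn (fun s hs => ⟨hs, one_pos⟩)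
    have hg' : ContDiffOn ℝ (⊤ : ℕ∞) (deriv g) (Ioi 0) :=
      hg.deriv_of_isOpen isOpen_Ioi (by simp)
    have hgd : ∀ s : ℝ, 0 < s → DifferentiableAt ℝ g s := fun s hs =>
      (hg.contDiffAt (isOpen_Ioi.mem_nhds hs)).differentiableAt (by simp)
    have hgd' : ∀ s : ℝ, 0 < s → DifferentiableAt ℝ (deriv g) s := fun s hs =>
      (hg'.contDiffAt (isOpen_Ioi.mem_nhds hs)).differentiableAt (by simp)
    refine ⟨deriv (deriv g) 1, fun x hx => ?_⟩
    have hx0 : x ≠ 0 := ne_of_gt hx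
    -- eventual equality with the scaled slice
    have hev : (fun s => M s x) =ᶠ[nhds x] (fun s => x * g (s / x)) := by
      filter_upwards [isOpen_Ioi.mem_nhds (show x ∈ Ioi (0:ℝ) from hx)] with s hs
      have := hHom x (s / x) 1 hx (div_pos hs hx) one_pos
      rw [mul_one, mul_div_cancel₀ _ hx0] at this
      simpa [hgdef] using this
    -- first derivative of the scaled slice on Ioi 0
    have hderiv : ∀ s : ℝ, 0 < s → deriv (fun s => x * g (s / x)) s = deriv g (s / x) := by
      intro s hs
      have h1 : HasDerivAt g (deriv g (s / x)) (s / x) :=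
        (hgd _ (div_pos hs hx)).hasDerivAt
      have h2 : HasDerivAt (fun y : ℝ => y / x) (1 / x) s := (hasDerivAt_id s).div_const x
      have h3 : HasDerivAt (fun s => x * g (s / x)) (x * (deriv g (s / x) * (1 / x))) s :=
        (h1.comp (h := fun y : ℝ => y / x) s h2).const_mul x
      have : x * (deriv g (s / x) * (1 / x)) = deriv g (s / x) := by
        field_simp
      rw [← this]
      exact h3.deriv
    have hev2 : deriv (fun s => M s x) =ᶠ[nhds x] (fun s => deriv g (s / x)) := by
      have := hev.deriv
      refine this.trans ?_
      filter_upwards [isOpen_Ioi.mem_nhds (show x ∈ Ioi (0:ℝ) from hx)] with s hs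
      exact hderiv s hs
    have hsecond : deriv (fun s => deriv g (s / x)) x = deriv (deriv g) 1 * (1 / x) := by
      have h1 : HasDerivAt (deriv g) (deriv (deriv g) (x / x)) (x / x) :=
        (hgd' _ (by positivity)).hasDerivAt
      have h2 : HasDerivAt (fun y : ℝ => y / x) (1 / x) x := (hasDerivAt_id x).div_const x
      have h3 := h1.comp (h := fun y : ℝ => y / x) x h2
      rw [div_self hx0] at h3
      exact h3.deriv
    calc charFun M x = deriv (deriv (fun s => M s x)) x := by rw [_root_.charFun, it2]
      _ = deriv (fun s => deriv g (s / x)) x := hev2.deriv_eq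
      _ = deriv (deriv g) 1 * (1 / x) := hsecond
      _ = deriv (deriv g) 1 / x := by ring
  · intro hAdd
    -- key: Q(y) = Q(x) whenever 0 < x < y
    have key : ∀ x y : ℝ, 0 < x → x < y → charFun M y = charFun M x := by
      intro x y hx hxy
      set l : ℝ := y - x with hl
      have hl0 : 0 < l := by simp [hl]; linarith
      have hev : (fun s => M s y) =ᶠ[nhds y] (fun s => M (s + -l) x + l) := by
        filter_upwards [isOpen_Ioi.mem_nhds (show y ∈ Ioi l by simp [hl]; linarith)] with s hs
        have := hAdd l (s - l) x hl0 (by simp only [mem_Ioi] at hs; linarith) hx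
        have e1 : s - l + l = s := by ring
        have e2 : x + l = y := by simp [hl]
        rw [e1, e2] at this
        simpa [sub_eq_add_neg] using this
      have h1 : charFun M y = iteratedDeriv 2 (fun s => M (s + -l) x + l) y :=
        hev.iteratedDeriv_eq 2
      rw [h1, iteratedDeriv_comp_add_const 2 (fun t => M t x + l) (-l)]
      have : y + -l = x := by simp [hl]
      beta_reduce
      rw [this, it2_add_const]
      rfl
    refine ⟨charFun M 1, fun x hx => ?_⟩
    rcases lt_trichotomy x 1 with h | h | h
    · exact (key x 1 hx h).symm
    · rw [h]
    · exact key 1 x one_pos h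
end

section
/- Let M₀, M₁, M₂ be means and define M(x,y) := M₀(M₁(x,y), M₂(x,y)) for x,y > 0. Then M is a mean and its characteristic function satisfies Q_M(x) = (Q_{M₁}(x) + Q_{M₂}(x))/2 for all x > 0; in particular Q_M does not depend on M₀. -/
open Real Set MeasureTheory

lemma isOpen_U : IsOpen {p : ℝ × ℝ | 0 < p.1 ∧ 0 < p.2} := by
  have : {p : ℝ × ℝ | 0 < p.1 ∧ 0 < p.2} = {p : ℝ × ℝ | 0 < p.1} ∩ {p : ℝ × ℝ | 0 < p.2} := rfl
  rw [this]
  exact (isOpen_lt continuous_const continuous_fst).inter (isOpen_lt continuous_const continuous_snd)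

lemma mean_diag {M : ℝ → ℝ → ℝ} (h : IsMean M) {x : ℝ} (hx : 0 < x) : M x x = x := by
  have := h.2.2.1 x x hx hx
  simp only [min_self, max_self] at this
  linarith [this.1, this.2]

lemma mean_contDiffAt {M : ℝ → ℝ → ℝ} (h : IsMean M) {p : ℝ × ℝ} (hp : 0 < p.1 ∧ 0 < p.2) :
    ContDiffAt ℝ (⊤ : ℕ∞) (fun p : ℝ × ℝ => M p.1 p.2) p :=
  h.1.contDiffAt (isOpen_U.mem_nhds hp)

lemma hasDerivAt_line (c x : ℝ) : HasDerivAt (fun s : ℝ => (s, c)) ((1 : ℝ), (0 : ℝ)) x :=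
  (hasDerivAt_id x).prodMk (hasDerivAt_const x c)

lemma hasDerivAt_line2 (c x : ℝ) : HasDerivAt (fun s : ℝ => (c, s)) ((0 : ℝ), (1 : ℝ)) x :=
  (hasDerivAt_const x c).prodMk (hasDerivAt_id x)

lemma hasDerivAt_diagline (x : ℝ) : HasDerivAt (fun s : ℝ => (s, s)) ((1 : ℝ), (1 : ℝ)) x :=
  (hasDerivAt_id x).prodMk (hasDerivAt_id x)

lemma mean_fderiv_fst {M : ℝ → ℝ → ℝ} (h : IsMean M) {x : ℝ} (hx : 0 < x) :
    fderiv ℝ (fun p : ℝ × ℝ => M p.1 p.2) (x, x) (1, 0) = 1 / 2 := by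
  set F := fun p : ℝ × ℝ => M p.1 p.2 with hF
  have hdiff : DifferentiableAt ℝ F (x, x) :=
    (mean_contDiffAt h ⟨hx, hx⟩).differentiableAt (by simp)
  set L := fderiv ℝ F (x, x) with hL
  have hfd : HasFDerivAt F L (x, x) := hdiff.hasFDerivAt
  -- partial derivatives as HasDerivAt
  have h1 : HasDerivAt (fun s => M s x) (L (1, 0)) x := by
    have := hfd.comp_hasDerivAt_of_eq x (hasDerivAt_line x x) rfl; exact this
  have h2 : HasDerivAt (fun s => M x s) (L (0, 1)) x := by
    have := hfd.comp_hasDerivAt_of_eq x (hasDerivAt_line2 x x) rfl; exact this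
  -- diagonal
  have hdiag : HasDerivAt (fun s => M s s) (L (1, 1)) x := by
    have := hfd.comp_hasDerivAt_of_eq x (hasDerivAt_diagline x) rfl; exact this
  have hxev : ∀ᶠ s in nhds x, (0 : ℝ) < s := eventually_gt_nhds hx
  have hdiag' : HasDerivAt (fun s : ℝ => s) (L (1, 1)) x := by
    refine hdiag.congr_of_eventuallyEq ?_
    filter_upwards [hxev] with s hs
    exact (mean_diag h hs).symm
  have hsum : L (1, 1) = 1 := hdiag'.unique (hasDerivAt_id x)
  have h1' : HasDerivAt (fun s => M x s) (L (1, 0)) x := by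
    refine h1.congr_of_eventuallyEq ?_
    filter_upwards [hxev] with s hs
    exact (h.2.2.2 s x hs hx).symm
  have heq : L (1, 0) = L (0, 1) := h1'.unique h2
  have hadd : L (1, 1) = L (1, 0) + L (0, 1) := by
    have : ((1 : ℝ), (1 : ℝ)) = ((1 : ℝ), (0 : ℝ)) + ((0 : ℝ), (1 : ℝ)) := by simp
    rw [this, map_add]
  rw [hadd, ← heq] at hsum
  linarith

lemma mean_fderiv_snd {M : ℝ → ℝ → ℝ} (h : IsMean M) {x : ℝ} (hx : 0 < x) :
    fderiv ℝ (fun p : ℝ × ℝ => M p.1 p.2) (x, x) (0, 1) = 1 / 2 := by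
  set F := fun p : ℝ × ℝ => M p.1 p.2 with hF
  have hdiff : DifferentiableAt ℝ F (x, x) :=
    (mean_contDiffAt h ⟨hx, hx⟩).differentiableAt (by simp)
  have hfd : HasFDerivAt F (fderiv ℝ F (x, x)) (x, x) := hdiff.hasFDerivAt
  have h1 : HasDerivAt (fun s => M s x) (fderiv ℝ F (x, x) (1, 0)) x := by
    have := hfd.comp_hasDerivAt_of_eq x (hasDerivAt_line x x) rfl; exact this
  have h2 : HasDerivAt (fun s => M x s) (fderiv ℝ F (x, x) (0, 1)) x := by
    have := hfd.comp_hasDerivAt_of_eq x (hasDerivAt_line2 x x) rfl; exact this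
  have h1' : HasDerivAt (fun s => M x s) (fderiv ℝ F (x, x) (1, 0)) x := by
    refine h1.congr_of_eventuallyEq ?_
    filter_upwards [eventually_gt_nhds hx] with s hs
    exact (h.2.2.2 s x hs hx).symm
  rw [← h1'.unique h2]
  exact mean_fderiv_fst h hx

lemma mean_hasDerivAt_fst {M : ℝ → ℝ → ℝ} (h : IsMean M) {x : ℝ} (hx : 0 < x) :
    HasDerivAt (fun s => M s x) (1 / 2) x := by
  have hdiff : DifferentiableAt ℝ (fun p : ℝ × ℝ => M p.1 p.2) (x, x) :=
    (mean_contDiffAt h ⟨hx, hx⟩).differentiableAt (by simp)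
  have h1 : HasDerivAt (fun s => M s x) (fderiv ℝ (fun p : ℝ × ℝ => M p.1 p.2) (x, x) (1, 0)) x := by
    have := hdiff.hasFDerivAt.comp_hasDerivAt_of_eq x (hasDerivAt_line x x) rfl; exact this
  rwa [mean_fderiv_fst h hx] at h1

-- the second derivative along the diagonal vanishes
lemma mean_second_diag {M₀ : ℝ → ℝ → ℝ} (h0 : IsMean M₀) {x : ℝ} (hx : 0 < x) :
    fderiv ℝ (fderiv ℝ (fun p : ℝ × ℝ => M₀ p.1 p.2)) (x, x) (1, 1) (1, 1) = 0 := by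
  set F₀ := fun p : ℝ × ℝ => M₀ p.1 p.2 with hF₀
  have hderiv_g : ∀ s : ℝ, 0 < s →
      HasDerivAt (fun t => F₀ (t, t)) (fderiv ℝ F₀ (s, s) (1, 1)) s := by
    intro s hs
    have hd : DifferentiableAt ℝ F₀ (s, s) :=
      (mean_contDiffAt h0 ⟨hs, hs⟩).differentiableAt (by simp)
    have := hd.hasFDerivAt.comp_hasDerivAt_of_eq s (hasDerivAt_diagline s) rfl
    exact this
  have hpos : ∀ᶠ s in nhds x, (0 : ℝ) < s := eventually_gt_nhds hx
  -- the function s ↦ fderiv F₀ (s,s) (1,1) is eventually constant 1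
  have hev : (fun s => fderiv ℝ F₀ (s, s) ((1 : ℝ), (1 : ℝ))) =ᶠ[nhds x] fun _ => (1 : ℝ) := by
    filter_upwards [hpos] with s hs
    have hid : HasDerivAt (fun t : ℝ => F₀ (t, t)) 1 s := by
      have h1 : HasDerivAt (fun t : ℝ => t) (1 : ℝ) s := hasDerivAt_id s
      refine h1.congr_of_eventuallyEq ?_
      filter_upwards [eventually_gt_nhds hs] with t ht
      exact mean_diag h0 ht
    exact (hderiv_g s hs).unique hid
  -- so its derivative at x is 0
  have hzero : deriv (fun s => fderiv ℝ F₀ (s, s) ((1 : ℝ), (1 : ℝ))) x = 0 := by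
    rw [hev.deriv_eq]; exact deriv_const x 1
  -- on the other hand, compute it by the chain rule
  have hF₀2 : DifferentiableAt ℝ (fderiv ℝ F₀) (x, x) :=
    ((mean_contDiffAt h0 ⟨hx, hx⟩).fderiv_right (m := 1) (WithTop.coe_le_coe.mpr le_top)).differentiableAt (by simp)
  have hc : HasDerivAt (fun s : ℝ => fderiv ℝ F₀ (s, s))
      (fderiv ℝ (fderiv ℝ F₀) (x, x) (1, 1)) x := by
    have := hF₀2.hasFDerivAt.comp_hasDerivAt_of_eq x (hasDerivAt_diagline x) rfl
    exact this
  have hu : HasDerivAt (fun _ : ℝ => ((1 : ℝ), (1 : ℝ))) (0 : ℝ × ℝ) x :=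
    hasDerivAt_const x _
  have hmain := hc.clm_apply hu
  have := hmain.deriv
  rw [hzero] at this
  simpa using this.symm

lemma mean_slice_contDiffAt {M : ℝ → ℝ → ℝ} (h : IsMean M) {x s : ℝ} (hx : 0 < x) (hs : 0 < s) :
    ContDiffAt ℝ (⊤ : ℕ∞) (fun t => M t x) s :=
  (mean_contDiffAt h (p := (s, x)) ⟨hs, hx⟩).comp s (contDiffAt_id.prodMk contDiffAt_const)

lemma charFun_eq (M : ℝ → ℝ → ℝ) (x : ℝ) :
    charFun M x = deriv (deriv (fun s => M s x)) x := by
  rw [_root_.charFun, show (2 : ℕ) = 1 + 1 from rfl, iteratedDeriv_succ, iteratedDeriv_one]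

/-- If M = M₀(M₁, M₂) then M is a mean and Q_M = (Q_{M₁} + Q_{M₂})/2,
independently of M₀. -/
theorem stmt6 (M₀ M₁ M₂ : ℝ → ℝ → ℝ)
    (h0 : IsMean M₀) (h1 : IsMean M₁) (h2 : IsMean M₂) :
    IsMean (fun x y => M₀ (M₁ x y) (M₂ x y)) ∧
    ∀ x : ℝ, 0 < x →
      charFun (fun x y => M₀ (M₁ x y) (M₂ x y)) x =
        (charFun M₁ x + charFun M₂ x) / 2 := by
  constructor
  · refine ⟨?_, ?_, ?_, ?_⟩
    · have hmap : MapsTo (fun p : ℝ × ℝ => (M₁ p.1 p.2, M₂ p.1 p.2))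
          {p : ℝ × ℝ | 0 < p.1 ∧ 0 < p.2} {p : ℝ × ℝ | 0 < p.1 ∧ 0 < p.2} :=
        fun p hp => ⟨h1.2.1 _ _ hp.1 hp.2, h2.2.1 _ _ hp.1 hp.2⟩
      exact h0.1.comp ((h1.1).prodMk (h2.1)) hmap
    · intro x y hx hy
      exact h0.2.1 _ _ (h1.2.1 x y hx hy) (h2.2.1 x y hx hy)
    · intro x y hx hy
      have p1 := h1.2.1 x y hx hy
      have p2 := h2.2.1 x y hx hy
      have i0 := h0.2.2.1 _ _ p1 p2
      have i1 := h1.2.2.1 x y hx hy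
      have i2 := h2.2.2.1 x y hx hy
      constructor
      · exact le_trans (le_min i1.1 i2.1) (le_trans (min_le_min le_rfl le_rfl) i0.1)
      · exact le_trans i0.2 (max_le i1.2 i2.2)
    · intro x y hx hy
      simp only [h1.2.2.2 x y hx hy, h2.2.2.2 x y hx hy]
  · intro x hx
    set F₀ := fun p : ℝ × ℝ => M₀ p.1 p.2 with hF₀def
    set m₁ := fun s => M₁ s x with hm₁def
    set m₂ := fun s => M₂ s x with hm₂def
    set γ := fun s => (m₁ s, m₂ s) with hγdef
    have hpos : ∀ᶠ s in nhds x, (0 : ℝ) < s := eventually_gt_nhds hx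
    have hm₁d : ∀ s : ℝ, 0 < s → DifferentiableAt ℝ m₁ s := fun s hs =>
      (mean_slice_contDiffAt h1 hx hs).differentiableAt (by simp)
    have hm₂d : ∀ s : ℝ, 0 < s → DifferentiableAt ℝ m₂ s := fun s hs =>
      (mean_slice_contDiffAt h2 hx hs).differentiableAt (by simp)
    have hγd : ∀ s : ℝ, 0 < s → HasDerivAt γ (deriv m₁ s, deriv m₂ s) s := fun s hs =>
      ((hm₁d s hs).hasDerivAt).prodMk ((hm₂d s hs).hasDerivAt)
    have hγpos : ∀ s : ℝ, 0 < s → 0 < (γ s).1 ∧ 0 < (γ s).2 := fun s hs =>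
      ⟨h1.2.1 s x hs hx, h2.2.1 s x hs hx⟩
    have hγx : γ x = (x, x) := by
      simp only [hγdef, hm₁def, hm₂def]
      exact Prod.ext (mean_diag h1 hx) (mean_diag h2 hx)
    -- step A: formula for the first derivative of the composition
    have hA : ∀ s : ℝ, 0 < s →
        HasDerivAt (fun t => M₀ (M₁ t x) (M₂ t x))
          (fderiv ℝ F₀ (γ s) (deriv m₁ s, deriv m₂ s)) s := by
      intro s hs
      have hd : DifferentiableAt ℝ F₀ (γ s) :=
        (mean_contDiffAt h0 (hγpos s hs)).differentiableAt (by simp)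
      have := hd.hasFDerivAt.comp_hasDerivAt_of_eq s (hγd s hs) rfl
      exact this
    have hev : deriv (fun t => M₀ (M₁ t x) (M₂ t x)) =ᶠ[nhds x]
        fun s => fderiv ℝ F₀ (γ s) (deriv m₁ s, deriv m₂ s) := by
      filter_upwards [hpos] with s hs
      exact (hA s hs).deriv
    -- step B: derivative of the derivative at x via the chain rule
    have hdm₁ : DifferentiableAt ℝ (deriv m₁) x := by
      have hf : DifferentiableAt ℝ (fderiv ℝ m₁) x :=
        ((mean_slice_contDiffAt h1 hx hx).fderiv_right (m := 1) (WithTop.coe_le_coe.mpr le_top)).differentiableAt (by simp)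
      have := hf.clm_apply (differentiableAt_const (1 : ℝ))
      exact this
    have hdm₂ : DifferentiableAt ℝ (deriv m₂) x := by
      have hf : DifferentiableAt ℝ (fderiv ℝ m₂) x :=
        ((mean_slice_contDiffAt h2 hx hx).fderiv_right (m := 1) (WithTop.coe_le_coe.mpr le_top)).differentiableAt (by simp)
      have := hf.clm_apply (differentiableAt_const (1 : ℝ))
      exact this
    have hF₀2 : DifferentiableAt ℝ (fderiv ℝ F₀) (x, x) :=
      ((mean_contDiffAt h0 (p := (x, x)) ⟨hx, hx⟩).fderiv_right (m := 1) (WithTop.coe_le_coe.mpr le_top)).differentiableAt (by simp)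
    have hc : HasDerivAt (fun s => fderiv ℝ F₀ (γ s))
        (fderiv ℝ (fderiv ℝ F₀) (x, x) (deriv m₁ x, deriv m₂ x)) x := by
      have := hF₀2.hasFDerivAt.comp_hasDerivAt_of_eq x (hγd x hx) hγx.symm
      exact this
    have hu : HasDerivAt (fun s => (deriv m₁ s, deriv m₂ s))
        (deriv (deriv m₁) x, deriv (deriv m₂) x) x :=
      (hdm₁.hasDerivAt).prodMk (hdm₂.hasDerivAt)
    have hmain := (hc.clm_apply hu).deriv
    -- derivative values on the diagonal
    have hd₁ : deriv m₁ x = 1 / 2 := (mean_hasDerivAt_fst h1 hx).deriv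
    have hd₂ : deriv m₂ x = 1 / 2 := (mean_hasDerivAt_fst h2 hx).deriv
    -- the second-order term vanishes
    have hBzero :
        fderiv ℝ (fderiv ℝ F₀) (x, x) (deriv m₁ x, deriv m₂ x) (deriv m₁ x, deriv m₂ x) = 0 := by
      have hB := mean_second_diag h0 hx
      have hsm : ((1 : ℝ) / 2, (1 : ℝ) / 2) = ((1 : ℝ) / 2) • ((1 : ℝ), (1 : ℝ)) := by
        rw [Prod.smul_mk]; norm_num
      rw [hd₁, hd₂, hsm]
      simp only [_root_.map_smul, ContinuousLinearMap.smul_apply, smul_eq_mul, hB]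
      rw [hF₀def, hB]
      ring
    -- the first-order term
    have hL : fderiv ℝ F₀ (x, x) (deriv (deriv m₁) x, deriv (deriv m₂) x)
        = (deriv (deriv m₁) x + deriv (deriv m₂) x) / 2 := by
      have hsplit : ((deriv (deriv m₁) x : ℝ), (deriv (deriv m₂) x : ℝ))
          = deriv (deriv m₁) x • ((1 : ℝ), (0 : ℝ)) + deriv (deriv m₂) x • ((0 : ℝ), (1 : ℝ)) := by
        rw [Prod.smul_mk, Prod.smul_mk, Prod.mk_add_mk]; norm_num
      rw [hsplit, map_add, _root_.map_smul, _root_.map_smul, smul_eq_mul, smul_eq_mul,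
        mean_fderiv_fst h0 hx, mean_fderiv_snd h0 hx]
      ring
    -- assemble
    have hcomp : charFun (fun x y => M₀ (M₁ x y) (M₂ x y)) x
        = deriv (deriv (fun t => M₀ (M₁ t x) (M₂ t x))) x := charFun_eq _ x
    rw [hcomp, hev.deriv_eq, hmain, hγx, hBzero, hL, charFun_eq, charFun_eq]
    simp only [hm₁def, hm₂def]
    ring
end

section
/- The class of normal means is minimal and complete: (1) if P₁ and P₂ are positive C^∞ functions on (0,∞) whose associated normal means M₁ and M₂ have the same characteristic function (Q_{M₁} = Q_{M₂}), then M₁ = M₂; (2) for every C^∞ function f : (0,∞) → ℝ there exists a positive C^∞ function P on (0,∞) such that the normal mean M with weight function P satisfies Q_M = f. -/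
open Real Set MeasureTheory

lemma my_const_of_hasDerivAt_zero {H : ℝ → ℝ} {t : Set ℝ} (hconv : Convex ℝ t)
    (hd : ∀ y ∈ t, HasDerivAt H 0 y) {a b : ℝ} (ha : a ∈ t) (hb : b ∈ t) : H a = H b := by
  have key : ∀ u v : ℝ, u ∈ t → v ∈ t → u < v → H u = H v := by
    intro u v hu hv huv
    have hsub : Set.Icc u v ⊆ t := hconv.ordConnected.out hu hv
    have hcont : ContinuousOn H (Set.Icc u v) := fun z hz =>
      ((hd z (hsub hz)).continuousAt).continuousWithinAt
    obtain ⟨c, hc, hc2⟩ := exists_hasDerivAt_eq_slope H (fun _ => 0) huv hcont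
      (fun z hz => hd z (hsub ⟨le_of_lt hz.1, le_of_lt hz.2⟩))
    have hne : v - u ≠ 0 := sub_ne_zero.mpr (ne_of_gt huv)
    have : H v - H u = 0 := by
      field_simp at hc2
      linarith
    linarith
  rcases lt_trichotomy a b with h|h|h
  · exact key a b ha hb h
  · rw [h]
  · exact (key b a hb ha h).symm

lemma charFun_normal {P : ℝ → ℝ} (hpos : ∀ x : ℝ, 0 < x → 0 < P x)
    (hP : ContDiffOn ℝ (⊤ : ℕ∞) P (Set.Ioi 0)) {x : ℝ} (hx : 0 < x) :
    charFun (fun x y => (x * P x + y * P y) / (P x + P y)) x = deriv P x / (2 * P x) := by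
  have hop : IsOpen (Set.Ioi (0:ℝ)) := isOpen_Ioi
  have hnx : Set.Ioi (0:ℝ) ∈ nhds x := hop.mem_nhds hx
  have hPx := hpos x hx
  have hdiffAt : ∀ s ∈ Set.Ioi (0:ℝ), HasDerivAt P (deriv P s) s := fun s hs =>
    ((hP.contDiffAt (hop.mem_nhds hs)).differentiableAt (by simp)).hasDerivAt
  have hden : ∀ s ∈ Set.Ioi (0:ℝ), P s + P x ≠ 0 := fun s hs =>
    ne_of_gt (add_pos (hpos s hs) hPx)
  have hhd : ∀ s ∈ Set.Ioi (0:ℝ), HasDerivAt (fun w => P w / (P w + P x))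
      (deriv P s * P x / (P s + P x)^2) s := by
    intro s hs
    have h0 := (hdiffAt s hs).div ((hdiffAt s hs).add_const (P x)) (hden s hs)
    convert h0 using 1
    · rfl
    · rfl
    · rfl
    have := hden s hs
    field_simp
    ring
  have hev : (fun s => (s * P s + x * P x) / (P s + P x)) =ᶠ[nhds x]
      (fun s => x + (s - x) * (P s / (P s + P x))) := by
    filter_upwards [hnx] with s hs
    have h1 := hden s hs
    field_simp
    ring
  have hgd : ∀ s ∈ Set.Ioi (0:ℝ), HasDerivAt (fun w => x + (w - x) * (P w / (P w + P x)))
      (P s / (P s + P x) + (s - x) * (deriv P s * P x / (P s + P x)^2)) s := by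
    intro s hs
    have h1 : HasDerivAt (fun w => (w - x) * (P w / (P w + P x)))
        (1 * (P s / (P s + P x)) + (s - x) * (deriv P s * P x / (P s + P x)^2)) s :=
      ((hasDerivAt_id s).sub_const x).mul (hhd s hs)
    simpa using h1.const_add x
  have hev2 : deriv (fun w => x + (w - x) * (P w / (P w + P x))) =ᶠ[nhds x]
      (fun s => P s / (P s + P x) + (s - x) * (deriv P s * P x / (P s + P x)^2)) := by
    filter_upwards [hnx] with s hs
    exact (hgd s hs).deriv
  have hderC : ContDiffOn ℝ (⊤ : ℕ∞) (deriv P) (Set.Ioi 0) := hP.deriv_of_isOpen hop (by simp)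
  have hd'x : DifferentiableAt ℝ (fun s => deriv P s * P x / (P s + P x)^2) x := by
    have h1 : DifferentiableAt ℝ (deriv P) x := (hderC.contDiffAt hnx).differentiableAt (by simp)
    have h2 : DifferentiableAt ℝ P x := (hP.contDiffAt hnx).differentiableAt (by simp)
    exact (h1.mul_const (P x)).div ((h2.add_const (P x)).pow 2) (by positivity)
  have hDx : HasDerivAt (fun s => P s / (P s + P x) + (s - x) * (deriv P s * P x / (P s + P x)^2))
      (deriv P x * P x / (P x + P x)^2 +
        (1 * (deriv P x * P x / (P x + P x)^2) + (x - x) * deriv (fun s => deriv P s * P x / (P s + P x)^2) x)) x :=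
    (hhd x hx).add (((hasDerivAt_id x).sub_const x).mul hd'x.hasDerivAt)
  have hstep : charFun (fun x y => (x * P x + y * P y) / (P x + P y)) x
      = deriv (deriv (fun s => (s * P s + x * P x) / (P s + P x))) x := by
    simp only [_root_.charFun]
    rw [show (2:ℕ) = 1 + 1 from rfl, iteratedDeriv_succ, iteratedDeriv_one]
  rw [hstep, Filter.EventuallyEq.deriv_eq (hev.deriv.trans hev2), hDx.deriv]
  have h2x : P x + P x ≠ 0 := hden x hx
  field_simp
  ring

/-- The class of normal means is minimal and complete. -/
theorem stmt9 :
    (∀ P₁ P₂ : ℝ → ℝ, (∀ x : ℝ, 0 < x → 0 < P₁ x) → (∀ x : ℝ, 0 < x → 0 < P₂ x) →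
      ContDiffOn ℝ (⊤ : ℕ∞) P₁ (Set.Ioi 0) → ContDiffOn ℝ (⊤ : ℕ∞) P₂ (Set.Ioi 0) →
      (∀ x : ℝ, 0 < x →
        charFun (fun x y => (x * P₁ x + y * P₁ y) / (P₁ x + P₁ y)) x =
          charFun (fun x y => (x * P₂ x + y * P₂ y) / (P₂ x + P₂ y)) x) →
      ∀ x y : ℝ, 0 < x → 0 < y →
        (x * P₁ x + y * P₁ y) / (P₁ x + P₁ y) =
          (x * P₂ x + y * P₂ y) / (P₂ x + P₂ y)) ∧
    (∀ f : ℝ → ℝ, ContDiffOn ℝ (⊤ : ℕ∞) f (Set.Ioi 0) →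
      ∃ P : ℝ → ℝ, (∀ x : ℝ, 0 < x → 0 < P x) ∧ ContDiffOn ℝ (⊤ : ℕ∞) P (Set.Ioi 0) ∧
        ∀ x : ℝ, 0 < x →
          charFun (fun x y => (x * P x + y * P y) / (P x + P y)) x = f x) := by
  have hop : IsOpen (Set.Ioi (0:ℝ)) := isOpen_Ioi
  constructor
  · intro P₁ P₂ hpos1 hpos2 hP1 hP2 hQ x y hx hy
    have key : ∀ z : ℝ, 0 < z → deriv P₁ z * P₂ z = deriv P₂ z * P₁ z := by
      intro z hz
      have h1 := charFun_normal hpos1 hP1 hz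
      have h2 := charFun_normal hpos2 hP2 hz
      have h3 := hQ z hz
      rw [h1, h2] at h3
      have p1 := hpos1 z hz
      have p2 := hpos2 z hz
      field_simp at h3
      linarith
    have hratio : ∀ u v : ℝ, 0 < u → 0 < v → P₁ u * P₂ v = P₁ v * P₂ u := by
      intro u v hu hv
      have hd : ∀ z ∈ Set.Ioi (0:ℝ), HasDerivAt (fun w => P₁ w / P₂ w) 0 z := by
        intro z hz
        have hz' : (0:ℝ) < z := hz
        have d1 : HasDerivAt P₁ (deriv P₁ z) z :=
          ((hP1.contDiffAt (hop.mem_nhds hz')).differentiableAt (by simp)).hasDerivAt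
        have d2 : HasDerivAt P₂ (deriv P₂ z) z :=
          ((hP2.contDiffAt (hop.mem_nhds hz')).differentiableAt (by simp)).hasDerivAt
        have h0 := d1.div d2 (ne_of_gt (hpos2 z hz'))
        convert h0 using 1
        · rfl
        · rfl
        · rfl
        rw [eq_comm, div_eq_zero_iff]
        left
        have := key z hz'
        linarith
      have h5 := my_const_of_hasDerivAt_zero (convex_Ioi 0) hd
        (Set.mem_Ioi.mpr hu) (Set.mem_Ioi.mpr hv)
      have p2u := hpos2 u hu
      have p2v := hpos2 v hv
      field_simp at h5
      linarith
    have h12 := hratio x y hx hy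
    have p1x := hpos1 x hx
    have p1y := hpos1 y hy
    have p2x := hpos2 x hx
    have p2y := hpos2 y hy
    rw [div_eq_div_iff (by positivity) (by positivity)]
    linear_combination (x - y) * h12
  · intro f hf
    set F : ℝ → ℝ := fun x => ∫ t in (1:ℝ)..x, f t with hF_def
    have hcont : ContinuousOn f (Set.Ioi 0) := hf.continuousOn
    have hFd : ∀ x ∈ Set.Ioi (0:ℝ), HasDerivAt F (f x) x := by
      intro x hx
      have hx' : (0:ℝ) < x := hx
      have huIcc : Set.uIcc 1 x ⊆ Set.Ioi (0:ℝ) := by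
        intro t ht
        have h1 : min 1 x ≤ t := ht.1
        exact lt_of_lt_of_le (lt_min one_pos hx') h1
      apply intervalIntegral.integral_hasDerivAt_right
      · exact (hcont.mono huIcc).intervalIntegrable
      · exact hcont.stronglyMeasurableAtFilter hop x hx
      · exact hcont.continuousAt (hop.mem_nhds hx')
    have hFsm : ContDiffOn ℝ (⊤ : ℕ∞) F (Set.Ioi 0) := by
      rw [contDiffOn_infty_iff_deriv_of_isOpen hop]
      refine ⟨fun x hx => (hFd x hx).differentiableAt.differentiableWithinAt, ?_⟩
      exact hf.congr (fun x hx => (hFd x hx).deriv)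
    refine ⟨fun x => Real.exp (2 * F x), fun x _ => Real.exp_pos _, ?_, ?_⟩
    · have h2F : ContDiffOn ℝ (⊤ : ℕ∞) (fun x => 2 * F x) (Set.Ioi 0) := by
        have := hFsm.const_smul (2:ℝ)
        simpa [smul_eq_mul] using this
      exact Real.contDiff_exp.comp_contDiffOn h2F
    · intro x hx
      have hPsm : ContDiffOn ℝ (⊤ : ℕ∞) (fun x => Real.exp (2 * F x)) (Set.Ioi 0) := by
        have h2F : ContDiffOn ℝ (⊤ : ℕ∞) (fun x => 2 * F x) (Set.Ioi 0) := by
          have := hFsm.const_smul (2:ℝ)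
          simpa [smul_eq_mul] using this
        exact Real.contDiff_exp.comp_contDiffOn h2F
      rw [charFun_normal (fun z _ => Real.exp_pos _) hPsm hx]
      have hPd : HasDerivAt (fun w => Real.exp (2 * F w)) (Real.exp (2 * F x) * (2 * f x)) x := by
        have h1 : HasDerivAt (fun w => 2 * F w) (2 * f x) x := (hFd x hx).const_mul 2
        exact h1.exp
      rw [hPd.deriv]
      have : Real.exp (2 * F x) ≠ 0 := ne_of_gt (Real.exp_pos _)
      field_simp
end

section
/- The only power means that are normal means are the arithmetic, geometric and harmonic means. Precisely: if r ∈ ℝ and there exists a positive C^∞ function P on (0,∞) such that (x P(x) + y P(y))/(P(x) + P(y)) = π_r(x,y) for all x,y > 0, then r ∈ {−1, 0, 1}. -/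
open Real Set MeasureTheory

/-- The r-th power mean (with the geometric mean for r = 0). -/
noncomputable def powerMean (r : ℝ) (x y : ℝ) : ℝ :=
  if r = 0 then Real.sqrt (x * y) else ((x ^ r + y ^ r) / 2) ^ (1 / r)

open Filter

/-- For `r > 0` and fixed `y > 0`, the power mean `π_r(x,y)` divided by `x`
tends to `(1/2)^(1/r)` as `x → ∞`. -/
lemma pm_div_tendsto (r : ℝ) (hr : 0 < r) (y : ℝ) (hy : 0 < y) :
    Tendsto (fun x : ℝ => ((x ^ r + y ^ r) / 2) ^ (1 / r) / x) atTop
      (nhds (((1 : ℝ) / 2) ^ (1 / r))) := by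
  have h0 : Tendsto (fun x : ℝ => (1 + y ^ r * x ^ (-r)) / 2) atTop (nhds ((1 : ℝ) / 2)) := by
    have h1 : Tendsto (fun x : ℝ => y ^ r * x ^ (-r)) atTop (nhds 0) := by
      simpa using (tendsto_rpow_neg_atTop hr).const_mul (y ^ r)
    have h2 : Tendsto (fun x : ℝ => 1 + y ^ r * x ^ (-r)) atTop (nhds 1) := by
      simpa using h1.const_add 1
    simpa using h2.div_const 2
  have h3 : Tendsto (fun x : ℝ => ((1 + y ^ r * x ^ (-r)) / 2) ^ (1 / r)) atTop
      (nhds (((1 : ℝ) / 2) ^ (1 / r))) :=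
    h0.rpow_const (Or.inl (by norm_num))
  refine h3.congr' ?_
  filter_upwards [eventually_gt_atTop (0 : ℝ)] with x hx
  have hxr : (0 : ℝ) < x ^ r := Real.rpow_pos_of_pos hx r
  have hnum : (0 : ℝ) ≤ (x ^ r + y ^ r) / 2 := by positivity
  have key : (1 + y ^ r * x ^ (-r)) / 2 = ((x ^ r + y ^ r) / 2) / x ^ r := by
    rw [Real.rpow_neg hx.le, eq_div_iff hxr.ne']
    field_simp
  rw [key, Real.div_rpow hnum hxr.le, one_div, Real.rpow_rpow_inv hx.le hr.ne', ← one_div]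

/-- Internality: for `r > 0` and `0 < y < x`, we have `y < π_r(x,y) < x`. -/
lemma pm_internal (r : ℝ) (hr : 0 < r) {x y : ℝ} (hy : 0 < y) (hxy : y < x) :
    y < ((x ^ r + y ^ r) / 2) ^ (1 / r) ∧ ((x ^ r + y ^ r) / 2) ^ (1 / r) < x := by
  have hx : 0 < x := hy.trans hxy
  have hlt : y ^ r < x ^ r := Real.rpow_lt_rpow hy.le hxy hr
  have hir : 0 < 1 / r := by positivity
  constructor
  · calc y = (y ^ r) ^ (1 / r) := by rw [one_div, Real.rpow_rpow_inv hy.le hr.ne']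
    _ < ((x ^ r + y ^ r) / 2) ^ (1 / r) :=
      Real.rpow_lt_rpow (by positivity) (by linarith) hir
  · calc ((x ^ r + y ^ r) / 2) ^ (1 / r) < (x ^ r) ^ (1 / r) :=
      Real.rpow_lt_rpow (by positivity) (by linarith) hir
    _ = x := by rw [one_div, Real.rpow_rpow_inv hx.le hr.ne']

private lemma scale_div (c d a b x : ℝ) (hx : x ≠ 0) :
    (c * (a / x)) / (d * (b / x)) = (c * a) / (d * b) := by
  rw [← mul_div_assoc, ← mul_div_assoc, div_div_div_cancel_right₀ hx]

private lemma ratio_shift (a b x : ℝ) (hx : x ≠ 0) :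
    (1 - a / x) / (1 - b / x) = (x - a) / (x - b) := by
  rw [show (1 : ℝ) - a / x = (x - a) / x by rw [sub_div, div_self hx],
    show (1 : ℝ) - b / x = (x - b) / x by rw [sub_div, div_self hx],
    div_div_div_cancel_right₀ hx]

/-- The key one-sided result: if a normal mean equals the `r`-th power mean
with `r > 0`, then `r = 1`. -/
lemma aux_pos (r : ℝ) (hr : 0 < r) (P : ℝ → ℝ) (hP : ∀ x : ℝ, 0 < x → 0 < P x)
    (heq : ∀ x y : ℝ, 0 < x → 0 < y →
      (x * P x + y * P y) / (P x + P y) = ((x ^ r + y ^ r) / 2) ^ (1 / r)) :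
    r = 1 := by
  set k : ℝ := ((1 : ℝ) / 2) ^ (1 / r) with hk
  have hk0 : 0 < k := Real.rpow_pos_of_pos (by norm_num) _
  have hk1 : k < 1 := Real.rpow_lt_one (by norm_num) (by norm_num) (by positivity)
  set pm : ℝ → ℝ → ℝ := fun x z => ((x ^ r + z ^ r) / 2) ^ (1 / r) with hpm
  -- the basic balance equation
  have hbal : ∀ x y : ℝ, 0 < x → 0 < y →
      P x * (x - pm x y) = P y * (pm x y - y) := by
    intro x y hx hy
    have h := heq x y hx hy
    have hPx := hP x hx
    have hPy := hP y hy
    have hs : P x + P y ≠ 0 := by positivity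
    rw [div_eq_iff hs] at h
    simp only [hpm] at *
    nlinarith [h]
  -- P is constant
  have hconst : ∀ y : ℝ, 0 < y → P y = P 1 := by
    intro y hy
    have hPy := hP y hy
    have hP1 := hP 1 one_pos
    set F : ℝ → ℝ := fun x => (x - pm x 1) / (x - pm x y) with hF
    -- F tends to 1
    have hF1 : Tendsto F atTop (nhds 1) := by
      have hnum : Tendsto (fun x : ℝ => 1 - pm x 1 / x) atTop (nhds (1 - k)) :=
        Tendsto.const_sub 1 (pm_div_tendsto r hr 1 one_pos)
      have hden : Tendsto (fun x : ℝ => 1 - pm x y / x) atTop (nhds (1 - k)) :=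
        Tendsto.const_sub 1 (pm_div_tendsto r hr y hy)
      have hne : (1 : ℝ) - k ≠ 0 := by linarith
      have h := hnum.div hden hne
      rw [div_self hne] at h
      refine h.congr' ?_
      filter_upwards [eventually_gt_atTop (0 : ℝ)] with x hx
      exact ratio_shift _ _ _ hx.ne'
    -- F tends to P 1 / P y
    have hF2 : Tendsto F atTop (nhds (P 1 / P y)) := by
      have hnum : Tendsto (fun x : ℝ => P 1 * (pm x 1 / x - 1 * x⁻¹)) atTop
          (nhds (P 1 * (k - 1 * 0))) :=
        Tendsto.const_mul (P 1)
          ((pm_div_tendsto r hr 1 one_pos).sub (tendsto_inv_atTop_zero.const_mul 1))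
      have hden : Tendsto (fun x : ℝ => P y * (pm x y / x - y * x⁻¹)) atTop
          (nhds (P y * (k - y * 0))) :=
        Tendsto.const_mul (P y)
          ((pm_div_tendsto r hr y hy).sub (tendsto_inv_atTop_zero.const_mul y))
      have hdne : P y * (k - y * 0) ≠ 0 := by
        simp only [mul_zero, sub_zero]; positivity
      have h := hnum.div hden hdne
      have hval : P 1 * (k - 1 * 0) / (P y * (k - y * 0)) = P 1 / P y := by
        simp only [mul_zero, sub_zero]
        rw [mul_comm (P 1) k, mul_comm (P y) k, mul_div_mul_left _ _ hk0.ne']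
      rw [hval] at h
      refine h.congr' ?_
      filter_upwards [eventually_gt_atTop (0 : ℝ), eventually_gt_atTop y,
        eventually_gt_atTop (1 : ℝ)] with x hx hxy hx1
      have h1 := hbal x 1 hx one_pos
      have h2 := hbal x y hx hy
      have hPx := hP x hx
      calc (P 1 * (pm x 1 / x - 1 * x⁻¹)) / (P y * (pm x y / x - y * x⁻¹))
          = (P 1 * (pm x 1 - 1)) / (P y * (pm x y - y)) := by
            rw [show pm x 1 / x - 1 * x⁻¹ = (pm x 1 - 1) / x by rw [sub_div]; ring_nf,
              show pm x y / x - y * x⁻¹ = (pm x y - y) / x by rw [sub_div]; ring_nf,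
              scale_div _ _ _ _ _ hx.ne']
        _ = (P x * (x - pm x 1)) / (P x * (x - pm x y)) := by rw [h1, h2]
        _ = F x := mul_div_mul_left _ _ hPx.ne'
    have := tendsto_nhds_unique hF1 hF2
    rw [eq_comm, div_eq_one_iff_eq hPy.ne'] at this
    exact this.symm
  -- hence the power mean is the arithmetic mean
  have harm : ∀ x : ℝ, 0 < x → pm x 1 = (x + 1) / 2 := by
    intro x hx
    have h := heq x 1 hx one_pos
    rw [hconst x hx] at h
    have hP1 := hP 1 one_pos
    rw [Real.one_rpow] at h
    simp only [hpm]
    rw [Real.one_rpow, ← h]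
    field_simp
    ring
  -- take the limit to identify k = 1/2
  have hhalf : Tendsto (fun x : ℝ => pm x 1 / x) atTop (nhds ((1 : ℝ) / 2)) := by
    have h0 : Tendsto (fun x : ℝ => (1 + 1 * x⁻¹) / 2) atTop (nhds ((1 + 1 * 0) / 2)) :=
      (Tendsto.const_add 1 (tendsto_inv_atTop_zero.const_mul 1)).div_const 2
    have h0' : Tendsto (fun x : ℝ => (1 + 1 * x⁻¹) / 2) atTop (nhds ((1 : ℝ) / 2)) := by
      simpa using h0
    refine h0'.congr' ?_
    filter_upwards [eventually_gt_atTop (0 : ℝ)] with x hx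
    rw [harm x hx, div_div]
    rw [div_eq_div_iff (by norm_num) (by positivity)]
    field_simp
  have hk2 : k = (1 : ℝ) / 2 := tendsto_nhds_unique (pm_div_tendsto r hr 1 one_pos) hhalf
  -- conclude r = 1
  have hlog : (1 / r) * Real.log ((1 : ℝ) / 2) = Real.log ((1 : ℝ) / 2) := by
    have := congrArg Real.log hk2
    rwa [Real.log_rpow (by norm_num)] at this
  have hlne : Real.log ((1 : ℝ) / 2) ≠ 0 := by
    rw [show (1 : ℝ) / 2 = 2⁻¹ by norm_num, Real.log_inv]
    have := Real.log_pos (by norm_num : (1 : ℝ) < 2)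
    linarith
  have h1r : 1 / r = 1 :=
    mul_right_cancel₀ hlne (hlog.trans (one_mul _).symm)
  rw [div_eq_one_iff_eq hr.ne'] at h1r
  exact h1r.symm

/-- The only power means that are normal means are the arithmetic (r = 1),
geometric (r = 0) and harmonic (r = -1) means. -/
theorem stmt10 (r : ℝ) (P : ℝ → ℝ) (hP : ∀ x : ℝ, 0 < x → 0 < P x)
    (hsm : ContDiffOn ℝ (⊤ : ℕ∞) P (Set.Ioi 0))
    (heq : ∀ x y : ℝ, 0 < x → 0 < y →
      (x * P x + y * P y) / (P x + P y) = powerMean r x y) :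
    r = -1 ∨ r = 0 ∨ r = 1 := by
  rcases lt_trichotomy r 0 with hneg | hzero | hpos
  · left
    have key : -r = 1 := by
      apply aux_pos (-r) (by linarith) (fun x => P x⁻¹ * x⁻¹)
        (fun x hx => mul_pos (hP _ (inv_pos.2 hx)) (inv_pos.2 hx))
      intro x y hx hy
      have h := heq x⁻¹ y⁻¹ (inv_pos.2 hx) (inv_pos.2 hy)
      rw [powerMean, if_neg hneg.ne] at h
      have hPx := hP x⁻¹ (inv_pos.2 hx)
      have hPy := hP y⁻¹ (inv_pos.2 hy)
      have hden : (0 : ℝ) < x⁻¹ * P x⁻¹ + y⁻¹ * P y⁻¹ := by positivity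
      have hbase : (0 : ℝ) < ((x⁻¹) ^ r + (y⁻¹) ^ r) / 2 := by
        have := Real.rpow_pos_of_pos (inv_pos.2 hx) r
        have := Real.rpow_pos_of_pos (inv_pos.2 hy) r
        linarith
      have hinv := congrArg Inv.inv h
      rw [inv_div] at hinv
      have ex : x * (P x⁻¹ * x⁻¹) = P x⁻¹ := by field_simp
      have ey : y * (P y⁻¹ * y⁻¹) = P y⁻¹ := by field_simp
      rw [ex, ey]
      have hxnr : x ^ (-r) = (x⁻¹) ^ r := by
        rw [Real.rpow_neg hx.le, ← Real.inv_rpow hx.le]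
      have hynr : y ^ (-r) = (y⁻¹) ^ r := by
        rw [Real.rpow_neg hy.le, ← Real.inv_rpow hy.le]
      rw [hxnr, hynr, show 1 / (-r) = -(1 / r) by ring,
        Real.rpow_neg hbase.le, ← hinv]
      ring_nf
    linarith
  · right; left; exact hzero
  · right; right
    apply aux_pos r hpos P hP
    intro x y hx hy
    have := heq x y hx hy
    rwa [powerMean, if_neg hpos.ne'] at this
end

section
/- Let f : (0,∞) → ℝ be a strictly monotonic C^∞ function whose derivative never vanishes, and let M be a mean satisfying f(M(x,y)) = (f(x) + f(y))/2 for all x,y > 0 (i.e. M is the additive mean with additivity function f). Then the characteristic function of M satisfies Q_M(x) = f''(x)/(4 f'(x)) for all x > 0. -/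
open Real Set MeasureTheory

/-- The characteristic function of an additive mean with additivity function f
is f''/(4 f'). -/
theorem stmt11 (f : ℝ → ℝ)
    (hmono : StrictMonoOn f (Set.Ioi 0) ∨ StrictAntiOn f (Set.Ioi 0))
    (hsm : ContDiffOn ℝ (⊤ : ℕ∞) f (Set.Ioi 0))
    (hd : ∀ x : ℝ, 0 < x → deriv f x ≠ 0)
    (M : ℝ → ℝ → ℝ) (hM : IsMean M)
    (hadd : ∀ x y : ℝ, 0 < x → 0 < y → f (M x y) = (f x + f y) / 2) :
    ∀ x : ℝ, 0 < x → charFun M x = deriv (deriv f) x / (4 * deriv f x) := by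
  intro x₀ hx₀
  obtain ⟨hMsm, hMpos, hMint, _⟩ := hM
  have hMxx : M x₀ x₀ = x₀ := by
    have h := hMint x₀ x₀ hx₀ hx₀
    simp only [min_self, max_self] at h
    linarith [h.1, h.2]
  set g : ℝ → ℝ := fun s => M s x₀ with hgdef
  have hgx₀ : g x₀ = x₀ := hMxx
  have hgOn : ContDiffOn ℝ (⊤ : ℕ∞) g (Set.Ioi 0) := by
    have hpr : ContDiffOn ℝ (⊤ : ℕ∞) (fun s : ℝ => (s, x₀)) (Set.Ioi 0) :=
      (contDiff_id.prodMk contDiff_const).contDiffOn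
    exact hMsm.comp hpr (fun s hs => ⟨hs, hx₀⟩)
  have hgpos : ∀ s ∈ Set.Ioi (0:ℝ), 0 < g s := fun s hs => hMpos s x₀ hs hx₀
  have hfAt : ∀ x : ℝ, 0 < x → ContDiffAt ℝ (⊤ : ℕ∞) f x := fun x hx =>
    hsm.contDiffAt (isOpen_Ioi.mem_nhds hx)
  have hgAt : ∀ s ∈ Set.Ioi (0:ℝ), ContDiffAt ℝ (⊤ : ℕ∞) g s := fun s hs =>
    hgOn.contDiffAt (isOpen_Ioi.mem_nhds hs)
  -- first derivative identity
  have E1 : ∀ s ∈ Set.Ioi (0:ℝ), deriv f (g s) * deriv g s = deriv f s / 2 := by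
    intro s hs
    have hdf : DifferentiableAt ℝ f (g s) :=
      (hfAt _ (hgpos s hs)).differentiableAt (by simp)
    have hdg : DifferentiableAt ℝ g s := (hgAt s hs).differentiableAt (by simp)
    have hcomp : deriv (f ∘ g) s = deriv f (g s) * deriv g s := deriv_comp s hdf hdg
    have heq : (f ∘ g) =ᶠ[nhds s] fun t => (f t + f x₀) / 2 := by
      filter_upwards [isOpen_Ioi.mem_nhds hs] with t ht
      exact hadd t x₀ ht hx₀
    have hde : deriv (f ∘ g) s = deriv (fun t => (f t + f x₀) / 2) s := heq.deriv_eq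
    rw [hcomp] at hde
    rw [hde, deriv_div_const, deriv_add_const]
  have hgd : deriv g x₀ = 1 / 2 := by
    have h := E1 x₀ hx₀
    rw [hgx₀] at h
    have h' : deriv f x₀ * deriv g x₀ = deriv f x₀ * (1 / 2) := by linarith
    exact mul_left_cancel₀ (hd x₀ hx₀) h'
  -- second derivative
  have hFOn : ContDiffOn ℝ (⊤ : ℕ∞) (deriv f) (Set.Ioi 0) :=
    hsm.deriv_of_isOpen isOpen_Ioi (by simp)
  have hGOn : ContDiffOn ℝ (⊤ : ℕ∞) (deriv g) (Set.Ioi 0) :=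
    hgOn.deriv_of_isOpen isOpen_Ioi (by simp)
  have hdg0 : DifferentiableAt ℝ g x₀ := (hgAt x₀ hx₀).differentiableAt (by simp)
  have hdF : DifferentiableAt ℝ (deriv f) x₀ :=
    (hFOn.contDiffAt (isOpen_Ioi.mem_nhds hx₀)).differentiableAt (by simp)
  have hdG : DifferentiableAt ℝ (deriv g) x₀ :=
    (hGOn.contDiffAt (isOpen_Ioi.mem_nhds hx₀)).differentiableAt (by simp)
  have hdFg : DifferentiableAt ℝ (deriv f) (g x₀) := by rw [hgx₀]; exact hdF
  have hu : DifferentiableAt ℝ (fun s => deriv f (g s)) x₀ := hdFg.comp x₀ hdg0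
  have hud : deriv (fun s => deriv f (g s)) x₀ = deriv (deriv f) x₀ * (1 / 2) := by
    have := deriv_comp x₀ hdFg hdg0
    rw [hgx₀, hgd] at this; exact this
  have hLR : (fun s => deriv f (g s) * deriv g s) =ᶠ[nhds x₀]
      fun s => deriv f s / 2 := by
    filter_upwards [isOpen_Ioi.mem_nhds hx₀] with t ht
    exact E1 t ht
  have hderiveq := hLR.deriv_eq
  rw [deriv_fun_mul hu hdG, deriv_div_const] at hderiveq
  rw [hud, hgx₀, hgd] at hderiveq
  -- hderiveq : deriv (deriv f) x₀ * (1/2) * (1/2) + deriv f x₀ * deriv (deriv g) x₀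
  --            = deriv (deriv f) x₀ / 2
  have hchar : charFun M x₀ = deriv (deriv g) x₀ := by
    simp only [_root_.charFun]
    rw [show (2 : ℕ) = 1 + 1 from rfl, iteratedDeriv_succ, iteratedDeriv_one]
  rw [hchar]
  have hne : deriv f x₀ ≠ 0 := hd x₀ hx₀
  field_simp at hderiveq ⊢
  linarith
end

section
/- The only additive means that are homogeneous are the power means. Precisely: let M be a mean with M(λx, λy) = λ M(x,y) for all λ,x,y > 0, and suppose there exists a strictly monotonic C^∞ function f on (0,∞) with nowhere-vanishing derivative such that f(M(x,y)) = (f(x)+f(y))/2 for all x,y > 0. Then there exists r ∈ ℝ such that M = π_r, where π_r(x,y) = ((x^r + y^r)/2)^{1/r} for r ≠ 0 and π_0(x,y) = √(xy). -/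
open Real Set MeasureTheory

lemma constAux (g : ℝ → ℝ) (hg : ∀ x ∈ Ioi (0:ℝ), HasDerivAt g 0 x)
    {x y : ℝ} (hx : x ∈ Ioi (0:ℝ)) (hy : y ∈ Ioi (0:ℝ)) : g x = g y := by
  apply (convex_Ioi (0:ℝ)).is_const_of_fderivWithin_eq_zero
    (fun z hz => ((hg z hz).differentiableAt).differentiableWithinAt) ?_ hx hy
  intro z hz
  rw [fderivWithin_of_isOpen isOpen_Ioi hz, (hg z hz).hasFDerivAt.fderiv]
  ext; simp




/-- The only additive means that are homogeneous are the power means. -/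
theorem stmt12 (M : ℝ → ℝ → ℝ) (hM : IsMean M)
    (hhom : ∀ l x y : ℝ, 0 < l → 0 < x → 0 < y → M (l * x) (l * y) = l * M x y)
    (f : ℝ → ℝ)
    (hmono : StrictMonoOn f (Set.Ioi 0) ∨ StrictAntiOn f (Set.Ioi 0))
    (hsm : ContDiffOn ℝ (⊤ : ℕ∞) f (Set.Ioi 0))
    (hd : ∀ x : ℝ, 0 < x → deriv f x ≠ 0)
    (hadd : ∀ x y : ℝ, 0 < x → 0 < y → f (M x y) = (f x + f y) / 2) :
    ∃ r : ℝ, ∀ x y : ℝ, 0 < x → 0 < y → M x y = powerMean r x y := by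
  obtain ⟨hsmooth, hpos, hbetween, hsymm⟩ := hM
  have hdiag : ∀ y : ℝ, 0 < y → M y y = y := by
    intro y hy
    have h := hbetween y y hy hy
    simp only [min_self, max_self] at h
    linarith [h.1, h.2]
  -- smoothness of slices
  have hslice : ∀ y : ℝ, 0 < y → ContDiffOn ℝ (⊤ : ℕ∞) (fun s => M s y) (Ioi 0) := by
    intro y hy
    exact hsmooth.comp (contDiff_id.prodMk contDiff_const).contDiffOn
      (fun s hs => ⟨hs, hy⟩)
  -- differentiability helpers
  have hfd : ∀ x : ℝ, 0 < x → DifferentiableAt ℝ f x := fun x hx =>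
    (hsm.contDiffAt (isOpen_Ioi.mem_nhds hx)).differentiableAt (by simp)
  have hsm1 : ContDiffOn ℝ (⊤ : ℕ∞) (deriv f) (Ioi 0) := hsm.deriv_of_isOpen isOpen_Ioi (by simp)
  have hfd1 : ∀ x : ℝ, 0 < x → DifferentiableAt ℝ (deriv f) x := fun x hx =>
    (hsm1.contDiffAt (isOpen_Ioi.mem_nhds hx)).differentiableAt (by simp)
  have hmd : ∀ y : ℝ, 0 < y → ∀ x : ℝ, 0 < x →
      DifferentiableAt ℝ (fun s => M s y) x := fun y hy x hx =>
    ((hslice y hy).contDiffAt (isOpen_Ioi.mem_nhds hx)).differentiableAt (by simp)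
  have hmd1 : ∀ y : ℝ, 0 < y → ∀ x : ℝ, 0 < x →
      DifferentiableAt ℝ (deriv (fun s => M s y)) x := fun y hy x hx =>
    (((hslice y hy).deriv_of_isOpen (m := (⊤ : ℕ∞)) isOpen_Ioi (by simp)).contDiffAt
      (isOpen_Ioi.mem_nhds hx)).differentiableAt (by simp)
  -- claim 1
  have claim1 : ∀ y : ℝ, 0 < y → ∀ x : ℝ, 0 < x →
      deriv f (M x y) * deriv (fun s => M s y) x = deriv f x / 2 := by
    intro y hy x hx
    have hMxy : 0 < M x y := hpos x y hx hy
    have hcomp : HasDerivAt (fun s => f (M s y))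
        (deriv f (M x y) * deriv (fun s => M s y) x) x :=
      ((hfd _ hMxy).hasDerivAt).comp x ((hmd y hy x hx).hasDerivAt)
    have hev : (fun s => f (M s y)) =ᶠ[nhds x] (fun s => (f s + f y) / 2) := by
      filter_upwards [isOpen_Ioi.mem_nhds hx] with s hs
      exact hadd s y hs hy
    have h2 : HasDerivAt (fun s => (f s + f y) / 2) (deriv f x / 2) x :=
      (((hfd x hx).hasDerivAt).add_const (f y)).div_const 2
    have := hcomp.deriv
    rw [hev.deriv_eq, h2.deriv] at this
    exact this.symm
  -- claim 2
  have claim2 : ∀ y : ℝ, 0 < y → deriv (fun s => M s y) y = 1 / 2 := by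
    intro y hy
    have h := claim1 y hy y hy
    rw [hdiag y hy] at h
    have := hd y hy
    have h2 : deriv f y * (deriv (fun s => M s y) y - 1/2) = 0 := by ring_nf; linarith [h]
    rcases mul_eq_zero.mp h2 with h3 | h3
    · exact absurd h3 this
    · linarith
  -- claim 3 : second derivative relation on diagonal
  set Q : ℝ → ℝ := fun y => deriv (deriv (fun s => M s y)) y with hQ
  have claim3 : ∀ y : ℝ, 0 < y → Q y = deriv (deriv f) y / (4 * deriv f y) := by
    intro y hy
    -- differentiate claim1 (as functions of x) at x = y
    have hL : HasDerivAt (fun x => deriv f (M x y) * deriv (fun s => M s y) x)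
        ((deriv (deriv f) (M y y) * deriv (fun s => M s y) y) * deriv (fun s => M s y) y
          + deriv f (M y y) * deriv (deriv (fun s => M s y)) y) y := by
      have h1 : HasDerivAt (fun x => deriv f (M x y))
          (deriv (deriv f) (M y y) * deriv (fun s => M s y) y) y := by
        have hMyy : 0 < M y y := hpos y y hy hy
        have h0 : HasDerivAt ((deriv f) ∘ (fun s => M s y))
            (deriv (deriv f) (M y y) * deriv (fun s => M s y) y) y :=
          HasDerivAt.comp y ((hfd1 _ hMyy).hasDerivAt) ((hmd y hy y hy).hasDerivAt)
        exact h0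
      exact h1.mul ((hmd1 y hy y hy).hasDerivAt)
    have hR : HasDerivAt (fun x => deriv f x / 2) (deriv (deriv f) y / 2) y :=
      ((hfd1 y hy).hasDerivAt).div_const 2
    have hev : (fun x => deriv f (M x y) * deriv (fun s => M s y) x)
        =ᶠ[nhds y] (fun x => deriv f x / 2) := by
      filter_upwards [isOpen_Ioi.mem_nhds hy] with s hs
      exact claim1 y hy s hs
    have heq := hL.deriv
    rw [hev.deriv_eq, hR.deriv] at heq
    rw [hdiag y hy, claim2 y hy] at heq
    have hfy := hd y hy
    rw [hQ]
    field_simp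
    linarith [heq]
  -- claim 4 : homogeneity of Q
  have claim4 : ∀ l : ℝ, 0 < l → Q l = Q 1 / l := by
    intro l hl
    have hev1 : deriv (fun s => M s l) =ᶠ[nhds l]
        (fun s => deriv (fun t => M t 1) (s / l)) := by
      filter_upwards [isOpen_Ioi.mem_nhds (show (0:ℝ) < l from hl)] with s hs
      have hsl : 0 < s / l := div_pos hs hl
      have hev2 : (fun t => M t l) =ᶠ[nhds s] (fun t => l * M (t / l) 1) := by
        filter_upwards [isOpen_Ioi.mem_nhds hs] with t ht
        have : M t l = M (l * (t / l)) (l * 1) := by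
          rw [mul_one, mul_div_cancel₀ _ (ne_of_gt hl)]
        rw [this, hhom l (t / l) 1 hl (div_pos ht hl) one_pos]
      have hder : HasDerivAt (fun t => l * M (t / l) 1)
          (l * (deriv (fun t => M t 1) (s / l) * (1 / l))) s := by
        have hi : HasDerivAt (fun t : ℝ => t / l) (1 / l) s := by
          simpa using (hasDerivAt_id s).div_const l
        exact (((hmd 1 one_pos _ hsl).hasDerivAt).comp s hi).const_mul l
      rw [hev2.deriv_eq, hder.deriv]
      field_simp
    have hder2 : HasDerivAt (fun s => deriv (fun t => M t 1) (s / l))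
        (deriv (deriv (fun t => M t 1)) (l / l) * (1 / l)) l := by
      have hi : HasDerivAt (fun t : ℝ => t / l) (1 / l) l := by
        simpa using (hasDerivAt_id l).div_const l
      exact ((hmd1 1 one_pos _ (by positivity)).hasDerivAt).comp l hi
    rw [hQ]
    simp only []
    rw [hev1.deriv_eq, hder2.deriv, div_self (ne_of_gt hl)]
    ring
  -- the ODE for f
  set c : ℝ := Q 1 with hc
  set r : ℝ := 4 * c + 1 with hr
  set K : ℝ := deriv f 1 with hK
  have hKne : K ≠ 0 := hd 1 one_pos
  have hODE : ∀ y : ℝ, 0 < y → deriv (deriv f) y = 4 * c * deriv f y / y := by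
    intro y hy
    have h1 := claim3 y hy
    have h2 := claim4 y hy
    rw [h2] at h1
    have hfy := hd y hy
    field_simp at h1 ⊢
    linarith [h1]
  have claim5 : ∀ x : ℝ, 0 < x → deriv f x = K * x ^ (r - 1) := by
    intro x hx
    have hconst : ∀ z ∈ Ioi (0:ℝ),
        HasDerivAt (fun x => deriv f x * x ^ (1 - r)) 0 z := by
      intro z hz
      have hz0 : (0:ℝ) < z := hz
      have hA : HasDerivAt (deriv f) (deriv (deriv f) z) z := (hfd1 z hz0).hasDerivAt
      have hB : HasDerivAt (fun x : ℝ => x ^ (1 - r)) ((1 - r) * z ^ (1 - r - 1)) z :=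
        Real.hasDerivAt_rpow_const (Or.inl hz0.ne')
      have h := hA.mul hB
      have hval : deriv (deriv f) z * z ^ (1 - r) +
          deriv f z * ((1 - r) * z ^ (1 - r - 1)) = 0 := by
        rw [hODE z hz0, Real.rpow_sub_one hz0.ne', hr]
        field_simp
        ring
      rwa [hval] at h
    have h := constAux _ hconst (mem_Ioi.mpr hx) (mem_Ioi.mpr one_pos)
    simp only [Real.one_rpow, mul_one] at h
    have hx1 : (x : ℝ) ^ (1 - r) * x ^ (r - 1) = 1 := by
      rw [← Real.rpow_add hx]; norm_num
    calc deriv f x = deriv f x * (x ^ (1 - r) * x ^ (r - 1)) := by rw [hx1, mul_one]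
      _ = (deriv f x * x ^ (1 - r)) * x ^ (r - 1) := by ring
      _ = K * x ^ (r - 1) := by rw [h]
  refine ?_
  by_cases hr0 : r = 0
  · -- geometric mean
    have hflog : ∀ x : ℝ, 0 < x → f x = f 1 + K * Real.log x := by
      intro x hx
      have hconst : ∀ z ∈ Ioi (0:ℝ),
          HasDerivAt (fun x => f x - K * Real.log x) 0 z := by
        intro z hz
        have hz0 : (0:ℝ) < z := hz
        have hA : HasDerivAt f (deriv f z) z := (hfd z hz0).hasDerivAt
        have hB : HasDerivAt (fun x => K * Real.log x) (K * z⁻¹) z :=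
          (Real.hasDerivAt_log hz0.ne').const_mul K
        have h := hA.sub hB
        have hval : deriv f z - K * z⁻¹ = 0 := by
          rw [claim5 z hz0, hr0]
          norm_num [Real.rpow_neg_one]
        rwa [hval] at h
      have h := constAux _ hconst (mem_Ioi.mpr hx) (mem_Ioi.mpr one_pos)
      simp only [Real.log_one, mul_zero, sub_zero] at h
      linarith [h]
    refine ⟨0, ?_⟩
    intro x y hx hy
    have hMp := hpos x y hx hy
    have h := hadd x y hx hy
    rw [hflog _ hMp, hflog _ hx, hflog _ hy] at h
    have hlog : Real.log (M x y) = (Real.log x + Real.log y) / 2 := by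
      have h2 : K * Real.log (M x y) = K * ((Real.log x + Real.log y) / 2) := by
        linarith [h]
      exact mul_left_cancel₀ hKne h2
    have hsp : 0 < Real.sqrt (x * y) := Real.sqrt_pos.mpr (by positivity)
    have hs : Real.log (Real.sqrt (x * y)) = (Real.log x + Real.log y) / 2 := by
      rw [Real.log_sqrt (by positivity), Real.log_mul hx.ne' hy.ne']
    have := Real.log_injOn_pos (mem_Ioi.mpr hMp) (mem_Ioi.mpr hsp)
      (hlog.trans hs.symm)
    rw [this]
    simp [powerMean]
  · -- power mean case
    have hfr : ∀ x : ℝ, 0 < x → f x = (f 1 - K / r) + (K / r) * x ^ r := by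
      intro x hx
      have hconst : ∀ z ∈ Ioi (0:ℝ),
          HasDerivAt (fun x => f x - K / r * x ^ r) 0 z := by
        intro z hz
        have hz0 : (0:ℝ) < z := hz
        have hA : HasDerivAt f (deriv f z) z := (hfd z hz0).hasDerivAt
        have hB : HasDerivAt (fun x : ℝ => K / r * x ^ r) (K / r * (r * z ^ (r - 1))) z :=
          (Real.hasDerivAt_rpow_const (Or.inl hz0.ne')).const_mul (K / r)
        have h := hA.sub hB
        have hval : deriv f z - K / r * (r * z ^ (r - 1)) = 0 := by
          rw [claim5 z hz0]
          field_simp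
          ring
        rwa [hval] at h
      have h := constAux _ hconst (mem_Ioi.mpr hx) (mem_Ioi.mpr one_pos)
      simp only [Real.one_rpow, mul_one] at h
      linarith [h]
    refine ⟨r, ?_⟩
    intro x y hx hy
    have hMp := hpos x y hx hy
    have h := hadd x y hx hy
    rw [hfr _ hMp, hfr _ hx, hfr _ hy] at h
    have hMr : M x y ^ r = (x ^ r + y ^ r) / 2 := by
      have h2 : K / r * M x y ^ r = K / r * ((x ^ r + y ^ r) / 2) := by
        linarith [h]
      exact mul_left_cancel₀ (div_ne_zero hKne hr0) h2
    have hM1 : M x y = (M x y ^ r) ^ (1 / r) := by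
      rw [← Real.rpow_mul hMp.le, mul_one_div, div_self hr0, Real.rpow_one]
    rw [hM1, hMr]
    simp [powerMean, hr0]
end

section
/- The only integral means of the first kind that are homogeneous are the Stolarsky means. Precisely: let M be a mean with M(λx, λy) = λ M(x,y) for all λ,x,y > 0, and suppose there exists a strictly monotonic C^∞ function f on (0,∞) with nowhere-vanishing derivative such that f(M(x,y)) = (1/(y−x)) ∫ₓʸ f(t) dt for all x,y > 0 with x ≠ y. Then there exists p ∈ ℝ such that M = S_p. -/
open Real Set MeasureTheory

/-- The Stolarsky mean S_p, with S_0 the logarithmic mean and S_1 the identric mean. -/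
noncomputable def stolarsky (p : ℝ) (x y : ℝ) : ℝ :=
  if x = y then x
  else if p = 0 then (x - y) / (Real.log x - Real.log y)
  else if p = 1 then Real.exp (-1) * (x ^ x / y ^ y) ^ (1 / (x - y))
  else ((x ^ p - y ^ p) / (p * (x - y))) ^ (1 / (p - 1))

lemma sign_const (g : ℝ → ℝ) (hc : ContinuousOn g (Set.Ioi 0)) (h0 : ∀ x > (0:ℝ), g x ≠ 0)
    {a b : ℝ} (ha : 0 < a) (hb : 0 < b) (hga : 0 < g a) : 0 < g b := by
  by_contra h
  push_neg at h
  have hgb : g b < 0 := lt_of_le_of_ne h (h0 b hb)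
  have hsub : uIcc a b ⊆ Set.Ioi 0 := by
    intro x hx
    have := hx.1
    have h2 : min a b ≤ x := hx.1
    exact lt_of_lt_of_le (lt_min ha hb) h2
  have := intermediate_value_uIcc (hc.mono hsub)
  have h0m : (0:ℝ) ∈ uIcc (g a) (g b) := by
    rw [Set.mem_uIcc]; right; exact ⟨hgb.le, hga.le⟩
  obtain ⟨c, hc1, hc2⟩ := this h0m
  exact h0 c (hsub hc1) hc2

lemma strict_between {f : ℝ → ℝ}
    (hmono : StrictMonoOn f (Set.Ioi 0) ∨ StrictAntiOn f (Set.Ioi 0))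
    (hc : ContinuousOn f (Set.Ioi 0)) {x y m : ℝ} (hx : 0 < x) (hxy : x < y) (hm : 0 < m)
    (heq : f m = (1/(y-x)) * ∫ t in x..y, f t) : x < m ∧ m < y := by
  have hy : 0 < y := hx.trans hxy
  have hsub : Set.uIcc x y ⊆ Set.Ioi 0 := by
    intro t ht; exact lt_of_lt_of_le (lt_min hx hy) ht.1
  have hfi : IntervalIntegrable f volume x y := (hc.mono hsub).intervalIntegrable
  have hmemt : ∀ t ∈ Set.Ioo x y, t ∈ Set.Ioi 0 := fun t ht => hx.trans ht.1
  rcases hmono with hmo | han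
  · have h1 : 0 < ∫ t in x..y, (f t - f x) :=
      intervalIntegral.intervalIntegral_pos_of_pos_on (hfi.sub intervalIntegrable_const)
        (fun t ht => sub_pos.2 (hmo (Set.mem_Ioi.2 hx) (hmemt t ht) ht.1)) hxy
    have h2 : 0 < ∫ t in x..y, (f y - f t) :=
      intervalIntegral.intervalIntegral_pos_of_pos_on (intervalIntegrable_const.sub hfi)
        (fun t ht => sub_pos.2 (hmo (hmemt t ht) (Set.mem_Ioi.2 hy) ht.2)) hxy
    rw [intervalIntegral.integral_sub hfi intervalIntegrable_const,
      intervalIntegral.integral_const] at h1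
    rw [intervalIntegral.integral_sub intervalIntegrable_const hfi,
      intervalIntegral.integral_const] at h2
    simp only [smul_eq_mul] at h1 h2
    have hI : f m * (y - x) = ∫ t in x..y, f t := by
      rw [heq]; field_simp
      exact mul_div_cancel_left₀ _ (sub_ne_zero.2 hxy.ne')
    have hfm1 : f x < f m := by nlinarith
    have hfm2 : f m < f y := by nlinarith
    constructor
    · by_contra h
      push_neg at h
      exact absurd (hmo.monotoneOn (Set.mem_Ioi.2 hm) (Set.mem_Ioi.2 hx) h) (not_le.2 hfm1)
    · by_contra h
      push_neg at h
      exact absurd (hmo.monotoneOn (Set.mem_Ioi.2 hy) (Set.mem_Ioi.2 hm) h) (not_le.2 hfm2)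
  · have h1 : 0 < ∫ t in x..y, (f x - f t) :=
      intervalIntegral.intervalIntegral_pos_of_pos_on (intervalIntegrable_const.sub hfi)
        (fun t ht => sub_pos.2 (han (Set.mem_Ioi.2 hx) (hmemt t ht) ht.1)) hxy
    have h2 : 0 < ∫ t in x..y, (f t - f y) :=
      intervalIntegral.intervalIntegral_pos_of_pos_on (hfi.sub intervalIntegrable_const)
        (fun t ht => sub_pos.2 (han (hmemt t ht) (Set.mem_Ioi.2 hy) ht.2)) hxy
    rw [intervalIntegral.integral_sub intervalIntegrable_const hfi,
      intervalIntegral.integral_const] at h1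
    rw [intervalIntegral.integral_sub hfi intervalIntegrable_const,
      intervalIntegral.integral_const] at h2
    simp only [smul_eq_mul] at h1 h2
    have hI : f m * (y - x) = ∫ t in x..y, f t := by
      rw [heq]; field_simp
      exact mul_div_cancel_left₀ _ (sub_ne_zero.2 hxy.ne')
    have hfm1 : f m < f x := by nlinarith
    have hfm2 : f y < f m := by nlinarith
    constructor
    · by_contra h
      push_neg at h
      exact absurd (han.antitoneOn (Set.mem_Ioi.2 hm) (Set.mem_Ioi.2 hx) h) (not_le.2 hfm1)
    · by_contra h
      push_neg at h
      exact absurd (han.antitoneOn (Set.mem_Ioi.2 hy) (Set.mem_Ioi.2 hm) h) (not_le.2 hfm2)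


lemma ode_solve {h : ℝ → ℝ} {q : ℝ} (hpos : ∀ w > (0:ℝ), 0 < h w)
    (hder : ∀ w > (0:ℝ), HasDerivAt h (q * h w / w) w) (h1 : h 1 = 1) :
    ∀ w > (0:ℝ), h w = w ^ q := by
  set L : ℝ → ℝ := fun s => Real.log (h (Real.exp s)) - q * s with hL
  have hLd : ∀ s : ℝ, HasDerivAt L 0 s := by
    intro s
    have he : (0:ℝ) < Real.exp s := Real.exp_pos s
    have h1' : HasDerivAt (fun s => h (Real.exp s)) (q * h (Real.exp s)) s := by
      have := (hder _ he).comp s (Real.hasDerivAt_exp s)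
      have e : q * h (Real.exp s) / Real.exp s * Real.exp s = q * h (Real.exp s) := by
        field_simp
      rw [e] at this
      exact this
    have h2' : HasDerivAt (fun s => Real.log (h (Real.exp s))) q s := by
      have := (Real.hasDerivAt_log (ne_of_gt (hpos _ he))).comp s h1'
      have e : (h (Real.exp s))⁻¹ * (q * h (Real.exp s)) = q := by
        field_simp [ne_of_gt (hpos _ he)]
      rw [e] at this
      exact this
    have := h2'.sub ((hasDerivAt_id s).const_mul q)
    simp at this
    exact this
  have hconst : ∀ s : ℝ, L s = L 0 :=
    fun s => is_const_of_deriv_eq_zero (fun t => (hLd t).differentiableAt)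
      (fun t => (hLd t).deriv) s 0
  intro w hw
  have := hconst (Real.log w)
  simp only [hL, Real.exp_log hw, Real.exp_zero, h1, Real.log_one, mul_zero, sub_zero,
    zero_sub] at this
  have hlog : Real.log (h w) = q * Real.log w := by linarith
  have := congrArg Real.exp hlog
  rw [Real.exp_log (hpos w hw)] at this
  rw [this, Real.rpow_def_of_pos hw, mul_comm]

/-- The only integral means of the first kind that are homogeneous are the
Stolarsky means. -/
theorem stmt14 (M : ℝ → ℝ → ℝ) (hM : IsMean M)
    (hhom : ∀ l x y : ℝ, 0 < l → 0 < x → 0 < y → M (l * x) (l * y) = l * M x y)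
    (f : ℝ → ℝ)
    (hmono : StrictMonoOn f (Set.Ioi 0) ∨ StrictAntiOn f (Set.Ioi 0))
    (hsm : ContDiffOn ℝ (⊤ : ℕ∞) f (Set.Ioi 0))
    (hd : ∀ x : ℝ, 0 < x → deriv f x ≠ 0)
    (hint : ∀ x y : ℝ, 0 < x → 0 < y → x ≠ y →
      f (M x y) = (1 / (y - x)) * ∫ t in x..y, f t) :
    ∃ p : ℝ, ∀ x y : ℝ, 0 < x → 0 < y → M x y = stolarsky p x y := by
  obtain ⟨hMsm, hMpos, hMbet, hMsym⟩ := hM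
  have hopen : IsOpen (Set.Ioi (0:ℝ)) := isOpen_Ioi
  have hfc : ContinuousOn f (Set.Ioi 0) := hsm.continuousOn
  have hfd : ∀ w : ℝ, 0 < w → DifferentiableAt ℝ f w := fun w hw =>
    (hsm.contDiffAt (hopen.mem_nhds hw)).differentiableAt (by simp)
  have hf'sm : ContDiffOn ℝ (⊤ : ℕ∞) (deriv f) (Set.Ioi 0) := hsm.deriv_of_isOpen hopen (by simp)
  have hf'c : ContinuousOn (deriv f) (Set.Ioi 0) := hf'sm.continuousOn
  have hf'd : ∀ w : ℝ, 0 < w → DifferentiableAt ℝ (deriv f) w := fun w hw =>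
    (hf'sm.contDiffAt (hopen.mem_nhds hw)).differentiableAt (by simp)
  -- the diagonal section m t = M 1 t
  set m : ℝ → ℝ := fun t => M 1 t with hm_def
  have hm_sm : ContDiffOn ℝ (⊤ : ℕ∞) m (Set.Ioi 0) := by
    have h1 : ContDiff ℝ (⊤ : ℕ∞) (fun t : ℝ => ((1:ℝ), t)) := contDiff_const.prodMk contDiff_id
    exact hMsm.comp h1.contDiffOn (fun t ht => ⟨one_pos, ht⟩)
  have hm_d : ∀ t : ℝ, 0 < t → DifferentiableAt ℝ m t := fun t ht =>
    (hm_sm.contDiffAt (hopen.mem_nhds ht)).differentiableAt (by simp)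
  have hm_c : ContinuousOn m (Set.Ioi 0) := hm_sm.continuousOn
  have hbet : ∀ x y : ℝ, 0 < x → x < y → x < M x y ∧ M x y < y := by
    intro x y hx hxy
    exact strict_between hmono hfc hx hxy (hMpos x y hx (lt_trans hx hxy))
      (hint x y hx (lt_trans hx hxy) (ne_of_lt hxy))
  have hm_bounds : ∀ t : ℝ, 1 < t → 1 < m t ∧ m t < t := fun t ht =>
    hbet 1 t one_pos ht
  -- the differentiated integral identity
  have hB : ∀ l : ℝ, 0 < l → ∀ t : ℝ, 1 < t →
      deriv f (l * m t) * (l * deriv m t) * (l * (t-1)) + f (l * m t) * l = f (l * t) * l := by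
    intro l hl t ht
    have ht0 : (0:ℝ) < t := lt_trans one_pos ht
    have hmt : 0 < m t := lt_trans one_pos (hm_bounds t ht).1
    -- the identity Φ = Ψ on Ioi 1
    have hkey : ∀ s : ℝ, 1 < s →
        f (l * m s) * (l * (s - 1)) = ∫ u in l..(l*s), f u := by
      intro s hs
      have hs0 : (0:ℝ) < s := lt_trans one_pos hs
      have h1 : M l (l * s) = l * m s := by
        have := hhom l 1 s hl one_pos hs0
        rw [mul_one] at this
        exact this
      have h2 := hint l (l*s) hl (mul_pos hl hs0)
        (by intro h; nlinarith [hs, hl])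
      rw [h1] at h2
      have h3 : l * s - l = l * (s - 1) := by ring
      have hne : l * (s - 1) ≠ 0 := ne_of_gt (mul_pos hl (by linarith))
      rw [h3] at h2
      field_simp at h2 ⊢
      rw [eq_div_iff (by linarith : s - 1 ≠ 0)] at h2
      linarith [h2]
    -- derivative of RHS
    have hsubI : Set.uIcc l (l*t) ⊆ Set.Ioi 0 := by
      intro u hu
      exact lt_of_lt_of_le (lt_min hl (by positivity)) hu.1
    have hfi : IntervalIntegrable f volume l (l*t) := (hfc.mono hsubI).intervalIntegrable
    have hG : HasDerivAt (fun y => ∫ u in l..y, f u) (f (l*t)) (l*t) :=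
      intervalIntegral.integral_hasDerivAt_right hfi
        (hfc.stronglyMeasurableAtFilter hopen _ (Set.mem_Ioi.2 (by positivity)))
        ((hfc.continuousAt (hopen.mem_nhds (Set.mem_Ioi.2 (by positivity)))))
    have hlin : HasDerivAt (fun s : ℝ => l * s) l t := by
      simpa using (hasDerivAt_id t).const_mul l
    have hΨ : HasDerivAt (fun s : ℝ => ∫ u in l..(l*s), f u) (f (l*t) * l) t := hG.comp t hlin
    -- derivative of LHS
    have hmm : HasDerivAt (fun s : ℝ => l * m s) (l * deriv m t) t :=
      ((hm_d t ht0).hasDerivAt).const_mul l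
    have hfcomp : HasDerivAt (fun s : ℝ => f (l * m s)) (deriv f (l * m t) * (l * deriv m t)) t :=
      ((hfd _ (by positivity)).hasDerivAt).comp t hmm
    have hlin2 : HasDerivAt (fun s : ℝ => l * (s - 1)) l t := by
      simpa using ((hasDerivAt_id t).sub_const 1).const_mul l
    have hΦ : HasDerivAt (fun s : ℝ => f (l * m s) * (l * (s-1)))
        (deriv f (l * m t) * (l * deriv m t) * (l * (t-1)) + f (l * m t) * l) t :=
      hfcomp.mul hlin2
    have heqev : (fun s : ℝ => f (l * m s) * (l * (s-1))) =ᶠ[nhds t]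
        (fun s : ℝ => ∫ u in l..(l*s), f u) :=
      Filter.eventuallyEq_of_mem (isOpen_Ioi.mem_nhds ht) (fun s hs => hkey s hs)
    have hΦ' : HasDerivAt (fun s : ℝ => f (l * m s) * (l * (s-1))) (f (l*t) * l) t :=
      hΨ.congr_of_eventuallyEq heqev
    exact hΦ.unique hΦ'
  have hB' : ∀ l : ℝ, 0 < l → ∀ t : ℝ, 1 < t →
      deriv f (l * m t) * (l * deriv m t) * (t-1) + f (l * m t) = f (l * t) := by
    intro l hl t ht
    have := hB l hl t ht
    have hl' : l ≠ 0 := ne_of_gt hl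
    field_simp at this ⊢
    nlinarith [this]
  set A : ℝ := deriv f 1 with hA_def
  have hA : A ≠ 0 := hd 1 one_pos
  set v₀ : ℝ := 2 / m 2 with hv₀_def
  have hm2 : 1 < m 2 ∧ m 2 < 2 := hm_bounds 2 one_lt_two
  have hm2pos : 0 < m 2 := lt_trans one_pos hm2.1
  have hv₀1 : 1 < v₀ := (one_lt_div hm2pos).2 hm2.2
  have hv₀2 : v₀ < 2 := by
    rw [hv₀_def, div_lt_iff₀ hm2pos]
    nlinarith [hm2.1]
  -- the functional equation
  have hstar : ∀ v : ℝ, v ∈ Set.Ioo 1 v₀ → ∀ u : ℝ, 0 < u →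
      u * deriv f u * (f v - f 1) = A * (f (v*u) - f u) := by
    intro v hv u hu
    -- find t with t / m t = v
    obtain ⟨t, ht_mem, ht_eq⟩ : ∃ t ∈ Set.Icc v 2, t / m t = v := by
      have hv1 : 1 < v := hv.1
      have hv2 : v < 2 := lt_trans hv.2 hv₀2
      have hsub2 : Set.Icc v 2 ⊆ Set.Ioi 0 := fun s hs =>
        lt_of_lt_of_le (lt_trans one_pos hv1) hs.1
      have hc : ContinuousOn (fun t => t / m t) (Set.Icc v 2) :=
        continuousOn_id.div (hm_c.mono hsub2) (fun s hs =>
          ne_of_gt (lt_trans one_pos (hm_bounds s (lt_of_lt_of_le hv1 hs.1)).1))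
      have hvv : v / m v < v := by
        have := (hm_bounds v hv1).1
        rw [div_lt_iff₀ (lt_trans one_pos this)]
        nlinarith
      have hIVT := intermediate_value_Icc (le_of_lt hv2) hc
      have hvmem : v ∈ Set.Icc ((fun t => t / m t) v) ((fun t => t / m t) 2) := by
        constructor
        · exact le_of_lt hvv
        · exact le_of_lt hv.2
      obtain ⟨t, ht1, ht2⟩ := hIVT hvmem
      exact ⟨t, ht1, ht2⟩
    have ht1 : 1 < t := lt_of_lt_of_le hv.1 ht_mem.1
    have ht0 : (0:ℝ) < t := lt_trans one_pos ht1
    have hmt : 0 < m t := lt_trans one_pos (hm_bounds t ht1).1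
    have hmt' : m t ≠ 0 := ne_of_gt hmt
    -- instance u
    have e2 := hB' (u / m t) (by positivity) t ht1
    have h1 : u / m t * m t = u := div_mul_cancel₀ u hmt'
    have h2 : u / m t * t = v * u := by
      rw [← ht_eq]; ring
    rw [h1, h2] at e2
    -- instance 1
    have e1 := hB' (1 / m t) (by positivity) t ht1
    have h3 : 1 / m t * m t = 1 := one_div_mul_cancel hmt'
    have h4 : 1 / m t * t = v := by
      rw [← ht_eq]; ring
    rw [h3, h4] at e1
    -- combine
    have hAe1 : A * (1 / m t * deriv m t) * (t - 1) = f v - f 1 := by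
      rw [hA_def]; linarith [e1]
    have : deriv f u * (u / m t * deriv m t) * (t-1) = f (v * u) - f u := by linarith [e2]
    have hexp : u / m t * deriv m t = u * (1 / m t * deriv m t) := by ring
    rw [hexp] at this
    set D := 1 / m t * deriv m t
    calc u * deriv f u * (f v - f 1) = u * deriv f u * (A * D * (t-1)) := by rw [hAe1]
      _ = A * (deriv f u * (u * D) * (t-1)) := by ring
      _ = A * (f (v*u) - f u) := by rw [this]
  -- differentiate in v: multiplicativity of f'
  have hG : ∀ v : ℝ, v ∈ Set.Ioo 1 v₀ → ∀ u : ℝ, 0 < u →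
      deriv f u * deriv f v = A * deriv f (v * u) := by
    intro v hv u hu
    have hv0 : (0:ℝ) < v := lt_trans one_pos hv.1
    have hF1 : HasDerivAt (fun w : ℝ => u * deriv f u * (f w - f 1))
        (u * deriv f u * deriv f v) v := by
      have := (((hfd v hv0).hasDerivAt).sub_const (f 1)).const_mul (u * deriv f u)
      simpa using this
    have hmul : HasDerivAt (fun w : ℝ => w * u) u v := by
      simpa using (hasDerivAt_id v).mul_const u
    have hF2 : HasDerivAt (fun w : ℝ => A * (f (w * u) - f u))
        (A * (deriv f (v * u) * u)) v := by
      have hcomp : HasDerivAt (fun w : ℝ => f (w * u)) (deriv f (v*u) * u) v :=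
        ((hfd _ (mul_pos hv0 hu)).hasDerivAt).comp v hmul
      have := (hcomp.sub_const (f u)).const_mul A
      simpa using this
    have heqev : (fun w : ℝ => u * deriv f u * (f w - f 1)) =ᶠ[nhds v]
        (fun w : ℝ => A * (f (w * u) - f u)) :=
      Filter.eventuallyEq_of_mem (isOpen_Ioo.mem_nhds hv)
        (fun w hw => by
          have := hstar w hw u hu
          simp only [mul_comm w u] at *
          linarith [this])
    have hF1' : HasDerivAt (fun w : ℝ => u * deriv f u * (f w - f 1))
        (A * (deriv f (v * u) * u)) v := hF2.congr_of_eventuallyEq heqev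
    have huniq := hF1.unique hF1'
    have hu' : u ≠ 0 := ne_of_gt hu
    field_simp at huniq ⊢
    nlinarith [huniq]
  -- differentiate again
  have hH : ∀ v : ℝ, v ∈ Set.Ioo 1 v₀ → ∀ u : ℝ, 0 < u →
      deriv f u * deriv (deriv f) v = A * (deriv (deriv f) (v * u) * u) := by
    intro v hv u hu
    have hv0 : (0:ℝ) < v := lt_trans one_pos hv.1
    have hF1 : HasDerivAt (fun w : ℝ => deriv f u * deriv f w)
        (deriv f u * deriv (deriv f) v) v :=
      ((hf'd v hv0).hasDerivAt).const_mul (deriv f u)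
    have hmul : HasDerivAt (fun w : ℝ => w * u) u v := by
      simpa using (hasDerivAt_id v).mul_const u
    have hF2 : HasDerivAt (fun w : ℝ => A * deriv f (w * u))
        (A * (deriv (deriv f) (v * u) * u)) v := by
      have hcomp : HasDerivAt (fun w : ℝ => deriv f (w * u))
          (deriv (deriv f) (v*u) * u) v :=
        by have h := ((hf'd _ (mul_pos hv0 hu)).hasDerivAt).comp v hmul; exact h
      exact hcomp.const_mul A
    have heqev : (fun w : ℝ => deriv f u * deriv f w) =ᶠ[nhds v]
        (fun w : ℝ => A * deriv f (w * u)) :=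
      Filter.eventuallyEq_of_mem (isOpen_Ioo.mem_nhds hv) (fun w hw => hG w hw u hu)
    have hF1' : HasDerivAt (fun w : ℝ => deriv f u * deriv f w)
        (A * (deriv (deriv f) (v * u) * u)) v := hF2.congr_of_eventuallyEq heqev
    exact hF1.unique hF1'
  -- the ODE for f'
  set v₁ : ℝ := (1 + v₀)/2 with hv₁_def
  have hv₁mem : v₁ ∈ Set.Ioo 1 v₀ := by
    constructor <;> [skip; skip] <;> rw [hv₁_def] <;> linarith
  have hv₁0 : (0:ℝ) < v₁ := lt_trans one_pos hv₁mem.1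
  set q : ℝ := v₁ * deriv (deriv f) v₁ / deriv f v₁ with hq_def
  have hODE : ∀ w : ℝ, 0 < w → w * deriv (deriv f) w = q * deriv f w := by
    intro w hw
    have hu : (0:ℝ) < w / v₁ := by positivity
    have e1 := hG v₁ hv₁mem (w / v₁) hu
    have e2 := hH v₁ hv₁mem (w / v₁) hu
    have hww : v₁ * (w / v₁) = w := by field_simp
    rw [hww] at e1 e2
    have hfv₁ : deriv f v₁ ≠ 0 := hd v₁ hv₁0
    have hv₁' : v₁ ≠ 0 := ne_of_gt hv₁0
    rw [hq_def]
    clear_value A v₀ v₁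
    have e3 : A * (deriv f w * deriv (deriv f) v₁) =
        A * (deriv (deriv f) w * (w / v₁) * deriv f v₁) := by
      linear_combination (deriv f v₁) * e2 - (deriv (deriv f) v₁) * e1
    have e4 := mul_left_cancel₀ hA e3
    field_simp at e4
    field_simp
    linear_combination -e4
  clear_value A v₀ v₁ q
  -- solve the ODE: deriv f w = A * w ^ q
  have hq' : ∀ w : ℝ, 0 < w → deriv f w = A * w ^ q := by
    have h11 : (fun w => deriv f w / A) 1 = 1 := by
      simp only
      rw [← hA_def]
      exact div_self hA
    have hpos : ∀ w, 0 < w → 0 < (fun w => deriv f w / A) w := by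
      intro w hw
      have h1 : (0:ℝ) < (fun w => deriv f w / A) 1 := by rw [h11]; norm_num
      exact sign_const (fun w => deriv f w / A) (hf'c.div_const A)
        (fun w hw => div_ne_zero (hd w hw) hA) one_pos hw h1
    have hder : ∀ w, 0 < w →
        HasDerivAt (fun w => deriv f w / A) (q * ((fun w => deriv f w / A) w) / w) w := by
      intro w hw
      have h1 : HasDerivAt (fun w => deriv f w / A) (deriv (deriv f) w / A) w :=
        ((hf'd w hw).hasDerivAt).div_const A
      convert h1 using 1
      have h2 := hODE w hw
      have hw' : w ≠ 0 := ne_of_gt hw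
      have h3 : q * (deriv f w / A) / w = (q * deriv f w) / (w * A) := by ring
      rw [h3, ← h2, mul_div_mul_left _ _ hw']
    have hsol := ode_solve (fun w hw => hpos w hw) (fun w hw => hder w hw) h11
    intro w hw
    have h2 := hsol w hw
    field_simp at h2
    linarith [h2]
  -- fundamental theorem of calculus
  have hf_eq : ∀ u : ℝ, 0 < u → f u = f 1 + ∫ t in (1:ℝ)..u, A * t ^ q := by
    intro u hu
    have hsub : Set.uIcc (1:ℝ) u ⊆ Set.Ioi 0 := fun t ht =>
      lt_of_lt_of_le (lt_min one_pos hu) ht.1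
    have h1 : ∫ t in (1:ℝ)..u, deriv f t = f u - f 1 :=
      intervalIntegral.integral_deriv_eq_sub (fun t ht => hfd t (hsub ht))
        ((hf'c.mono hsub).intervalIntegrable)
    have h2 : ∫ t in (1:ℝ)..u, deriv f t = ∫ t in (1:ℝ)..u, A * t ^ q :=
      intervalIntegral.integral_congr (fun t ht => hq' t (hsub ht))
    linarith [h1, h2]
  -- M is determined by the value of f
  have hMdet : ∀ z w : ℝ, 0 < z → 0 < w → f z = f w → z = w := by
    intro z w hz hw hfz
    rcases hmono with hmo | han
    · exact hmo.injOn (Set.mem_Ioi.2 hz) (Set.mem_Ioi.2 hw) hfz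
    · exact han.injOn (Set.mem_Ioi.2 hz) (Set.mem_Ioi.2 hw) hfz
  have hMdiag : ∀ x : ℝ, 0 < x → M x x = x := by
    intro x hx
    have h := hMbet x x hx hx
    simp only [min_self, max_self] at h
    exact le_antisymm h.2 h.1
  have hsubxy : ∀ x y : ℝ, 0 < x → 0 < y → Set.uIcc x y ⊆ Set.Ioi 0 := by
    intro x y hx hy t ht
    exact lt_of_lt_of_le (lt_min hx hy) ht.1
  by_cases hq1 : q = -1
  · -- identric mean, p = 1
    have hflog : ∀ u : ℝ, 0 < u → f u = f 1 + A * Real.log u := by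
      intro u hu
      rw [hf_eq u hu]
      congr 1
      have h0 : (0:ℝ) ∉ Set.uIcc 1 u := fun h => absurd (hsubxy 1 u one_pos hu h) (by simp)
      rw [intervalIntegral.integral_const_mul]
      have h1 : ∫ t in (1:ℝ)..u, (t:ℝ) ^ q = ∫ t in (1:ℝ)..u, t⁻¹ :=
        intervalIntegral.integral_congr (fun t ht => by
          rw [hq1, Real.rpow_neg_one])
      rw [h1, integral_inv h0, div_one]
    refine ⟨1, ?_⟩
    intro x y hx hy
    by_cases hxy : x = y
    · subst hxy
      rw [stolarsky, if_pos rfl, hMdiag x hx]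
    · rw [stolarsky, if_neg hxy, if_neg one_ne_zero, if_pos rfl]
      have hyx : y - x ≠ 0 := fun h => hxy (by linarith [sub_eq_zero.1 h])
      have hxy' : x - y ≠ 0 := sub_ne_zero.2 hxy
      have hM0 : 0 < M x y := hMpos x y hx hy
      have hI := hint x y hx hy hxy
      -- compute the integral
      have hIc : ∫ t in x..y, f t = f 1 * (y - x) + A * (y * Real.log y - x * Real.log x - y + x) := by
        have h1 : ∫ t in x..y, f t = ∫ t in x..y, (f 1 + A * Real.log t) :=
          intervalIntegral.integral_congr (fun t ht => hflog t (hsubxy x y hx hy ht))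
        have hlogint : IntervalIntegrable (fun t => A * Real.log t) volume x y :=
          ((Real.continuousOn_log.mono (fun t ht => ne_of_gt (hsubxy x y hx hy ht))).const_smul A).intervalIntegrable
        rw [h1, intervalIntegral.integral_add intervalIntegrable_const hlogint,
          intervalIntegral.integral_const, intervalIntegral.integral_const_mul,
          integral_log]
        simp only [smul_eq_mul]
        ring
      have hMlog : Real.log (M x y) * (y - x) = y * Real.log y - x * Real.log x - y + x := by
        have h2 : f (M x y) = f 1 + A * Real.log (M x y) := hflog _ hM0
        rw [h2, hIc] at hI
        field_simp at hI
        -- hI : (f 1 + A * log M) * (y - x) = f1 (y-x) + A * (...)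
        have h3 : A * (Real.log (M x y) * (y - x)) =
            A * (y * Real.log y - x * Real.log x - y + x) := by linarith [hI]
        exact mul_left_cancel₀ hA h3
      -- logarithm of the identric mean
      set S : ℝ := Real.exp (-1) * (x ^ x / y ^ y) ^ (1/(x - y)) with hS_def
      have hxx : (0:ℝ) < x ^ x := Real.rpow_pos_of_pos hx x
      have hyy : (0:ℝ) < y ^ y := Real.rpow_pos_of_pos hy y
      have hZ : (0:ℝ) < (x ^ x / y ^ y) ^ (1/(x - y)) :=
        Real.rpow_pos_of_pos (div_pos hxx hyy) _
      have hS0 : 0 < S := mul_pos (Real.exp_pos _) hZ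
      have hSlog : Real.log S = -1 + (1/(x-y)) * (x * Real.log x - y * Real.log y) := by
        rw [hS_def, Real.log_mul (ne_of_gt (Real.exp_pos _)) (ne_of_gt hZ),
          Real.log_exp, Real.log_rpow (div_pos hxx hyy),
          Real.log_div (ne_of_gt hxx) (ne_of_gt hyy),
          Real.log_rpow hx, Real.log_rpow hy]
      have hlogeq : Real.log (M x y) = Real.log S := by
        rw [hSlog]
        have h4 : Real.log (M x y) = (y * Real.log y - x * Real.log x - y + x)/(y - x) := by
          field_simp
          linarith [hMlog]
        rw [h4]
        field_simp
        ring
      calc M x y = Real.exp (Real.log (M x y)) := (Real.exp_log hM0).symm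
        _ = Real.exp (Real.log S) := by rw [hlogeq]
        _ = S := Real.exp_log hS0
  · by_cases hq2 : q = -2
    · -- logarithmic mean, p = 0
      have hfinv : ∀ u : ℝ, 0 < u → f u = f 1 + A * (1 - u⁻¹) := by
        intro u hu
        rw [hf_eq u hu]
        congr 1
        have h0 : (0:ℝ) ∉ Set.uIcc 1 u := fun h => absurd (hsubxy 1 u one_pos hu h) (by simp)
        rw [intervalIntegral.integral_const_mul]
        congr 1
        rw [integral_rpow (Or.inr ⟨by rw [hq2]; norm_num, h0⟩)]
        rw [hq2]
        norm_num
        rw [Real.rpow_neg_one]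
        ring
      refine ⟨0, ?_⟩
      intro x y hx hy
      by_cases hxy : x = y
      · subst hxy
        rw [stolarsky, if_pos rfl, hMdiag x hx]
      · rw [stolarsky, if_neg hxy, if_pos rfl]
        have hyx : y - x ≠ 0 := fun h => hxy (by linarith [sub_eq_zero.1 h])
        have hxy' : x - y ≠ 0 := sub_ne_zero.2 hxy
        have hM0 : 0 < M x y := hMpos x y hx hy
        have hlogne : Real.log x - Real.log y ≠ 0 := by
          intro h
          exact hxy (Real.log_injOn_pos (Set.mem_Ioi.2 hx) (Set.mem_Ioi.2 hy)
            (by linarith [sub_eq_zero.1 h]))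
        have hI := hint x y hx hy hxy
        have hIc : ∫ t in x..y, f t =
            f 1 * (y - x) + A * ((y - x) - (Real.log y - Real.log x)) := by
          have h1 : ∫ t in x..y, f t = ∫ t in x..y, (f 1 + A * (1 - t⁻¹)) :=
            intervalIntegral.integral_congr (fun t ht => hfinv t (hsubxy x y hx hy ht))
          have h0' : (0:ℝ) ∉ Set.uIcc x y := fun h => absurd (hsubxy x y hx hy h) (by simp)
          have hinvint : IntervalIntegrable (fun t : ℝ => A * (1 - t⁻¹)) volume x y := by
            apply ContinuousOn.intervalIntegrable
            apply ContinuousOn.mul continuousOn_const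
            exact continuousOn_const.sub (continuousOn_inv₀.mono
              (fun t ht => ne_of_gt (hsubxy x y hx hy ht)))
          rw [h1, intervalIntegral.integral_add intervalIntegrable_const hinvint,
            intervalIntegral.integral_const, intervalIntegral.integral_const_mul,
            intervalIntegral.integral_sub intervalIntegrable_const
              ((continuousOn_inv₀.mono (fun t ht =>
                ne_of_gt (hsubxy x y hx hy ht))).intervalIntegrable),
            intervalIntegral.integral_const, integral_inv h0', Real.log_div (ne_of_gt hy) (ne_of_gt hx),
            smul_eq_mul, smul_eq_mul]
          ring
        have hMinv : y - x = (Real.log y - Real.log x) * M x y := by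
          have h2 : f (M x y) = f 1 + A * (1 - (M x y)⁻¹) := hfinv _ hM0
          rw [h2, hIc] at hI
          field_simp at hI
          have h3 : A * (y - x) = A * ((Real.log y - Real.log x) * M x y) := by
            linear_combination -hI
          exact mul_left_cancel₀ hA h3
        rw [eq_div_iff hlogne]
        linear_combination hMinv
    · -- power case, p = q + 2
      have hq1' : q + 1 ≠ 0 := fun h => hq1 (by linarith)
      have hq2' : q + 1 ≠ -1 := fun h => hq2 (by linarith)
      have hp0 : q + 2 ≠ 0 := fun h => hq2 (by linarith)
      have hp1 : q + 2 ≠ 1 := fun h => hq1 (by linarith)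
      have hfpow : ∀ u : ℝ, 0 < u → f u = f 1 + A/(q+1) * (u ^ (q+1) - 1) := by
        intro u hu
        rw [hf_eq u hu]
        have h0 : (0:ℝ) ∉ Set.uIcc 1 u := fun h => absurd (hsubxy 1 u one_pos hu h) (by simp)
        rw [intervalIntegral.integral_const_mul, integral_rpow (Or.inr ⟨hq1, h0⟩),
          Real.one_rpow]
        field_simp
      refine ⟨q + 2, ?_⟩
      intro x y hx hy
      by_cases hxy : x = y
      · subst hxy
        rw [stolarsky, if_pos rfl, hMdiag x hx]
      · rw [stolarsky, if_neg hxy, if_neg hp0, if_neg hp1]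
        have hpm : q + 2 - 1 = q + 1 := by ring
        rw [hpm]
        have hyx : y - x ≠ 0 := fun h => hxy (by linarith [sub_eq_zero.1 h])
        have hxy' : x - y ≠ 0 := sub_ne_zero.2 hxy
        have hM0 : 0 < M x y := hMpos x y hx hy
        have hI := hint x y hx hy hxy
        have hrpowc : ContinuousOn (fun t : ℝ => t ^ (q+1)) (Set.uIcc x y) := by
          apply ContinuousOn.rpow_const continuousOn_id
          intro t ht
          exact Or.inl (ne_of_gt (hsubxy x y hx hy ht))
        have hIc : ∫ t in x..y, f t =
            f 1 * (y - x) + A/(q+1) * ((y ^ (q+2) - x ^ (q+2))/(q+2) - (y - x)) := by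
          have h1 : ∫ t in x..y, f t = ∫ t in x..y, (f 1 + A/(q+1) * (t ^ (q+1) - 1)) :=
            intervalIntegral.integral_congr (fun t ht => hfpow t (hsubxy x y hx hy ht))
          have h0' : (0:ℝ) ∉ Set.uIcc x y := fun h => absurd (hsubxy x y hx hy h) (by simp)
          have hii : IntervalIntegrable (fun t : ℝ => A/(q+1) * (t ^ (q+1) - 1)) volume x y :=
            (((hrpowc.sub continuousOn_const).const_smul (A/(q+1)))).intervalIntegrable
          rw [h1, intervalIntegral.integral_add intervalIntegrable_const hii,
            intervalIntegral.integral_const, intervalIntegral.integral_const_mul,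
            intervalIntegral.integral_sub hrpowc.intervalIntegrable intervalIntegrable_const,
            intervalIntegral.integral_const, integral_rpow (Or.inr ⟨hq2', h0'⟩)]
          have h2 : q + 1 + 1 = q + 2 := by ring
          rw [h2]
          simp only [smul_eq_mul]
          ring
        have hMpow : (M x y) ^ (q+1) * ((q+2) * (y - x)) = (y ^ (q+2) - x ^ (q+2)) := by
          have h2 : f (M x y) = f 1 + A/(q+1) * ((M x y) ^ (q+1) - 1) := hfpow _ hM0
          rw [h2, hIc] at hI
          field_simp at hI
          have h3 : (A * (q+1)) * ((M x y) ^ (q+1) * ((q+2) * (y - x))) =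
              (A * (q+1)) * (y ^ (q+2) - x ^ (q+2)) := by
            linear_combination (q+1) * hI
          exact mul_left_cancel₀ (mul_ne_zero hA hq1') h3
        have hbase : (x ^ (q+2) - y ^ (q+2)) / ((q+2) * (x - y)) = (M x y) ^ (q+1) := by
          rw [div_eq_iff (mul_ne_zero hp0 hxy')]
          linear_combination hMpow
        rw [hbase, one_div]
        exact (Real.rpow_rpow_inv (le_of_lt hM0) hq1').symm
end

section
/- The harmonic mean is not an integral mean of the first kind: there is no strictly monotonic C^∞ function f on (0,∞) with nowhere-vanishing derivative such that f(2xy/(x+y)) = (1/(y−x)) ∫ₓʸ f(t) dt for all x,y > 0 with x ≠ y. -/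
open Real Set

/-- The harmonic mean is not an integral mean of the first kind. -/
theorem stmt15 :
    ¬ ∃ f : ℝ → ℝ,
      (StrictMonoOn f (Set.Ioi 0) ∨ StrictAntiOn f (Set.Ioi 0)) ∧
      ContDiffOn ℝ (⊤ : ℕ∞) f (Set.Ioi 0) ∧
      (∀ x : ℝ, 0 < x → deriv f x ≠ 0) ∧
      (∀ x y : ℝ, 0 < x → 0 < y → x ≠ y →
        f (2 * x * y / (x + y)) = (1 / (y - x)) * ∫ t in x..y, f t) := by
  rintro ⟨f, hmono, hsmooth, -, hf⟩
  have hc : ContinuousOn f (Set.Ioi 0) := hsmooth.continuousOn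
  have hi : ∀ a b : ℝ, 0 < a → 0 < b → IntervalIntegrable f MeasureTheory.volume a b := by
    intro a b ha hb
    apply ContinuousOn.intervalIntegrable
    apply hc.mono
    intro t ht
    rcases ht with ⟨h1, _⟩
    have : (0:ℝ) < min a b := lt_min ha hb
    exact lt_of_lt_of_le this (by simpa [Set.uIcc] using h1)
  have int_eq : ∀ a b : ℝ, 0 < a → 0 < b → a ≠ b →
      (∫ t in a..b, f t) = (b - a) * f (2 * a * b / (a + b)) := by
    intro a b ha hb hab
    have h := hf a b ha hb hab
    have hba : b - a ≠ 0 := sub_ne_zero.mpr (Ne.symm hab)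
    rw [h]
    field_simp
  have key : ∀ x y z : ℝ, 0 < x → 0 < y → 0 < z → x ≠ y → x ≠ z → z ≠ y →
      (y - x) * f (2 * x * y / (x + y)) =
        (z - x) * f (2 * x * z / (x + z)) + (y - z) * f (2 * z * y / (z + y)) := by
    intro x y z hx hy hz hxy hxz hzy
    have hadd := intervalIntegral.integral_add_adjacent_intervals (hi x z hx hz) (hi z y hz hy)
    rw [int_eq x z hx hz hxz, int_eq z y hz hy hzy, int_eq x y hx hy hxy] at hadd
    linarith [hadd]
  have E1 := key 1 (1/2) (1/4) one_pos (by norm_num) (by norm_num) (by norm_num) (by norm_num) (by norm_num)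
  have E2 := key 1 (1/2) (1/5) one_pos (by norm_num) (by norm_num) (by norm_num) (by norm_num) (by norm_num)
  have E3 := key (1/2) (1/3) (1/4) (by norm_num) (by norm_num) (by norm_num) (by norm_num) (by norm_num) (by norm_num)
  norm_num at E1 E2 E3
  have hvw : f (2/5) = f (1/3) := by linarith
  have h1 : (1:ℝ)/3 ∈ Set.Ioi (0:ℝ) := by norm_num
  have h2 : (2:ℝ)/5 ∈ Set.Ioi (0:ℝ) := by norm_num
  have hlt : (1:ℝ)/3 < 2/5 := by norm_num
  rcases hmono with hm | hm
  · exact absurd (hm h1 h2 hlt) (by rw [hvw]; exact lt_irrefl _)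
  · exact absurd (hm h1 h2 hlt) (by rw [hvw]; exact lt_irrefl _)
end
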